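/- arXiv:2208.03602 — 14 statements merged into one kernel-verified Lean document; each statement's English description precedes it below -/
import Mathlib

section
/- Let w : [0,1] → [0,1] be a probability weighting function (strictly increasing, w(0)=0, w(1)=1, differentiable with w'(0) > 1 and w'(1) > 1, and strictly concave on [0,p̄] and strictly convex on [p̄,1] for some p̄ ∈ (0,1)). Then the supremum μ* := sup_{p ∈ (0,1]} p / w(p) is attained, μ* > 1, and there exists a unique p* ∈ (0,1) such that μ* · w(p*) = p*. -/
open Set Filter Topology

/-- For a probability weighting function `w` (strictly increasing,
continuous, `w 0 = 0`, `w 1 = 1`, differentiable with one-sided derivatives `> 1`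
at both endpoints, strictly concave on `[0, p̄]` and strictly convex on `[p̄, 1]`),
the supremum `μ* = sup_{p ∈ (0,1]} p / w p` is attained, `μ* > 1`, and there is a
unique `p* ∈ (0,1)` with `μ* * w p* = p*`. -/
theorem stmt0
    (w w' : ℝ → ℝ)
    (hmap : ∀ p ∈ Icc (0:ℝ) 1, w p ∈ Icc (0:ℝ) 1)
    (hmono : StrictMonoOn w (Icc (0:ℝ) 1))
    (hcont : ContinuousOn w (Icc (0:ℝ) 1))
    (h0 : w 0 = 0) (h1 : w 1 = 1)
    (hderiv : ∀ p ∈ Icc (0:ℝ) 1, HasDerivWithinAt w (w' p) (Icc (0:ℝ) 1) p)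
    (hd0 : 1 < w' 0) (hd1 : 1 < w' 1)
    (pbar : ℝ) (hpbar : pbar ∈ Ioo (0:ℝ) 1)
    (hconc : StrictConcaveOn ℝ (Icc (0:ℝ) pbar) w)
    (hconv : StrictConvexOn ℝ (Icc pbar 1) w) :
    ∃ pstar ∈ Ioo (0:ℝ) 1,
      pstar / w pstar = sSup ((fun p => p / w p) '' Ioc (0:ℝ) 1) ∧
      1 < sSup ((fun p => p / w p) '' Ioc (0:ℝ) 1) ∧
      sSup ((fun p => p / w p) '' Ioc (0:ℝ) 1) * w pstar = pstar ∧
      ∀ q ∈ Ioo (0:ℝ) 1,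
        sSup ((fun p => p / w p) '' Ioc (0:ℝ) 1) * w q = q → q = pstar := by
  have h0mem : (0:ℝ) ∈ Icc (0:ℝ) 1 := ⟨le_refl 0, zero_le_one⟩
  have h1mem : (1:ℝ) ∈ Icc (0:ℝ) 1 := ⟨zero_le_one, le_refl 1⟩
  obtain ⟨hpbar0, hpbar1⟩ := hpbar
  have hpos : ∀ p ∈ Ioc (0:ℝ) 1, 0 < w p := by
    intro p hp
    have := hmono h0mem ⟨hp.1.le, hp.2⟩ hp.1
    rwa [h0] at this
  have hwpbar : 0 < w pbar := hpos pbar ⟨hpbar0, hpbar1.le⟩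
  -- concavity lower bound on (0, pbar]
  have hcav : ∀ p ∈ Ioc (0:ℝ) pbar, p / pbar * w pbar ≤ w p := by
    intro p hp
    have hb0 : 0 ≤ p / pbar := div_nonneg hp.1.le hpbar0.le
    have hb1 : p / pbar ≤ 1 := (div_le_one hpbar0).mpr hp.2
    have key := hconc.concaveOn.2 (x := 0) (y := pbar)
      ⟨le_refl 0, hpbar0.le⟩ ⟨hpbar0.le, le_refl pbar⟩
      (sub_nonneg.mpr hb1) hb0 (by ring)
    have hpe : (1 - p / pbar) • (0:ℝ) + (p / pbar) • pbar = p := by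
      rw [smul_zero, zero_add, smul_eq_mul, div_mul_cancel₀ _ hpbar0.ne']
    rw [hpe, h0, smul_eq_mul, smul_eq_mul, mul_zero, zero_add] at key
    exact key
  -- step 1 : f p ≤ f pbar on (0, pbar]
  have step1 : ∀ p ∈ Ioc (0:ℝ) pbar, p / w p ≤ pbar / w pbar := by
    intro p hp
    have hwp : 0 < w p := hpos p ⟨hp.1, hp.2.trans hpbar1.le⟩
    rw [div_le_div_iff₀ hwp hwpbar]
    have := hcav p hp
    have h2 : p / pbar * w pbar * pbar ≤ w p * pbar :=
      mul_le_mul_of_nonneg_right this hpbar0.le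
    rw [div_mul_eq_mul_div, div_mul_eq_mul_div, mul_div_assoc,
      div_self hpbar0.ne', mul_one] at h2
    linarith [h2]
  -- maximum on [pbar, 1]
  have hsub : Icc pbar (1:ℝ) ⊆ Icc (0:ℝ) 1 := Icc_subset_Icc hpbar0.le le_rfl
  have hfc : ContinuousOn (fun p => p / w p) (Icc pbar 1) :=
    ContinuousOn.div continuousOn_id (hcont.mono hsub)
      (fun p hp => (hpos p ⟨lt_of_lt_of_le hpbar0 hp.1, hp.2⟩).ne')
  obtain ⟨ps, hps, hmax⟩ :=
    isCompact_Icc.exists_isMaxOn (⟨pbar, le_rfl, hpbar1.le⟩ :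
      (Icc pbar (1:ℝ)).Nonempty) hfc
  have hmax' : ∀ x ∈ Icc pbar (1:ℝ), x / w x ≤ ps / w ps := isMaxOn_iff.mp hmax
  have hps0 : 0 < ps := lt_of_lt_of_le hpbar0 hps.1
  have hpsmem : ps ∈ Ioc (0:ℝ) 1 := ⟨hps0, hps.2⟩
  have hwps : 0 < w ps := hpos ps hpsmem
  -- global upper bound
  have hub : ∀ p ∈ Ioc (0:ℝ) 1, p / w p ≤ ps / w ps := by
    intro p hp
    rcases le_or_gt p pbar with h | h
    · exact le_trans (step1 p ⟨hp.1, h⟩) (hmax' pbar ⟨le_rfl, hpbar1.le⟩)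
    · exact hmax' p ⟨h.le, hp.2⟩
  have hgreat : IsGreatest ((fun p => p / w p) '' Ioc (0:ℝ) 1) (ps / w ps) :=
    ⟨⟨ps, hpsmem, rfl⟩, by rintro y ⟨p, hp, rfl⟩; exact hub p hp⟩
  have hSup : sSup ((fun p => p / w p) '' Ioc (0:ℝ) 1) = ps / w ps :=
    hgreat.csSup_eq
  set M := ps / w ps with hM
  -- there is a point with w p < p near 1
  have hlt : ∃ p ∈ Ioo (0:ℝ) 1, w p < p := by
    have hder := hderiv 1 h1mem
    have hsl : Tendsto (slope w 1) (𝓝[Icc (0:ℝ) 1 \ {1}] 1) (𝓝 (w' 1)) :=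
      hasDerivWithinAt_iff_tendsto_slope.mp hder
    have hne : (𝓝[Ioo (0:ℝ) 1] (1:ℝ)).NeBot := by
      apply mem_closure_iff_nhdsWithin_neBot.mp
      rw [closure_Ioo (by norm_num : (0:ℝ) ≠ 1)]
      exact ⟨zero_le_one, le_rfl⟩
    have hle : 𝓝[Ioo (0:ℝ) 1] (1:ℝ) ≤ 𝓝[Icc (0:ℝ) 1 \ {1}] 1 :=
      nhdsWithin_mono 1 (fun x hx => ⟨⟨hx.1.le, hx.2.le⟩, fun h => by
        rw [mem_singleton_iff] at h; exact hx.2.ne h⟩)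
    have hev : ∀ᶠ x in 𝓝[Ioo (0:ℝ) 1] (1:ℝ), 1 < slope w 1 x :=
      (hsl.mono_left hle).eventually (eventually_gt_nhds hd1)
    have hev2 : ∀ᶠ x in 𝓝[Ioo (0:ℝ) 1] (1:ℝ), x ∈ Ioo (0:ℝ) 1 :=
      self_mem_nhdsWithin
    obtain ⟨x, hx1, hx2⟩ := (hev.and hev2).exists
    refine ⟨x, hx2, ?_⟩
    have hxlt : x - 1 < 0 := by linarith [hx2.2]
    rw [slope_def_field] at hx1
    have hkey : w x - w 1 < 1 * (x - 1) := (lt_div_iff_of_neg hxlt).mp hx1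
    rw [h1] at hkey
    linarith
  -- M > 1
  obtain ⟨p0, hp0, hp0lt⟩ := hlt
  have hM1 : 1 < M := by
    have hwp0 : 0 < w p0 := hpos p0 ⟨hp0.1, hp0.2.le⟩
    have : 1 < p0 / w p0 := (one_lt_div hwp0).mpr hp0lt
    exact lt_of_lt_of_le this (hub p0 ⟨hp0.1, hp0.2.le⟩)
  have hM0 : 0 < M := lt_trans one_pos hM1
  -- ps < 1
  have hps1 : ps < 1 := by
    rcases lt_or_eq_of_le hps.2 with h | h
    · exact h
    · exfalso
      rw [hM, h, h1, div_one] at hM1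
      exact lt_irrefl 1 hM1
  -- lower bound : p ≤ M * w p on (0,1]
  have hlow : ∀ p ∈ Ioc (0:ℝ) 1, p ≤ M * w p := by
    intro p hp
    have hwp : 0 < w p := hpos p hp
    have := hub p hp
    calc p = p / w p * w p := by field_simp
    _ ≤ M * w p := mul_le_mul_of_nonneg_right this hwp.le
  -- any solution of M * w q = q with q ∈ (0,1) satisfies pbar ≤ q
  have hgeq : ∀ q ∈ Ioo (0:ℝ) 1, M * w q = q → pbar ≤ q := by
    intro q hq heq
    by_contra hqlt
    push_neg at hqlt
    have hb0 : 0 < q / pbar := div_pos hq.1 hpbar0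
    have hb1 : q / pbar < 1 := (div_lt_one hpbar0).mpr hqlt
    have key := hconc.2 (x := 0) (y := pbar)
      ⟨le_refl 0, hpbar0.le⟩ ⟨hpbar0.le, le_refl pbar⟩ hpbar0.ne
      (sub_pos.mpr hb1) hb0 (by ring)
    have hpe : (1 - q / pbar) • (0:ℝ) + (q / pbar) • pbar = q := by
      rw [smul_zero, zero_add, smul_eq_mul, div_mul_cancel₀ _ hpbar0.ne']
    rw [hpe, h0, smul_eq_mul, smul_eq_mul, mul_zero, zero_add] at key
    -- key : q / pbar * w pbar < w q
    have hlb : pbar ≤ M * w pbar := hlow pbar ⟨hpbar0, hpbar1.le⟩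
    have hwq : w q = q / M := by
      field_simp
      linarith [heq]
    have h2 : q / pbar * pbar ≤ q / pbar * (M * w pbar) :=
      mul_le_mul_of_nonneg_left hlb hb0.le
    rw [div_mul_cancel₀ _ hpbar0.ne'] at h2
    -- q ≤ (q/pbar) * M * w pbar < M * w q = q, contradiction
    have h3 : q / pbar * (M * w pbar) = M * (q / pbar * w pbar) := by ring
    rw [h3] at h2
    have h4 : M * (q / pbar * w pbar) < M * w q :=
      (mul_lt_mul_iff_right₀ hM0).mpr key
    rw [heq] at h4
    linarith
  have hpsge : pbar ≤ ps := hps.1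
  have hMps : M * w ps = ps := by
    rw [hM, div_mul_cancel₀ _ hwps.ne']
  -- uniqueness via strict convexity
  have huniq : ∀ q ∈ Ioo (0:ℝ) 1, M * w q = q → q = ps := by
    intro q hq heq
    by_contra hne'
    have hqge : pbar ≤ q := hgeq q hq heq
    set t := (q + ps) / 2 with ht
    have htmem : t ∈ Ioc (0:ℝ) 1 := by
      constructor
      · have : 0 < q + ps := by linarith [hq.1, hps0]
        linarith
      · have : q + ps < 2 := by linarith [hq.2, hps1]
        linarith
    have key := hconv.2 (x := q) (y := ps)
      ⟨hqge, hq.2.le⟩ ⟨hpsge, hps.2⟩ hne'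
      (by norm_num : (0:ℝ) < 1/2) (by norm_num : (0:ℝ) < 1/2) (by norm_num)
    have hte : (1/2 : ℝ) • q + (1/2 : ℝ) • ps = t := by
      rw [ht]; push_cast [smul_eq_mul]; ring
    rw [hte, smul_eq_mul, smul_eq_mul] at key
    -- key : w t < (w q + w ps)/2
    have hlbt : t ≤ M * w t := hlow t htmem
    have : M * w t < M * (1/2 * w q + 1/2 * w ps) := (mul_lt_mul_iff_right₀ hM0).mpr key
    have hsum : M * (1/2 * w q + 1/2 * w ps) = (M * w q + M * w ps) / 2 := by ring
    rw [hsum, heq, hMps] at this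
    rw [ht] at hlbt
    linarith
  refine ⟨ps, ⟨hps0, hps1⟩, ?_, ?_, ?_, ?_⟩
  · rw [hSup]
  · rw [hSup]; exact hM1
  · rw [hSup]; exact hMps
  · intro q hq heq
    rw [hSup] at heq
    exact huniq q hq heq
end

section
/- Let w : [0,1] → [0,1] be a probability weighting function (strictly increasing, w(0)=0, w(1)=1, differentiable with w'(0) > 1 and w'(1) > 1, strictly concave on [0,p̄] and strictly convex on [p̄,1] for some p̄ ∈ (0,1)). Let μ* = sup_{p ∈ (0,1]} p/w(p) and let p* ∈ (0,1) be the unique point with μ* · w(p*) = p*. Then w(p) > p/μ* for every p ∈ (0,1] with p ≠ p*. -/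
open Set

/-- With `μ* = sup_{p ∈ (0,1]} p / w p` and `p* ∈ (0,1)` the unique
point with `μ* * w p* = p*`, one has `w p > p / μ*` for every `p ∈ (0,1]`, `p ≠ p*`. -/
theorem stmt1
    (w w' : ℝ → ℝ)
    (hmap : ∀ p ∈ Icc (0:ℝ) 1, w p ∈ Icc (0:ℝ) 1)
    (hmono : StrictMonoOn w (Icc (0:ℝ) 1))
    (hcont : ContinuousOn w (Icc (0:ℝ) 1))
    (h0 : w 0 = 0) (h1 : w 1 = 1)
    (hderiv : ∀ p ∈ Icc (0:ℝ) 1, HasDerivWithinAt w (w' p) (Icc (0:ℝ) 1) p)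
    (hd0 : 1 < w' 0) (hd1 : 1 < w' 1)
    (pbar : ℝ) (hpbar : pbar ∈ Ioo (0:ℝ) 1)
    (hconc : StrictConcaveOn ℝ (Icc (0:ℝ) pbar) w)
    (hconv : StrictConvexOn ℝ (Icc pbar 1) w)
    (mustar pstar : ℝ)
    (hmu : mustar = sSup ((fun p => p / w p) '' Ioc (0:ℝ) 1))
    (hpstar : pstar ∈ Ioo (0:ℝ) 1)
    (heq : mustar * w pstar = pstar) :
    ∀ p ∈ Ioc (0:ℝ) 1, p ≠ pstar → p / mustar < w p := by
  obtain ⟨hpb0, hpb1⟩ := hpbar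
  have hI : ∀ q ∈ Ioc (0:ℝ) 1, q ∈ Icc (0:ℝ) 1 := fun q hq => ⟨hq.1.le, hq.2⟩
  have h0I : (0:ℝ) ∈ Icc (0:ℝ) 1 := ⟨le_rfl, zero_le_one⟩
  have hwpos : ∀ q ∈ Ioc (0:ℝ) 1, 0 < w q := by
    intro q hq
    have := hmono h0I (hI q hq) hq.1
    rwa [h0] at this
  have hc : 0 < w pbar := hwpos pbar ⟨hpb0, hpb1.le⟩
  -- lower bound on [0, pbar] from concavity
  have hconcbound : ∀ q, 0 ≤ q → q ≤ pbar → (q / pbar) * w pbar ≤ w q := by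
    intro q hq0 hqp
    have ht0 : 0 ≤ q / pbar := by positivity
    have ht1 : q / pbar ≤ 1 := (div_le_one hpb0).2 hqp
    have h := hconc.concaveOn.2 (mem_Icc.2 ⟨le_rfl, hpb0.le⟩) (mem_Icc.2 ⟨hpb0.le, le_rfl⟩)
      (show (0:ℝ) ≤ 1 - q / pbar by linarith) ht0 (by ring)
    have hxy : (1 - q / pbar) • (0:ℝ) + (q / pbar) • pbar = q := by
      simp only [smul_eq_mul]; field_simp; ring
    rw [hxy, h0, smul_eq_mul, smul_eq_mul] at h
    linarith
  -- the set is bounded above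
  have hbdd : BddAbove ((fun p => p / w p) '' Ioc (0:ℝ) 1) := by
    refine ⟨1 / w pbar, ?_⟩
    rintro x ⟨q, hq, rfl⟩
    simp only
    rcases le_or_gt q pbar with hle | hlt
    · have hw1 : (q / pbar) * w pbar ≤ w q := hconcbound q hq.1.le hle
      have hwq : 0 < w q := hwpos q hq
      rw [div_le_div_iff₀ hwq hc]
      have : q * w pbar = pbar * ((q / pbar) * w pbar) := by field_simp
      nlinarith
    · have hw1 : w pbar ≤ w q := (hmono ⟨hpb0.le, hpb1.le⟩ (hI q hq) hlt).le
      have hwq : 0 < w q := hwpos q hq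
      rw [div_le_div_iff₀ hwq hc]
      nlinarith [hq.2]
  have hmem : ∀ q ∈ Ioc (0:ℝ) 1, q / w q ≤ mustar := by
    intro q hq
    rw [hmu]
    exact le_csSup hbdd ⟨q, hq, rfl⟩
  have hmu1 : 1 ≤ mustar := by
    have := hmem 1 ⟨one_pos, le_rfl⟩
    rwa [h1, div_one] at this
  have hmupos : 0 < mustar := lt_of_lt_of_le one_pos hmu1
  -- the basic inequality  q / mustar ≤ w q
  have hge : ∀ q ∈ Ioc (0:ℝ) 1, q / mustar ≤ w q := by
    intro q hq
    have h1' := (div_le_iff₀ (hwpos q hq)).mp (hmem q hq)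
    rw [div_le_iff₀ hmupos]
    nlinarith
  -- strict inequality on (0, pbar) by strict concavity
  have hstrict_conc : ∀ q, 0 < q → q < pbar → q / mustar < w q := by
    intro q hq0 hqp
    have ht0 : 0 < q / pbar := by positivity
    have ht1 : q / pbar < 1 := (div_lt_one hpb0).2 hqp
    have h := hconc.2 (mem_Icc.2 ⟨le_rfl, hpb0.le⟩) (mem_Icc.2 ⟨hpb0.le, le_rfl⟩) hpb0.ne
      (show (0:ℝ) < 1 - q / pbar by linarith) ht0 (by ring)
    have hxy : (1 - q / pbar) • (0:ℝ) + (q / pbar) • pbar = q := by simp only [smul_eq_mul]; field_simp; ring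
    rw [hxy, h0, smul_eq_mul, smul_eq_mul] at h
    have hpb : pbar / mustar ≤ w pbar := hge pbar ⟨hpb0, hpb1.le⟩
    have hkey : q / pbar * (pbar / mustar) = q / mustar := by
      field_simp
    nlinarith
  intro p hp hne
  rcases lt_or_eq_of_le (hge p hp) with h | h
  · exact h
  -- equality case: derive a contradiction
  exfalso
  have hwp : w p = p / mustar := h.symm
  have hwps : w pstar = pstar / mustar := by
    field_simp
    linarith [heq]
  -- both p and pstar must be ≥ pbar
  have hppb : pbar ≤ p := by
    by_contra hcon
    push_neg at hcon
    have := hstrict_conc p hp.1 hcon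
    rw [hwp] at this
    exact lt_irrefl _ this
  have hpspb : pbar ≤ pstar := by
    by_contra hcon
    push_neg at hcon
    have := hstrict_conc pstar hpstar.1 hcon
    rw [hwps] at this
    exact lt_irrefl _ this
  -- midpoint argument with strict convexity
  have hpmem : p ∈ Icc pbar 1 := ⟨hppb, hp.2⟩
  have hpsmem : pstar ∈ Icc pbar 1 := ⟨hpspb, hpstar.2.le⟩
  have hhalf : (0:ℝ) < 1/2 := by norm_num
  have h := hconv.2 hpmem hpsmem hne hhalf hhalf (by norm_num : (1:ℝ)/2 + 1/2 = 1)
  set m := (1/2 : ℝ) • p + (1/2 : ℝ) • pstar with hm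
  have hm' : m = (p + pstar) / 2 := by rw [hm]; simp [smul_eq_mul]; ring
  have hmIoc : m ∈ Ioc (0:ℝ) 1 := by
    constructor
    · rw [hm']; linarith [hp.1, hpstar.1]
    · rw [hm']; linarith [hp.2, hpstar.2.le]
  have hmge : m / mustar ≤ w m := hge m hmIoc
  rw [hwp, hwps, smul_eq_mul, smul_eq_mul] at h
  have : w m < m / mustar := by
    calc w m < 1/2 * (p / mustar) + 1/2 * (pstar / mustar) := h
    _ = (p + pstar) / 2 / mustar := by ring
    _ = m / mustar := by rw [hm']
  linarith
end

section
/- Let w : [0,1] → [0,1] be a probability weighting function, let μ* = sup_{p∈(0,1]} p/w(p) with unique maximizer p* ∈ (0,1), and let θ > 0, λ > 0. Consider the optimization problem: maximize ∫₀^∞ P(y) dy over all antitone functions P : [0,∞) → [0,1] satisfying λ ∫₀^∞ w(P(y)) dy ≤ θ. The optimal value is μ*θ/λ, and it is attained by the step function P*(y) = p* for y < μ*θ/(p*λ) and P*(y) = 0 for y ≥ μ*θ/(p*λ). -/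
open Set MeasureTheory
open scoped ENNReal

/-- A tail-distribution function `P` of a nonnegative random price is feasible for the
static pricing problem if it is antitone on `[0,∞)`, takes values in `[0,1]`, and
satisfies the buyer's ex ante IR constraint `λ ∫₀^∞ w(P(y)) dy ≤ θ`. -/
def Feasible (w : ℝ → ℝ) (lam θ : ℝ) (P : ℝ → ℝ) : Prop :=
  AntitoneOn P (Ici 0) ∧ (∀ y ∈ Ici (0:ℝ), P y ∈ Icc (0:ℝ) 1) ∧
    ENNReal.ofReal lam * ∫⁻ y in Ioi (0:ℝ), ENNReal.ofReal (w (P y)) ≤ ENNReal.ofReal θ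

lemma step_lintegral (a L : ℝ) :
    ∫⁻ y in Ioi (0:ℝ), ENNReal.ofReal (if y < L then a else 0)
      = ENNReal.ofReal a * ENNReal.ofReal L := by
  have h : ∀ y, ENNReal.ofReal (if y < L then a else 0)
      = (Iio L).indicator (fun _ => ENNReal.ofReal a) y := by
    intro y; by_cases h : y < L <;> simp [Set.indicator, h]
  simp only [h]
  rw [lintegral_indicator measurableSet_Iio,
    Measure.restrict_restrict measurableSet_Iio, setLIntegral_const]
  congr 1
  rw [show Iio L ∩ Ioi (0:ℝ) = Ioo 0 L by ext x; simp [mem_Ioo, and_comm],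
    Real.volume_Ioo]
  simp

/-- The optimal value of the static pricing problem is `μ*θ/λ`,
attained by the binary step function `P*`. -/
theorem stmt2
    (w w' : ℝ → ℝ)
    (hmap : ∀ p ∈ Icc (0:ℝ) 1, w p ∈ Icc (0:ℝ) 1)
    (hmono : StrictMonoOn w (Icc (0:ℝ) 1))
    (hcont : ContinuousOn w (Icc (0:ℝ) 1))
    (h0 : w 0 = 0) (h1 : w 1 = 1)
    (hderiv : ∀ p ∈ Icc (0:ℝ) 1, HasDerivWithinAt w (w' p) (Icc (0:ℝ) 1) p)
    (hd0 : 1 < w' 0) (hd1 : 1 < w' 1)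
    (pbar : ℝ) (hpbar : pbar ∈ Ioo (0:ℝ) 1)
    (hconc : StrictConcaveOn ℝ (Icc (0:ℝ) pbar) w)
    (hconv : StrictConvexOn ℝ (Icc pbar 1) w)
    (mustar pstar : ℝ)
    (hpstar : pstar ∈ Ioo (0:ℝ) 1)
    (hmu : mustar = pstar / w pstar)
    (hmax : ∀ p ∈ Ioc (0:ℝ) 1, p / w p ≤ pstar / w pstar)
    (θ lam : ℝ) (hθ : 0 < θ) (hlam : 0 < lam) :
    IsGreatest
      {r : ℝ≥0∞ | ∃ P : ℝ → ℝ, Feasible w lam θ P ∧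
        r = ∫⁻ y in Ioi (0:ℝ), ENNReal.ofReal (P y)}
      (ENNReal.ofReal (mustar * θ / lam)) ∧
    Feasible w lam θ (fun y => if y < mustar * θ / (pstar * lam) then pstar else 0) ∧
    (∫⁻ y in Ioi (0:ℝ),
        ENNReal.ofReal (if y < mustar * θ / (pstar * lam) then pstar else 0))
      = ENNReal.ofReal (mustar * θ / lam) := by
  obtain ⟨hp0, hp1⟩ := hpstar
  have hwps : 0 < w pstar := by
    have := hmono (by constructor <;> norm_num) ⟨le_of_lt hp0, le_of_lt hp1⟩ hp0
    rwa [h0] at this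
  have hmus : 0 < mustar := by rw [hmu]; positivity
  set L : ℝ := mustar * θ / (pstar * lam) with hL
  have hpL : pstar * L = mustar * θ / lam := by
    rw [hL]; field_simp
  have hwL : lam * (w pstar * L) = θ := by
    rw [hL, hmu]; field_simp
  -- value of P* integral
  have hval : (∫⁻ y in Ioi (0:ℝ),
      ENNReal.ofReal (if y < L then pstar else 0))
      = ENNReal.ofReal (mustar * θ / lam) := by
    rw [step_lintegral, ← ENNReal.ofReal_mul (le_of_lt hp0), hpL]
  -- feasibility of P*
  have hfeas : Feasible w lam θ (fun y => if y < L then pstar else 0) := by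
    refine ⟨?_, ?_, ?_⟩
    · intro a _ b _ hab
      by_cases hb : b < L
      · simp only [if_pos hb, if_pos (lt_of_le_of_lt hab hb), le_refl]
      · simp only [if_neg hb]
        split_ifs <;> simp [le_of_lt hp0]
    · intro y _
      dsimp only
      split_ifs
      · exact ⟨le_of_lt hp0, le_of_lt hp1⟩
      · exact ⟨le_refl 0, zero_le_one⟩
    · have hcongr : ∀ y : ℝ, ENNReal.ofReal (w (if y < L then pstar else 0))
          = ENNReal.ofReal (if y < L then w pstar else 0) := by
        intro y; split_ifs <;> simp [h0]
      simp only [hcongr]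
      rw [step_lintegral, ← ENNReal.ofReal_mul (le_of_lt hwps),
        ← ENNReal.ofReal_mul (le_of_lt hlam), hwL]
  refine ⟨⟨⟨_, hfeas, hval.symm⟩, ?_⟩, hfeas, hval⟩
  -- upper bound
  rintro r ⟨P, ⟨hanti, hrange, hcons⟩, rfl⟩
  have hIle : (∫⁻ y in Ioi (0:ℝ), ENNReal.ofReal (w (P y)))
      ≤ ENNReal.ofReal (θ / lam) := by
    rw [← ENNReal.mul_le_mul_iff_right (a := ENNReal.ofReal lam)
      (by simp [hlam, ne_of_gt]) ENNReal.ofReal_ne_top,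
      ← ENNReal.ofReal_mul (le_of_lt hlam), mul_div_cancel₀ θ (ne_of_gt hlam)]
    exact hcons
  have hpt : ∀ y ∈ Ioi (0:ℝ),
      ENNReal.ofReal (P y) ≤ ENNReal.ofReal mustar * ENNReal.ofReal (w (P y)) := by
    intro y hy
    have hyI : y ∈ Ici (0:ℝ) := mem_Ici.2 (le_of_lt (mem_Ioi.1 hy))
    obtain ⟨hP0, hP1⟩ := hrange y hyI
    rw [← ENNReal.ofReal_mul (le_of_lt hmus)]
    apply ENNReal.ofReal_le_ofReal
    rcases eq_or_lt_of_le hP0 with h | h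
    · rw [← h, h0]; simp
    · have hwP : 0 < w (P y) := by
        have := hmono (by constructor <;> norm_num) ⟨hP0, hP1⟩ h
        rwa [h0] at this
      have := hmax (P y) ⟨h, hP1⟩
      rw [← hmu] at this
      calc P y = P y / w (P y) * w (P y) := by field_simp
        _ ≤ mustar * w (P y) := by
            exact mul_le_mul_of_nonneg_right this (le_of_lt hwP)
  calc (∫⁻ y in Ioi (0:ℝ), ENNReal.ofReal (P y))
      ≤ ∫⁻ y in Ioi (0:ℝ), ENNReal.ofReal mustar * ENNReal.ofReal (w (P y)) := by
        refine lintegral_mono_ae ?_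
        exact (ae_restrict_iff' measurableSet_Ioi).2 (Filter.Eventually.of_forall hpt)
    _ = ENNReal.ofReal mustar * ∫⁻ y in Ioi (0:ℝ), ENNReal.ofReal (w (P y)) :=
        lintegral_const_mul' _ _ ENNReal.ofReal_ne_top
    _ ≤ ENNReal.ofReal mustar * ENNReal.ofReal (θ / lam) := by
        exact mul_le_mul_right hIle _
    _ = ENNReal.ofReal (mustar * θ / lam) := by
        rw [← ENNReal.ofReal_mul (le_of_lt hmus), mul_div_assoc]
end

section
/- Let w : [0,1] → [0,1] be a probability weighting function, let μ* = sup_{p∈(0,1]} p/w(p) with unique maximizer p* ∈ (0,1), and let θ > 0, λ > 0. If P : [0,∞) → [0,1] is antitone, satisfies λ ∫₀^∞ w(P(y)) dy ≤ θ, and attains the optimal value ∫₀^∞ P(y) dy = μ*θ/λ, then P(y) = p* for almost every y < μ*θ/(p*λ) and P(y) = 0 for almost every y > μ*θ/(p*λ). -/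
open Set MeasureTheory
open scoped ENNReal

/-- Uniqueness of the optimizer of the static pricing problem:
any feasible `P` attaining the optimal value `μ*θ/λ` equals `p*` almost everywhere
below the cutoff `μ*θ/(p*λ)` and `0` almost everywhere above it. -/
theorem stmt3
    (w w' : ℝ → ℝ)
    (hmap : ∀ p ∈ Icc (0:ℝ) 1, w p ∈ Icc (0:ℝ) 1)
    (hmono : StrictMonoOn w (Icc (0:ℝ) 1))
    (hcont : ContinuousOn w (Icc (0:ℝ) 1))
    (h0 : w 0 = 0) (h1 : w 1 = 1)
    (hderiv : ∀ p ∈ Icc (0:ℝ) 1, HasDerivWithinAt w (w' p) (Icc (0:ℝ) 1) p)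
    (hd0 : 1 < w' 0) (hd1 : 1 < w' 1)
    (pbar : ℝ) (hpbar : pbar ∈ Ioo (0:ℝ) 1)
    (hconc : StrictConcaveOn ℝ (Icc (0:ℝ) pbar) w)
    (hconv : StrictConvexOn ℝ (Icc pbar 1) w)
    (mustar pstar : ℝ)
    (hpstar : pstar ∈ Ioo (0:ℝ) 1)
    (hmu : mustar = pstar / w pstar)
    (hmax : ∀ p ∈ Ioc (0:ℝ) 1, p / w p ≤ pstar / w pstar)
    (θ lam : ℝ) (hθ : 0 < θ) (hlam : 0 < lam) :
    ∀ P : ℝ → ℝ, Feasible w lam θ P →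
      (∫⁻ y in Ioi (0:ℝ), ENNReal.ofReal (P y)) = ENNReal.ofReal (mustar * θ / lam) →
      ∀ᵐ y : ℝ,
        (0 ≤ y → y < mustar * θ / (pstar * lam) → P y = pstar) ∧
        (mustar * θ / (pstar * lam) < y → P y = 0) := by
  obtain ⟨hps0, hps1⟩ := hpstar
  have h01 : (0:ℝ) ∈ Icc (0:ℝ) 1 := ⟨le_rfl, zero_le_one⟩
  have hpsmem : pstar ∈ Icc (0:ℝ) 1 := ⟨hps0.le, hps1.le⟩
  have hwps : 0 < w pstar := by
    have := hmono h01 hpsmem hps0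
    rwa [h0] at this
  have hmu0 : 0 < mustar := by rw [hmu]; exact div_pos hps0 hwps
  have hmuw : mustar * w pstar = pstar := by
    rw [hmu]; field_simp
  -- weak key inequality
  have keyLe : ∀ p ∈ Icc (0:ℝ) 1, p ≤ mustar * w p := by
    intro p hp
    rcases eq_or_lt_of_le hp.1 with h | h
    · simp [← h, h0]
    · have hwp : 0 < w p := by
        have := hmono h01 hp h
        rwa [h0] at this
      have hm := hmax p ⟨h, hp.2⟩
      rw [← hmu] at hm
      calc p = (p / w p) * w p := by field_simp
        _ ≤ mustar * w p := mul_le_mul_of_nonneg_right hm hwp.le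
  -- strict inequality on (0, pbar)
  have hconcStrict : ∀ p ∈ Ioo (0:ℝ) pbar, p < mustar * w p := by
    intro p hp
    have hb1 : (0:ℝ) ∈ Icc (0:ℝ) pbar := ⟨le_rfl, hpbar.1.le⟩
    have hb2 : pbar ∈ Icc (0:ℝ) pbar := ⟨hpbar.1.le, le_rfl⟩
    have hbpos : 0 < p / pbar := div_pos hp.1 hpbar.1
    have hapos : 0 < 1 - p / pbar := by
      have : p / pbar < 1 := (div_lt_one hpbar.1).mpr hp.2
      linarith
    have hkey := hconc.2 hb1 hb2 (ne_of_lt hpbar.1) hapos hbpos (by ring)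
    have harg : p / pbar * pbar = p := div_mul_cancel₀ _ (ne_of_gt hpbar.1)
    simp only [smul_eq_mul, h0, mul_zero, zero_add, harg] at hkey
    -- hkey : p / pbar * w pbar < w p
    have hw : pbar ≤ mustar * w pbar := keyLe pbar ⟨hpbar.1.le, hpbar.2.le⟩
    nlinarith [mul_lt_mul_of_pos_left hkey hmu0, mul_le_mul_of_nonneg_left hw hbpos.le]
  have hpbarle : pbar ≤ pstar := by
    by_contra hc
    push_neg at hc
    exact absurd hmuw.symm (ne_of_lt (hconcStrict pstar ⟨hps0, hc⟩))
  -- full strict inequality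
  have keyLt : ∀ p ∈ Icc (0:ℝ) 1, p ≠ 0 → p ≠ pstar → p < mustar * w p := by
    intro p hp hne0 hnes
    rcases (keyLe p hp).lt_or_eq with h | heq
    · exact h
    exfalso
    have hp0 : 0 < p := lt_of_le_of_ne hp.1 (Ne.symm hne0)
    rcases lt_or_ge p pbar with hcase | hcase
    · exact absurd heq (ne_of_lt (hconcStrict p ⟨hp0, hcase⟩))
    · -- p ∈ [pbar, 1], midpoint argument
      have hpmem : p ∈ Icc pbar 1 := ⟨hcase, hp.2⟩
      have hpsmem' : pstar ∈ Icc pbar 1 := ⟨hpbarle, hps1.le⟩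
      have hkey := hconv.2 hpmem hpsmem' hnes (by norm_num : (0:ℝ) < 1/2)
        (by norm_num : (0:ℝ) < 1/2) (by norm_num)
      rw [smul_eq_mul, smul_eq_mul, smul_eq_mul, smul_eq_mul] at hkey
      -- hkey : w (p/2 + pstar/2) < w p / 2 + w pstar / 2
      have hmmem : (1/2) * p + (1/2) * pstar ∈ Icc (0:ℝ) 1 := by
        constructor <;> nlinarith [hp.1, hp.2, hps0.le, hps1.le]
      have hm := keyLe _ hmmem
      nlinarith [mul_lt_mul_of_pos_left hkey hmu0, hm, heq]
  -- main argument
  intro P hP hI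
  obtain ⟨hanti, hval, hcon⟩ := hP
  have hV0 : 0 < mustar * θ / lam := div_pos (mul_pos hmu0 hθ) hlam
  set Q : ℝ → ℝ := fun y => P (max y 0) with hQdef
  have hQanti : Antitone Q := fun a b hab =>
    hanti (le_max_right a 0) (le_max_right b 0) (max_le_max hab le_rfl)
  have hQmem : ∀ y, Q y ∈ Icc (0:ℝ) 1 := fun y => hval _ (mem_Ici.mpr (le_max_right _ _))
  have hQeq : ∀ y ∈ Ioi (0:ℝ), Q y = P y := fun y hy => by
    simp only [hQdef, max_eq_left (le_of_lt (mem_Ioi.mp hy))]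
  have hQm : Measurable Q := hQanti.measurable
  have hwQanti : Antitone fun y => w (Q y) := fun a b hab =>
    hmono.monotoneOn (hQmem b) (hQmem a) (hQanti hab)
  have hwQm : Measurable fun y => w (Q y) := hwQanti.measurable
  have hwnn : ∀ y, 0 ≤ w (Q y) := fun y => (hmap _ (hQmem y)).1
  have haeQ : ∀ᵐ y ∂(volume.restrict (Ioi (0:ℝ))), Q y = P y :=
    (ae_restrict_iff' measurableSet_Ioi).mpr (Filter.Eventually.of_forall hQeq)
  have hfm : Measurable fun y => ENNReal.ofReal (Q y) := hQm.ennreal_ofReal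
  have hgm : Measurable fun y => ENNReal.ofReal (mustar * w (Q y)) :=
    (hwQm.const_mul mustar).ennreal_ofReal
  have hfg : ∀ y, ENNReal.ofReal (Q y) ≤ ENNReal.ofReal (mustar * w (Q y)) :=
    fun y => ENNReal.ofReal_le_ofReal (keyLe _ (hQmem y))
  have hIf : ∫⁻ y in Ioi (0:ℝ), ENNReal.ofReal (Q y) = ENNReal.ofReal (mustar * θ / lam) := by
    rw [← hI]
    exact lintegral_congr_ae (haeQ.mono fun y hy => by simp only [hy])
  have hIg : ∫⁻ y in Ioi (0:ℝ), ENNReal.ofReal (mustar * w (Q y))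
      ≤ ENNReal.ofReal (mustar * θ / lam) := by
    have h1 : ∫⁻ y in Ioi (0:ℝ), ENNReal.ofReal (mustar * w (Q y))
        = ENNReal.ofReal mustar * ∫⁻ y in Ioi (0:ℝ), ENNReal.ofReal (w (Q y)) := by
      simp_rw [ENNReal.ofReal_mul hmu0.le]
      exact lintegral_const_mul _ hwQm.ennreal_ofReal
    have h2 : ∫⁻ y in Ioi (0:ℝ), ENNReal.ofReal (w (Q y))
        = ∫⁻ y in Ioi (0:ℝ), ENNReal.ofReal (w (P y)) :=
      lintegral_congr_ae (haeQ.mono fun y hy => by simp only [hy])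
    rw [h1, h2]
    have h3 : ENNReal.ofReal mustar * ∫⁻ y in Ioi (0:ℝ), ENNReal.ofReal (w (P y))
        = ENNReal.ofReal (mustar / lam) *
          (ENNReal.ofReal lam * ∫⁻ y in Ioi (0:ℝ), ENNReal.ofReal (w (P y))) := by
      rw [← mul_assoc, ← ENNReal.ofReal_mul (by positivity), div_mul_cancel₀ _ (ne_of_gt hlam)]
    rw [h3]
    calc ENNReal.ofReal (mustar / lam) *
          (ENNReal.ofReal lam * ∫⁻ y in Ioi (0:ℝ), ENNReal.ofReal (w (P y)))
        ≤ ENNReal.ofReal (mustar / lam) * ENNReal.ofReal θ := mul_le_mul_right hcon _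
      _ = ENNReal.ofReal (mustar * θ / lam) := by
          rw [← ENNReal.ofReal_mul (by positivity)]; ring_nf
  -- equality of integrals forces pointwise a.e. equality
  have hIg' : ∫⁻ y in Ioi (0:ℝ), ENNReal.ofReal (mustar * w (Q y))
      = ENNReal.ofReal (mustar * θ / lam) := by
    refine le_antisymm hIg ?_
    rw [← hIf]
    exact lintegral_mono hfg
  have haeEq : ∀ᵐ y ∂(volume.restrict (Ioi (0:ℝ))),
      ENNReal.ofReal (Q y) = ENNReal.ofReal (mustar * w (Q y)) := by
    have hadd : ∫⁻ y in Ioi (0:ℝ),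
        (ENNReal.ofReal (Q y) + (ENNReal.ofReal (mustar * w (Q y)) - ENNReal.ofReal (Q y)))
        = (∫⁻ y in Ioi (0:ℝ), ENNReal.ofReal (Q y)) +
          ∫⁻ y in Ioi (0:ℝ), (ENNReal.ofReal (mustar * w (Q y)) - ENNReal.ofReal (Q y)) :=
      lintegral_add_left hfm _
    have hcongr : ∀ y, ENNReal.ofReal (Q y) +
        (ENNReal.ofReal (mustar * w (Q y)) - ENNReal.ofReal (Q y))
        = ENNReal.ofReal (mustar * w (Q y)) := fun y => add_tsub_cancel_of_le (hfg y)
    simp_rw [hcongr] at hadd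
    rw [hIg', hIf] at hadd
    have hzero : ∫⁻ y in Ioi (0:ℝ),
        (ENNReal.ofReal (mustar * w (Q y)) - ENNReal.ofReal (Q y)) = 0 := by
      have h' : ENNReal.ofReal (mustar * θ / lam) + 0
          = ENNReal.ofReal (mustar * θ / lam) + ∫⁻ y in Ioi (0:ℝ),
            (ENNReal.ofReal (mustar * w (Q y)) - ENNReal.ofReal (Q y)) := by
        rw [add_zero]; exact hadd
      exact ((ENNReal.add_right_inj ENNReal.ofReal_ne_top).mp h').symm
    have hdz := (lintegral_eq_zero_iff (hgm.sub hfm)).mp hzero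
    refine hdz.mono fun y hy => ?_
    have hle : ENNReal.ofReal (mustar * w (Q y)) ≤ ENNReal.ofReal (Q y) :=
      tsub_eq_zero_iff_le.mp hy
    exact le_antisymm (hfg y) hle
  have haeP : ∀ᵐ y : ℝ, y ∈ Ioi (0:ℝ) → (P y = 0 ∨ P y = pstar) := by
    rw [← ae_restrict_iff' measurableSet_Ioi]
    filter_upwards [haeEq, haeQ, ae_restrict_mem measurableSet_Ioi] with y h1 h2 hy
    have hq : Q y = mustar * w (Q y) :=
      (ENNReal.ofReal_eq_ofReal_iff (hQmem y).1 (mul_nonneg hmu0.le (hwnn y))).mp h1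
    rw [h2] at hq
    by_cases hz : P y = 0
    · exact Or.inl hz
    right
    by_contra hne
    exact absurd hq (ne_of_lt (keyLt _ (hval y (le_of_lt (mem_Ioi.mp hy))) hz hne))
  have hfin : (∫⁻ y in Ioi (0:ℝ), ENNReal.ofReal (P y)) ≠ ⊤ := by
    rw [hI]; exact ENNReal.ofReal_ne_top
  set T := {y : ℝ | 0 ≤ y ∧ pstar ≤ P y} with hT
  have hTbdd : BddAbove T := by
    by_contra hbd
    have hall : ∀ y : ℝ, 0 ≤ y → pstar ≤ P y := by
      intro y hy
      obtain ⟨z, hz, hyz⟩ := not_bddAbove_iff.mp hbd y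
      exact le_trans hz.2 (hanti hy hz.1 hyz.le)
    have htop : (⊤ : ℝ≥0∞) ≤ ∫⁻ y in Ioi (0:ℝ), ENNReal.ofReal (P y) := by
      have hc : ∫⁻ (_ : ℝ) in Ioi (0:ℝ), ENNReal.ofReal pstar = ⊤ := by
        rw [setLIntegral_const, Real.volume_Ioi, ENNReal.mul_top]
        simp [ENNReal.ofReal_eq_zero, not_le.mpr hps0]
      rw [← hc]
      refine lintegral_mono_ae ((ae_restrict_iff' measurableSet_Ioi).mpr
        (Filter.Eventually.of_forall fun y hy => ?_))
      exact ENNReal.ofReal_le_ofReal (hall y (le_of_lt (mem_Ioi.mp hy)))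
    exact hfin (top_le_iff.mp htop)
  have hTne : T.Nonempty := by
    by_contra hne
    rw [not_nonempty_iff_eq_empty] at hne
    have hz : ∀ᵐ y : ℝ, y ∈ Ioi (0:ℝ) → P y = 0 := by
      filter_upwards [haeP] with y h hy
      rcases h hy with h' | h'
      · exact h'
      · exfalso
        have : y ∈ T := ⟨le_of_lt (mem_Ioi.mp hy), h' ▸ le_rfl⟩
        rw [hne] at this
        exact this
    have hzero : ∫⁻ y in Ioi (0:ℝ), ENNReal.ofReal (P y) = 0 := by
      have hae0 : ∀ᵐ y ∂volume.restrict (Ioi (0:ℝ)),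
          ENNReal.ofReal (P y) = (0:ℝ≥0∞) :=
        (ae_restrict_iff' measurableSet_Ioi).mpr
          (hz.mono fun y h hy => by rw [h hy, ENNReal.ofReal_zero])
      calc ∫⁻ y in Ioi (0:ℝ), ENNReal.ofReal (P y)
          = ∫⁻ (_ : ℝ) in Ioi (0:ℝ), (0:ℝ≥0∞) := lintegral_congr_ae hae0
        _ = 0 := lintegral_zero
    rw [hI] at hzero
    exact absurd hzero (by simp [ENNReal.ofReal_eq_zero, not_le.mpr hV0])
  set t := sSup T with ht
  have ht0 : 0 ≤ t := by
    obtain ⟨z, hz⟩ := hTne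
    exact le_trans hz.1 (le_csSup hTbdd hz)
  have hE1 : ∀ᵐ y : ℝ, y ∈ Ioo 0 t → P y = pstar := by
    filter_upwards [haeP] with y h hy
    obtain ⟨z, hzT, hyz⟩ := exists_lt_of_lt_csSup hTne hy.2
    have hge : pstar ≤ P y := le_trans hzT.2 (hanti hy.1.le hzT.1 hyz.le)
    rcases h (mem_Ioi.mpr hy.1) with h' | h'
    · exfalso; rw [h'] at hge; linarith
    · exact h'
  have hE2 : ∀ᵐ y : ℝ, t < y → P y = 0 := by
    filter_upwards [haeP] with y h hy
    have hy0 : 0 < y := lt_of_le_of_lt ht0 hy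
    rcases h (mem_Ioi.mpr hy0) with h' | h'
    · exact h'
    · exfalso
      have : y ∈ T := ⟨hy0.le, h' ▸ le_rfl⟩
      exact absurd (le_csSup hTbdd this) (not_le.mpr hy)
  have hnt : ∀ᵐ y : ℝ, y ≠ t := by
    have : volume ({t} : Set ℝ) = 0 := Real.volume_singleton
    rw [ae_iff]
    convert this using 2
    ext y; simp
  have h1int : ∫⁻ y in Ioc (0:ℝ) t, ENNReal.ofReal (P y) = ENNReal.ofReal (pstar * t) := by
    have hae : ∀ᵐ y ∂volume.restrict (Ioc (0:ℝ) t),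
        ENNReal.ofReal (P y) = ENNReal.ofReal pstar := by
      rw [ae_restrict_iff' measurableSet_Ioc]
      filter_upwards [hE1, hnt] with y h hne hy
      rw [h ⟨hy.1, lt_of_le_of_ne hy.2 hne⟩]
    rw [lintegral_congr_ae hae, setLIntegral_const, Real.volume_Ioc, sub_zero,
      ← ENNReal.ofReal_mul hps0.le]
  have h2int : ∫⁻ y in Ioi t, ENNReal.ofReal (P y) = 0 := by
    have hae : ∀ᵐ y ∂volume.restrict (Ioi t),
        ENNReal.ofReal (P y) = (0:ℝ≥0∞) := by
      rw [ae_restrict_iff' measurableSet_Ioi]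
      filter_upwards [hE2] with y h hy
      rw [h hy, ENNReal.ofReal_zero]
    calc ∫⁻ y in Ioi t, ENNReal.ofReal (P y)
        = ∫⁻ (_ : ℝ) in Ioi t, (0:ℝ≥0∞) := lintegral_congr_ae hae
      _ = 0 := lintegral_zero
  have hsplit : ENNReal.ofReal (pstar * t) = ENNReal.ofReal (mustar * θ / lam) := by
    rw [← h1int, ← hI, ← Ioc_union_Ioi_eq_Ioi ht0,
      lintegral_union measurableSet_Ioi (Ioc_disjoint_Ioi le_rfl), h2int, add_zero]
  have hteq : pstar * t = mustar * θ / lam :=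
    (ENNReal.ofReal_eq_ofReal_iff (mul_nonneg hps0.le ht0) hV0.le).mp hsplit
  have htc : t = mustar * θ / (pstar * lam) := by
    rw [eq_div_iff (by positivity)]
    calc t * (pstar * lam) = (pstar * t) * lam := by ring
      _ = (mustar * θ / lam) * lam := by rw [hteq]
      _ = mustar * θ := by field_simp
  have hnt0 : ∀ᵐ y : ℝ, y ≠ (0:ℝ) := by
    have : volume ({(0:ℝ)} : Set ℝ) = 0 := Real.volume_singleton
    rw [ae_iff]
    convert this using 2
    ext y; simp
  filter_upwards [hE1, hE2, hnt0] with y h1 h2 h3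
  rw [← htc]
  exact ⟨fun hy0 hyt => h1 ⟨lt_of_le_of_ne hy0 (Ne.symm h3), hyt⟩, h2⟩
end

section
/- Let w : [0,1] → [0,1] be a probability weighting function (strictly increasing, continuous, w(0)=0, w(1)=1, differentiable with w'(0) > 1 and w'(1) > 1, strictly concave on [0,p̄] and strictly convex on [p̄,1] for some p̄ ∈ (0,1)). Then there exists a unique p₁ ∈ (0,1) such that w(p₁) = p₁; moreover w(p) > p for all p ∈ (0,p₁) and w(p) < p for all p ∈ (p₁,1). -/
open Set Filter Topology

/-- Chord inequality for a strictly concave function (denominator-free form). -/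
lemma chord_lt_concave {s : Set ℝ} {g : ℝ → ℝ} (h : StrictConcaveOn ℝ s g)
    {u v y : ℝ} (hu : u ∈ s) (hv : v ∈ s) (hy : y ∈ Ioo u v) :
    (v - y) * g u + (y - u) * g v < (v - u) * g y := by
  obtain ⟨h1, h2⟩ := hy
  have huv : u < v := h1.trans h2
  have hvu : (0:ℝ) < v - u := by linarith
  have hA : (0:ℝ) < (v - y)/(v - u) := div_pos (by linarith) hvu
  have hB : (0:ℝ) < (y - u)/(v - u) := div_pos (by linarith) hvu
  have hAB : (v - y)/(v - u) + (y - u)/(v - u) = 1 := by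
    rw [← add_div, div_eq_one_iff_eq hvu.ne']
    ring
  have key := h.2 hu hv (ne_of_lt huv) hA hB hAB
  have he : ((v - y)/(v - u)) • u + ((y - u)/(v - u)) • v = y := by
    rw [smul_eq_mul, smul_eq_mul, div_mul_eq_mul_div, div_mul_eq_mul_div,
      ← add_div, div_eq_iff hvu.ne']
    ring
  rw [he, smul_eq_mul, smul_eq_mul, div_mul_eq_mul_div, div_mul_eq_mul_div,
    ← add_div, div_lt_iff₀ hvu] at key
  linarith [key]

/-- Chord inequality for a strictly convex function (denominator-free form). -/
lemma convex_lt_chord {s : Set ℝ} {g : ℝ → ℝ} (h : StrictConvexOn ℝ s g)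
    {u v y : ℝ} (hu : u ∈ s) (hv : v ∈ s) (hy : y ∈ Ioo u v) :
    (v - u) * g y < (v - y) * g u + (y - u) * g v := by
  obtain ⟨h1, h2⟩ := hy
  have huv : u < v := h1.trans h2
  have hvu : (0:ℝ) < v - u := by linarith
  have hA : (0:ℝ) < (v - y)/(v - u) := div_pos (by linarith) hvu
  have hB : (0:ℝ) < (y - u)/(v - u) := div_pos (by linarith) hvu
  have hAB : (v - y)/(v - u) + (y - u)/(v - u) = 1 := by
    rw [← add_div, div_eq_one_iff_eq hvu.ne']
    ring
  have key := h.2 hu hv (ne_of_lt huv) hA hB hAB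
  have he : ((v - y)/(v - u)) • u + ((y - u)/(v - u)) • v = y := by
    rw [smul_eq_mul, smul_eq_mul, div_mul_eq_mul_div, div_mul_eq_mul_div,
      ← add_div, div_eq_iff hvu.ne']
    ring
  rw [he, smul_eq_mul, smul_eq_mul, div_mul_eq_mul_div, div_mul_eq_mul_div,
    ← add_div, lt_div_iff₀ hvu] at key
  linarith [key]

/-- A probability weighting function has a unique interior fixed point
`p₁ ∈ (0,1)` with `w p₁ = p₁`; moreover `w p > p` on `(0, p₁)` and `w p < p` on `(p₁, 1)`. -/
theorem stmt4
    (w w' : ℝ → ℝ)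
    (hmap : ∀ p ∈ Icc (0:ℝ) 1, w p ∈ Icc (0:ℝ) 1)
    (hmono : StrictMonoOn w (Icc (0:ℝ) 1))
    (hcont : ContinuousOn w (Icc (0:ℝ) 1))
    (h0 : w 0 = 0) (h1 : w 1 = 1)
    (hderiv : ∀ p ∈ Icc (0:ℝ) 1, HasDerivWithinAt w (w' p) (Icc (0:ℝ) 1) p)
    (hd0 : 1 < w' 0) (hd1 : 1 < w' 1)
    (pbar : ℝ) (hpbar : pbar ∈ Ioo (0:ℝ) 1)
    (hconc : StrictConcaveOn ℝ (Icc (0:ℝ) pbar) w)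
    (hconv : StrictConvexOn ℝ (Icc pbar 1) w) :
    ∃ p₁ ∈ Ioo (0:ℝ) 1,
      w p₁ = p₁ ∧
      (∀ p ∈ Ioo (0:ℝ) p₁, p < w p) ∧
      (∀ p ∈ Ioo p₁ (1:ℝ), w p < p) ∧
      ∀ q ∈ Ioo (0:ℝ) 1, w q = q → q = p₁ := by
  obtain ⟨hpb0, hpb1⟩ := hpbar
  -- Step A: find a ∈ (0, 1/2) with a < w a, using w'(0) > 1.
  have hslope0 : Tendsto (slope w 0) (𝓝[Icc (0:ℝ) 1 \ {0}] 0) (𝓝 (w' 0)) :=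
    hasDerivWithinAt_iff_tendsto_slope.mp (hderiv 0 ⟨le_refl 0, zero_le_one⟩)
  have hfil0 : 𝓝[Ioo (0:ℝ) (1/2)] (0:ℝ) ≤ 𝓝[Icc (0:ℝ) 1 \ {0}] 0 := by
    apply nhdsWithin_mono
    intro x hx
    exact ⟨⟨hx.1.le, by linarith [hx.2]⟩, by simpa using ne_of_gt hx.1⟩
  have hne0 : (𝓝[Ioo (0:ℝ) (1/2)] (0:ℝ)).NeBot := by
    apply mem_closure_iff_nhdsWithin_neBot.mp
    rw [closure_Ioo (by norm_num : (0:ℝ) ≠ 1/2)]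
    exact ⟨le_refl 0, by norm_num⟩
  have hev0 : ∀ᶠ x in 𝓝[Ioo (0:ℝ) (1/2)] (0:ℝ), 1 < slope w 0 x :=
    (hslope0.eventually (eventually_gt_nhds hd0)).filter_mono hfil0
  obtain ⟨a, ha, hsa⟩ := (eventually_mem_nhdsWithin.and hev0).exists
  have haw : a < w a := by
    rw [slope_def_field, h0, sub_zero, sub_zero] at hsa
    exact (one_lt_div ha.1).mp hsa
  -- Step B: find b ∈ (1/2, 1) with w b < b, using w'(1) > 1.
  have hslope1 : Tendsto (slope w 1) (𝓝[Icc (0:ℝ) 1 \ {1}] 1) (𝓝 (w' 1)) :=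
    hasDerivWithinAt_iff_tendsto_slope.mp (hderiv 1 ⟨zero_le_one, le_refl 1⟩)
  have hfil1 : 𝓝[Ioo (1/2:ℝ) 1] (1:ℝ) ≤ 𝓝[Icc (0:ℝ) 1 \ {1}] 1 := by
    apply nhdsWithin_mono
    intro x hx
    exact ⟨⟨by linarith [hx.1], hx.2.le⟩, by simpa using ne_of_lt hx.2⟩
  have hne1 : (𝓝[Ioo (1/2:ℝ) 1] (1:ℝ)).NeBot := by
    apply mem_closure_iff_nhdsWithin_neBot.mp
    rw [closure_Ioo (by norm_num : (1/2:ℝ) ≠ 1)]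
    exact ⟨by norm_num, le_refl 1⟩
  have hev1 : ∀ᶠ x in 𝓝[Ioo (1/2:ℝ) 1] (1:ℝ), 1 < slope w 1 x :=
    (hslope1.eventually (eventually_gt_nhds hd1)).filter_mono hfil1
  obtain ⟨b, hb, hsb⟩ := (eventually_mem_nhdsWithin.and hev1).exists
  have hbw : w b < b := by
    rw [slope_def_field, h1] at hsb
    have hb1 : b - 1 < 0 := by linarith [hb.2]
    have := (lt_div_iff_of_neg hb1).mp hsb
    linarith
  -- IVT for w p - p on [a, b]
  have hab : a < b := by linarith [ha.2, hb.1]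
  have hsub : Icc a b ⊆ Icc (0:ℝ) 1 := Icc_subset_Icc ha.1.le hb.2.le
  have hgc : ContinuousOn (fun x => w x - x) (Icc a b) :=
    (hcont.mono hsub).sub continuousOn_id
  have hmem : (0:ℝ) ∈ Ioo (w b - b) (w a - a) := ⟨by linarith, by linarith⟩
  obtain ⟨p₁, hp₁ab, hp₁fix⟩ := intermediate_value_Ioo' hab.le hgc hmem
  have hfix : w p₁ = p₁ := by
    have : w p₁ - p₁ = 0 := hp₁fix
    linarith
  have hp₁0 : 0 < p₁ := ha.1.trans hp₁ab.1
  have hp₁1 : p₁ < 1 := hp₁ab.2.trans hb.2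
  -- Sign of w p - p on (0, p₁)
  have key_pos : ∀ p ∈ Ioo (0:ℝ) p₁, p < w p := by
    intro p hp
    rcases le_or_gt p₁ pbar with hle | hlt
    · -- concave chord from 0 to p₁
      have hc := chord_lt_concave hconc (u := 0) (v := p₁) (y := p)
        ⟨le_refl 0, hpb0.le⟩ ⟨hp₁0.le, hle⟩ hp
      rw [h0, hfix] at hc
      nlinarith [hc, hp₁0]
    · -- pbar < p₁ : first w pbar > pbar via convex chord (pbar, 1) at p₁
      have hwpbar : pbar < w pbar := by
        have hc := convex_lt_chord hconv (u := pbar) (v := 1) (y := p₁)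
          ⟨le_refl pbar, hpb1.le⟩ ⟨hpb1.le, le_refl 1⟩ ⟨hlt, hp₁1⟩
        rw [h1, hfix] at hc
        nlinarith [hc, hp₁1]
      rcases lt_or_ge p pbar with hpp | hpp
      · -- concave chord from 0 to pbar
        have hc := chord_lt_concave hconc (u := 0) (v := pbar) (y := p)
          ⟨le_refl 0, hpb0.le⟩ ⟨hpb0.le, le_refl pbar⟩ ⟨hp.1, hpp⟩
        rw [h0] at hc
        nlinarith [hc, mul_lt_mul_of_pos_left hwpbar hp.1, hpb0]
      · -- convex chord from p to 1, with p₁ in between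
        have hc := convex_lt_chord hconv (u := p) (v := 1) (y := p₁)
          ⟨hpp, by linarith [hp.2]⟩ ⟨hpb1.le, le_refl 1⟩ ⟨hp.2, hp₁1⟩
        rw [h1, hfix] at hc
        nlinarith [hc, hp₁1]
  -- Sign of w p - p on (p₁, 1)
  have key_neg : ∀ p ∈ Ioo p₁ (1:ℝ), w p < p := by
    intro p hp
    rcases lt_or_ge pbar p₁ with hlt | hle
    · -- convex chord from p₁ to 1
      have hc := convex_lt_chord hconv (u := p₁) (v := 1) (y := p)
        ⟨hlt.le, hp₁1.le⟩ ⟨hpb1.le, le_refl 1⟩ hp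
      rw [h1, hfix] at hc
      nlinarith [hc, hp₁1]
    · rcases le_or_gt p pbar with hpp | hpp
      · -- concave chord from 0 to p, with p₁ in between
        have hc := chord_lt_concave hconc (u := 0) (v := p) (y := p₁)
          ⟨le_refl 0, hpb0.le⟩ ⟨by linarith [hp.1], hpp⟩ ⟨hp₁0, hp.1⟩
        rw [h0, hfix] at hc
        nlinarith [hc, hp₁0]
      · -- w pbar ≤ pbar, then convex chord from pbar to 1
        have hwpbar : w pbar ≤ pbar := by
          rcases eq_or_lt_of_le hle with heq | hlt'
          · rw [← heq, hfix]
          · have hc := chord_lt_concave hconc (u := 0) (v := pbar) (y := p₁)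
              ⟨le_refl 0, hpb0.le⟩ ⟨hpb0.le, le_refl pbar⟩ ⟨hp₁0, hlt'⟩
            rw [h0, hfix] at hc
            nlinarith [hc, hp₁0]
        have hc := convex_lt_chord hconv (u := pbar) (v := 1) (y := p)
          ⟨le_refl pbar, hpb1.le⟩ ⟨hpb1.le, le_refl 1⟩ ⟨hpp, hp.2⟩
        rw [h1] at hc
        nlinarith [hc, mul_le_mul_of_nonneg_left hwpbar (by linarith [hp.2] : (0:ℝ) ≤ 1 - p), hpb1]
  refine ⟨p₁, ⟨hp₁0, hp₁1⟩, hfix, key_pos, key_neg, ?_⟩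
  intro q hq hqfix
  rcases lt_trichotomy q p₁ with h | h | h
  · have := key_pos q ⟨hq.1, h⟩
    rw [hqfix] at this
    exact absurd this (lt_irrefl q)
  · exact h
  · have := key_neg q ⟨h, hq.2⟩
    rw [hqfix] at this
    exact absurd this (lt_irrefl q)
end

section
/- Let w : [0,1] → [0,1] be continuous, strictly increasing, continuously differentiable, with w(0) = 0, w(1) = 1 and w'(1) > 1, and let p₁ ∈ (0,1) be the unique point with w(p₁) = p₁. Set t₁ = −log p₁. Then there exists a unique g₀ in L¹([0,t₁]) such that e^{−t} − w(e^{−t}) − ∫₀^t w(e^{−t+s}) g₀(s) ds = 0 for all t ∈ [0,t₁]. Moreover g₀(0) = w'(1) − 1 > 0. -/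
open Set MeasureTheory intervalIntegral

namespace Stmt6Aux

section Vop

variable (T : ℝ) (kd b : ℝ → ℝ)

noncomputable def clip (T t : ℝ) : ℝ := max 0 (min T t)

lemma continuous_clip (T : ℝ) : Continuous (clip T) :=
  continuous_const.max (continuous_const.min continuous_id)

noncomputable def Fop (g : ℝ → ℝ) : ℝ → ℝ :=
  fun x => b x - ∫ s in (0:ℝ)..x, kd (x - s) * g s

lemma continuous_Fop (hkd : Continuous kd) (hb : Continuous b)
    (g : ℝ → ℝ) (hg : Continuous g) : Continuous (Fop kd b g) := by
  refine hb.sub ?_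
  have : Continuous fun p : ℝ × ℝ => kd (p.1 - p.2) * g p.2 :=
    (hkd.comp (continuous_fst.sub continuous_snd)).mul (hg.comp continuous_snd)
  exact continuous_parametric_intervalIntegral_of_continuous (f := fun x s => kd (x - s) * g s)
    this continuous_id

end Vop

end Stmt6Aux

namespace Stmt6Aux

section V2

variable {T : ℝ} {kd b : ℝ → ℝ}

lemma clip_nonneg (T t : ℝ) : 0 ≤ clip T t := le_max_left _ _

lemma clip_le (hT : 0 ≤ T) (t : ℝ) : clip T t ≤ T := max_le hT (min_le_left _ _)

lemma clip_mem (hT : 0 ≤ T) (t : ℝ) : clip T t ∈ Icc 0 T := ⟨clip_nonneg T t, clip_le hT t⟩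

lemma clip_eq {t : ℝ} (ht : t ∈ Icc 0 T) : clip T t = t := by
  rcases ht with ⟨h0, h1⟩
  simp [clip, min_eq_right h1, max_eq_right h0]

noncomputable def Vop (hT : 0 ≤ T) (hkd : Continuous kd) (hb : Continuous b)
    (g : BoundedContinuousFunction ℝ ℝ) : BoundedContinuousFunction ℝ ℝ :=
  have h : ∃ C, ∀ x ∈ Icc (0:ℝ) T, ‖Fop kd b g x‖ ≤ C :=
    (isCompact_Icc (a := (0:ℝ)) (b := T)).exists_bound_of_continuousOn
      (continuous_Fop kd b hkd hb g g.continuous).continuousOn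
  BoundedContinuousFunction.ofNormedAddCommGroup ((Fop kd b g) ∘ clip T)
    ((continuous_Fop kd b hkd hb g g.continuous).comp (continuous_clip T))
    h.choose (fun t => h.choose_spec _ (clip_mem hT t))

lemma Vop_apply (hT : 0 ≤ T) (hkd : Continuous kd) (hb : Continuous b)
    (g : BoundedContinuousFunction ℝ ℝ) (t : ℝ) :
    Vop hT hkd hb g t
      = b (clip T t) - ∫ s in (0:ℝ)..(clip T t), kd (clip T t - s) * g s := rfl

end V2

end Stmt6Aux

namespace Stmt6Aux

section Est

variable {T : ℝ} {kd b : ℝ → ℝ} {M : ℝ}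

lemma iterate_est (hT : 0 ≤ T) (hkd : Continuous kd) (hb : Continuous b)
    (hM0 : 0 ≤ M) (hM : ∀ u ∈ Icc (0:ℝ) T, |kd u| ≤ M) :
    ∀ (n : ℕ) (g h : BoundedContinuousFunction ℝ ℝ) (t : ℝ),
      dist (((Vop hT hkd hb)^[n] g) t) (((Vop hT hkd hb)^[n] h) t)
        ≤ M ^ n * (clip T t) ^ n / n.factorial * dist g h := by
  intro n
  induction n with
  | zero =>
    intro g h t
    simpa using BoundedContinuousFunction.dist_coe_le_dist t
  | succ n ih =>
    intro g h t
    rw [Function.iterate_succ_apply', Function.iterate_succ_apply']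
    set G := (Vop hT hkd hb)^[n] g with hG
    set H := (Vop hT hkd hb)^[n] h with hH
    set c := clip T t with hc
    have hc0 : 0 ≤ c := clip_nonneg T t
    have hcT : c ≤ T := clip_le hT t
    have hintG : IntervalIntegrable (fun s => kd (c - s) * G s) volume 0 c :=
      (((hkd.comp (continuous_const.sub continuous_id)).mul G.continuous)).intervalIntegrable _ _
    have hintH : IntervalIntegrable (fun s => kd (c - s) * H s) volume 0 c :=
      (((hkd.comp (continuous_const.sub continuous_id)).mul H.continuous)).intervalIntegrable _ _
    have hdist : dist (Vop hT hkd hb G t) (Vop hT hkd hb H t)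
        = |∫ s in (0:ℝ)..c, (kd (c - s) * G s - kd (c - s) * H s)| := by
      rw [Real.dist_eq, Vop_apply, Vop_apply, ← hc, intervalIntegral.integral_sub hintG hintH,
        sub_sub_sub_cancel_left, abs_sub_comm]
    rw [hdist]
    have habs : |∫ s in (0:ℝ)..c, (kd (c - s) * G s - kd (c - s) * H s)|
        ≤ ∫ s in (0:ℝ)..c, |kd (c - s) * G s - kd (c - s) * H s| :=
      intervalIntegral.abs_integral_le_integral_abs hc0
    have hptwise : ∀ s ∈ Icc (0:ℝ) c, |kd (c - s) * G s - kd (c - s) * H s|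
        ≤ (M ^ (n+1) / n.factorial * dist g h) * s ^ n := by
      intro s hs
      have hs0 : (0:ℝ) ≤ s := hs.1
      have hsc : s ≤ c := hs.2
      have hcs : c - s ∈ Icc (0:ℝ) T := ⟨by linarith, by linarith⟩
      have h1 : |kd (c - s) * G s - kd (c - s) * H s| = |kd (c - s)| * |G s - H s| := by
        rw [← mul_sub, abs_mul]
      rw [h1]
      have h2 : |G s - H s| ≤ M ^ n * s ^ n / n.factorial * dist g h := by
        have := ih g h s
        rwa [Real.dist_eq, clip_eq ⟨hs0, le_trans hsc hcT⟩] at this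
      calc |kd (c - s)| * |G s - H s| ≤ M * (M ^ n * s ^ n / n.factorial * dist g h) := by
            apply mul_le_mul (hM _ hcs) h2 (abs_nonneg _)
            exact hM0
        _ = (M ^ (n+1) / n.factorial * dist g h) * s ^ n := by ring
    have hmono : (∫ s in (0:ℝ)..c, |kd (c - s) * G s - kd (c - s) * H s|)
        ≤ ∫ s in (0:ℝ)..c, (M ^ (n+1) / n.factorial * dist g h) * s ^ n := by
      apply intervalIntegral.integral_mono_on hc0 _ _ hptwise
      · exact ((hintG.sub hintH).abs)
      · exact (Continuous.intervalIntegrable (by continuity) _ _)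
    have hval : (∫ s in (0:ℝ)..c, (M ^ (n+1) / n.factorial * dist g h) * s ^ n)
        = M ^ (n+1) * c ^ (n+1) / (n+1).factorial * dist g h := by
      rw [intervalIntegral.integral_const_mul, integral_pow]
      rw [Nat.factorial_succ]
      push_cast
      field_simp
      ring
    calc _ ≤ _ := habs
      _ ≤ _ := hmono
      _ = _ := hval
end Est

end Stmt6Aux

namespace Stmt6Aux

section FP

variable {T : ℝ} {kd b : ℝ → ℝ}

lemma volterra_unique_fp (hT : 0 ≤ T) (hkd : Continuous kd) (hb : Continuous b) :
    ∃! x : BoundedContinuousFunction ℝ ℝ, Vop hT hkd hb x = x := by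
  obtain ⟨M0, hM0⟩ := (isCompact_Icc (a := (0:ℝ)) (b := T)).exists_bound_of_continuousOn
    hkd.continuousOn
  set M : ℝ := max M0 0 with hMdef
  have hMnn : 0 ≤ M := le_max_right _ _
  have hMb : ∀ u ∈ Icc (0:ℝ) T, |kd u| ≤ M := fun u hu =>
    le_trans (hM0 u hu) (le_max_left _ _)
  have key : ∀ (n : ℕ) (g h : BoundedContinuousFunction ℝ ℝ),
      dist ((Vop hT hkd hb)^[n] g) ((Vop hT hkd hb)^[n] h)
        ≤ (M * T) ^ n / n.factorial * dist g h := by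
    intro n g h
    apply BoundedContinuousFunction.dist_le_iff_of_nonempty.2
    intro t
    refine le_trans (iterate_est hT hkd hb hMnn hMb n g h t) ?_
    have h1 : M ^ n * (clip T t) ^ n ≤ (M * T) ^ n := by
      rw [mul_pow]
      exact mul_le_mul_of_nonneg_left
        (pow_le_pow_left₀ (clip_nonneg T t) (clip_le hT t) n) (pow_nonneg hMnn n)
    have : (0:ℝ) ≤ dist g h := dist_nonneg
    gcongr
  have hten := FloorSemiring.tendsto_pow_div_factorial_atTop (M * T)
  obtain ⟨n, hn⟩ := (hten.eventually (gt_mem_nhds (by norm_num : (0:ℝ) < 1))).exists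
  set r : ℝ := (M * T) ^ n / n.factorial with hrdef
  have hr0 : 0 ≤ r := div_nonneg (pow_nonneg (mul_nonneg hMnn hT) n) (Nat.cast_nonneg _)
  have hr1 : r < 1 := hn
  set K : NNReal := Real.toNNReal r with hK
  have hcontr : ContractingWith K ((Vop hT hkd hb)^[n]) := by
    constructor
    · rw [hK, ← Real.toNNReal_one]
      exact (Real.toNNReal_lt_toNNReal_iff (by norm_num)).2 hr1
    · apply LipschitzWith.of_dist_le_mul
      intro g h
      rw [hK, Real.coe_toNNReal _ hr0]
      exact key n g h
  refine ⟨hcontr.fixedPoint _, hcontr.isFixedPt_fixedPoint_iterate, ?_⟩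
  intro y hy
  exact hcontr.fixedPoint_unique (Function.IsFixedPt.iterate hy n)

end FP

end Stmt6Aux

namespace Stmt6Aux

lemma triangle_swap {t : ℝ} (ht : 0 ≤ t) (F h : ℝ → ℝ) (hF : Continuous F)
    (hh : IntegrableOn h (Ioc 0 t)) :
    ∫ s in (0:ℝ)..t, h s * (∫ u in s..t, F u)
      = ∫ u in (0:ℝ)..t, F u * (∫ s in (0:ℝ)..u, h s) := by
  set μ0 := volume.restrict (Ioc (0:ℝ) t) with hμ0
  set Q : ℝ × ℝ → ℝ := fun p => if p.1 ≤ p.2 then h p.1 * F p.2 else 0 with hQ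
  have hbase : Integrable (fun p : ℝ × ℝ => h p.1 * F p.2) (μ0.prod μ0) :=
    Integrable.mul_prod hh (hF.integrableOn_Ioc)
  have hset : MeasurableSet {p : ℝ × ℝ | p.1 ≤ p.2} :=
    measurableSet_le measurable_fst measurable_snd
  have hQeq : Q = Set.indicator {p : ℝ × ℝ | p.1 ≤ p.2}
      (fun p => h p.1 * F p.2) := by
    funext p
    rw [Set.indicator_apply]
    rfl
  have hQint : Integrable Q (μ0.prod μ0) := by
    rw [hQeq]; exact hbase.indicator hset
  have hswap : ∫ s, ∫ u, Q (s, u) ∂μ0 ∂μ0 = ∫ u, ∫ s, Q (s, u) ∂μ0 ∂μ0 :=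
    integral_integral_swap hQint
  have hL : ∫ s, ∫ u, Q (s, u) ∂μ0 ∂μ0 = ∫ s in (0:ℝ)..t, h s * (∫ u in s..t, F u) := by
    rw [intervalIntegral.integral_of_le ht]
    apply setIntegral_congr_fun measurableSet_Ioc
    intro s hs
    show (∫ (u : ℝ), Q (s, u) ∂μ0) = h s * ∫ (u : ℝ) in s..t, F u
    have h1 : (fun u => Q (s, u)) = Set.indicator (Ici s) (fun u => h s * F u) := by
      funext u
      rw [Set.indicator_apply]
      simp only [hQ, mem_Ici]
    rw [h1, setIntegral_indicator measurableSet_Ici]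
    have h2 : Ioc (0:ℝ) t ∩ Ici s = Icc s t := by
      ext u
      simp only [mem_inter_iff, mem_Ioc, mem_Ici, mem_Icc]
      constructor
      · rintro ⟨⟨_, hu2⟩, hu3⟩; exact ⟨hu3, hu2⟩
      · rintro ⟨hu1, hu2⟩; exact ⟨⟨lt_of_lt_of_le hs.1 hu1, hu2⟩, hu1⟩
    rw [h2, integral_Icc_eq_integral_Ioc, MeasureTheory.integral_const_mul,
      ← intervalIntegral.integral_of_le hs.2]
  have hR : ∫ u, ∫ s, Q (s, u) ∂μ0 ∂μ0 = ∫ u in (0:ℝ)..t, F u * (∫ s in (0:ℝ)..u, h s) := by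
    rw [intervalIntegral.integral_of_le ht]
    apply setIntegral_congr_fun measurableSet_Ioc
    intro u hu
    show (∫ (s : ℝ), Q (s, u) ∂μ0) = F u * ∫ (s : ℝ) in (0:ℝ)..u, h s
    have h1 : (fun s => Q (s, u)) = Set.indicator (Iic u) (fun s => h s * F u) := by
      funext s
      rw [Set.indicator_apply]
      simp only [hQ, mem_Iic]
    rw [h1, setIntegral_indicator measurableSet_Iic]
    have h2 : Ioc (0:ℝ) t ∩ Iic u = Ioc 0 u := by
      ext s
      simp only [mem_inter_iff, mem_Ioc, mem_Iic]
      constructor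
      · rintro ⟨⟨hs1, _⟩, hs3⟩; exact ⟨hs1, hs3⟩
      · rintro ⟨hs1, hs2⟩; exact ⟨⟨hs1, le_trans hs2 hu.2⟩, hs2⟩
    rw [h2, MeasureTheory.integral_mul_const, ← intervalIntegral.integral_of_le (le_of_lt hu.1), mul_comm]
  rw [← hL, ← hR, hswap]

end Stmt6Aux

namespace Stmt6Aux

lemma key_identity {T : ℝ} (kc kd h : ℝ → ℝ) (hkd : Continuous kd)
    (hk : ∀ x ∈ Icc (0:ℝ) T, kc x = 1 + ∫ v in (0:ℝ)..x, kd v)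
    (hh : IntegrableOn h (Ioc 0 T)) {t : ℝ} (ht : t ∈ Icc (0:ℝ) T) :
    ∫ s in (0:ℝ)..t, kc (t - s) * h s
      = (∫ s in (0:ℝ)..t, h s)
        + ∫ s in (0:ℝ)..t, kd (t - s) * (∫ u in (0:ℝ)..s, h u) := by
  have ht0 : (0:ℝ) ≤ t := ht.1
  have hh' : IntegrableOn h (Ioc 0 t) := hh.mono_set (Ioc_subset_Ioc_right ht.2)
  have hhii : IntervalIntegrable h volume 0 t :=
    (intervalIntegrable_iff_integrableOn_Ioc_of_le ht0).2 hh'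
  set P : ℝ → ℝ := fun s => ∫ u in s..t, kd (t - u) with hPdef
  have hPalt : ∀ s, P s = ∫ v in (0:ℝ)..(t - s), kd v := by
    intro s
    show (∫ u in s..t, kd (t - u)) = ∫ v in (0:ℝ)..(t - s), kd v
    rw [intervalIntegral.integral_comp_sub_left kd t, sub_self]
  have hPcont : Continuous P := by
    have h1 : Continuous fun x : ℝ => ∫ v in (0:ℝ)..x, kd v :=
      intervalIntegral.continuous_primitive (fun a b => hkd.intervalIntegrable a b) 0
    have : Continuous fun s : ℝ => ∫ v in (0:ℝ)..(t - s), kd v :=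
      h1.comp (continuous_const.sub continuous_id)
    simpa [← hPalt] using this
  have hcongr : EqOn (fun s => kc (t - s) * h s) (fun s => h s + h s * P s)
      (uIcc (0:ℝ) t) := by
    intro s hs
    rw [uIcc_of_le ht0] at hs
    have hts : t - s ∈ Icc (0:ℝ) T := ⟨by linarith [hs.2], by linarith [hs.1, ht.2]⟩
    simp only
    rw [hk _ hts, ← hPalt s]
    ring
  rw [intervalIntegral.integral_congr hcongr]
  have hint2 : IntervalIntegrable (fun s => h s * P s) volume 0 t :=
    hhii.mul_continuousOn hPcont.continuousOn
  rw [intervalIntegral.integral_add hhii hint2]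
  congr 1
  have := triangle_swap ht0 (fun u => kd (t - u)) h
    (hkd.comp (continuous_const.sub continuous_id)) hh'
  exact this

end Stmt6Aux

namespace Stmt6Aux

lemma ae_zero_of_primitive_zero {T : ℝ} (hT : 0 ≤ T) (h : ℝ → ℝ)
    (hh : IntegrableOn h (Ioc 0 T))
    (hz : ∀ t ∈ Icc (0:ℝ) T, ∫ s in Ioc (0:ℝ) t, h s = 0) :
    h =ᵐ[volume.restrict (Ioc (0:ℝ) T)] 0 := by
  set μ := volume.restrict (Ioc (0:ℝ) T) with hμ
  have hfin : IsFiniteMeasure μ := by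
    constructor
    rw [hμ, Measure.restrict_apply_univ]
    exact measure_Ioc_lt_top
  have hint : Integrable h μ := hh
  -- integral over any sub-Ioc of [0, T] (w.r.t. volume) vanishes
  have hIoc : ∀ a b : ℝ, 0 ≤ a → a ≤ b → b ≤ T → ∫ s in Ioc a b, h s = 0 := by
    intro a b ha hab hbT
    have hu : Ioc (0:ℝ) a ∪ Ioc a b = Ioc 0 b := Ioc_union_Ioc_eq_Ioc ha hab
    have hd : Disjoint (Ioc (0:ℝ) a) (Ioc a b) := by
      apply Set.disjoint_left.2
      rintro x ⟨_, hx2⟩ ⟨hx3, _⟩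
      exact absurd hx3 (not_lt.2 hx2)
    have hi1 : IntegrableOn h (Ioc 0 a) := hh.mono_set (Ioc_subset_Ioc_right (le_trans hab hbT))
    have hi2 : IntegrableOn h (Ioc a b) :=
      hh.mono_set (Ioc_subset_Ioc ha hbT)
    have := setIntegral_union hd measurableSet_Ioc hi1 hi2
    rw [hu] at this
    have h1 : ∫ s in Ioc (0:ℝ) b, h s = 0 := hz b ⟨le_trans ha hab, hbT⟩
    have h2 : ∫ s in Ioc (0:ℝ) a, h s = 0 := hz a ⟨ha, le_trans hab hbT⟩
    rw [h1, h2] at this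
    linarith
  have hall : ∀ A : Set ℝ, MeasurableSet A → ∫ x in A, h x ∂μ = 0 := by
    have h_eq : (inferInstance : MeasurableSpace ℝ)
        = MeasurableSpace.generateFrom { S : Set ℝ | ∃ l u, l < u ∧ Ioc l u = S } := by
      rw [BorelSpace.measurable_eq (α := ℝ)]
      exact borel_eq_generateFrom_Ioc ℝ
    intro A hA
    refine MeasurableSpace.induction_on_inter
      (C := fun A _ => ∫ x in A, h x ∂μ = 0) h_eq (isPiSystem_Ioc (id : ℝ → ℝ) id)
      (by simp) ?_ ?_ ?_ A hA
    · intro A hA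
      obtain ⟨l, u, hlu, rfl⟩ := hA
      rw [hμ, Measure.restrict_restrict measurableSet_Ioc, Ioc_inter_Ioc]
      rcases le_or_gt (u ⊓ T) (l ⊔ 0) with hle | hlt
      · rw [Ioc_eq_empty (not_lt.2 hle)]
        simp
      · exact hIoc _ _ (le_sup_right) hlt.le (inf_le_right)
    · intro A hA ihA
      have htot : ∫ x, h x ∂μ = 0 := hz T ⟨hT, le_rfl⟩
      have := integral_add_compl hA hint
      rw [ihA, htot] at this
      linarith
    · intro f hdisj hmeas ih
      rw [integral_iUnion hmeas hdisj hint.integrableOn]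
      simp [ih]
  exact ae_eq_zero_of_forall_setIntegral_eq_of_sigmaFinite
    (fun s _ _ => hint.integrableOn) (fun s hs _ => hall s hs)

end Stmt6Aux

namespace Stmt6Aux

lemma triangle_swap2 {t : ℝ} (ht : 0 ≤ t) (F : ℝ × ℝ → ℝ) (h : ℝ → ℝ)
    (hF : Continuous F) (hh : IntegrableOn h (Ioc 0 t)) :
    ∫ s in (0:ℝ)..t, (∫ u in (0:ℝ)..s, F (s, u) * h u)
      = ∫ u in (0:ℝ)..t, (∫ s in u..t, F (s, u)) * h u := by
  set μ0 := volume.restrict (Ioc (0:ℝ) t) with hμ0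
  set Q : ℝ × ℝ → ℝ := fun p => if p.2 ≤ p.1 then F p * h p.2 else 0 with hQ
  obtain ⟨C, hC⟩ := (IsCompact.prod (isCompact_Icc (a := (0:ℝ)) (b := t))
    (isCompact_Icc (a := (0:ℝ)) (b := t))).exists_bound_of_continuousOn hF.continuousOn
  have hsnd : Integrable (fun p : ℝ × ℝ => h p.2) (μ0.prod μ0) := by
    have := Integrable.mul_prod (integrable_const (1:ℝ) (μ := μ0)) hh
    simpa using this
  have hbase : Integrable (fun p : ℝ × ℝ => F p * h p.2) (μ0.prod μ0) := by
    apply Integrable.mono' (hsnd.abs.const_mul C)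
      (hF.aestronglyMeasurable.mul hsnd.aestronglyMeasurable)
    have hmemprod : ∀ᵐ p ∂(μ0.prod μ0), p ∈ Ioc (0:ℝ) t ×ˢ Ioc (0:ℝ) t := by
      rw [hμ0, Measure.prod_restrict]
      exact ae_restrict_mem (measurableSet_Ioc.prod measurableSet_Ioc)
    filter_upwards [hmemprod] with p hp
    show ‖F p * h p.2‖ ≤ C * |h p.2|
    rw [norm_mul]
    have h1 : ‖F p‖ ≤ C := hC p ⟨Ioc_subset_Icc_self hp.1, Ioc_subset_Icc_self hp.2⟩
    calc ‖F p‖ * ‖h p.2‖ ≤ C * ‖h p.2‖ :=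
          mul_le_mul_of_nonneg_right h1 (norm_nonneg _)
      _ = C * |h p.2| := by rw [Real.norm_eq_abs]
  have hset : MeasurableSet {p : ℝ × ℝ | p.2 ≤ p.1} :=
    measurableSet_le measurable_snd measurable_fst
  have hQeq : Q = Set.indicator {p : ℝ × ℝ | p.2 ≤ p.1} (fun p => F p * h p.2) := by
    funext p
    rw [Set.indicator_apply]
    rfl
  have hQint : Integrable Q (μ0.prod μ0) := by
    rw [hQeq]; exact hbase.indicator hset
  have hswap : ∫ s, ∫ u, Q (s, u) ∂μ0 ∂μ0 = ∫ u, ∫ s, Q (s, u) ∂μ0 ∂μ0 :=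
    integral_integral_swap hQint
  have hL : ∫ s, ∫ u, Q (s, u) ∂μ0 ∂μ0
      = ∫ s in (0:ℝ)..t, (∫ u in (0:ℝ)..s, F (s, u) * h u) := by
    rw [intervalIntegral.integral_of_le ht]
    apply setIntegral_congr_fun measurableSet_Ioc
    intro s hs
    show (∫ (u : ℝ), Q (s, u) ∂μ0) = ∫ u in (0:ℝ)..s, F (s, u) * h u
    have h1 : (fun u => Q (s, u)) = Set.indicator (Iic s) (fun u => F (s, u) * h u) := by
      funext u
      rw [Set.indicator_apply]
      simp only [hQ, mem_Iic]
    rw [h1, setIntegral_indicator measurableSet_Iic]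
    have h2 : Ioc (0:ℝ) t ∩ Iic s = Ioc 0 s := by
      ext u
      simp only [mem_inter_iff, mem_Ioc, mem_Iic]
      exact ⟨fun ⟨⟨hu1, _⟩, hu3⟩ => ⟨hu1, hu3⟩,
        fun ⟨hu1, hu2⟩ => ⟨⟨hu1, le_trans hu2 hs.2⟩, hu2⟩⟩
    rw [h2, ← intervalIntegral.integral_of_le (le_of_lt hs.1)]
  have hR : ∫ u, ∫ s, Q (s, u) ∂μ0 ∂μ0
      = ∫ u in (0:ℝ)..t, (∫ s in u..t, F (s, u)) * h u := by
    rw [intervalIntegral.integral_of_le ht]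
    apply setIntegral_congr_fun measurableSet_Ioc
    intro u hu
    show (∫ (s : ℝ), Q (s, u) ∂μ0) = (∫ s in u..t, F (s, u)) * h u
    have h1 : (fun s => Q (s, u)) = Set.indicator (Ici u) (fun s => F (s, u) * h u) := by
      funext s
      rw [Set.indicator_apply]
      simp only [hQ, mem_Ici]
    rw [h1, setIntegral_indicator measurableSet_Ici]
    have h2 : Ioc (0:ℝ) t ∩ Ici u = Icc u t := by
      ext s
      simp only [mem_inter_iff, mem_Ioc, mem_Ici, mem_Icc]
      exact ⟨fun ⟨⟨_, hs2⟩, hs3⟩ => ⟨hs3, hs2⟩,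
        fun ⟨hs1, hs2⟩ => ⟨⟨lt_of_lt_of_le hu.1 hs1, hs2⟩, hs1⟩⟩
    rw [h2, integral_Icc_eq_integral_Ioc, MeasureTheory.integral_mul_const,
      ← intervalIntegral.integral_of_le hu.2]
  rw [← hL, ← hR, hswap]

noncomputable def mkBCF {T : ℝ} (hT : 0 ≤ T) (f : ℝ → ℝ)
    (hf : ContinuousOn f (Icc (0:ℝ) T)) : BoundedContinuousFunction ℝ ℝ :=
  have h : ∃ C, ∀ x ∈ Icc (0:ℝ) T, ‖f x‖ ≤ C :=
    (isCompact_Icc (a := (0:ℝ)) (b := T)).exists_bound_of_continuousOn hf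
  BoundedContinuousFunction.ofNormedAddCommGroup (f ∘ clip T)
    (hf.comp_continuous (continuous_clip T) (clip_mem hT))
    h.choose (fun t => h.choose_spec _ (clip_mem hT t))

lemma mkBCF_apply {T : ℝ} (hT : 0 ≤ T) (f : ℝ → ℝ)
    (hf : ContinuousOn f (Icc (0:ℝ) T)) (t : ℝ) : mkBCF hT f hf t = f (clip T t) := rfl

end Stmt6Aux


/-- Let `w` be continuous, strictly increasing, continuously
differentiable with `w 0 = 0`, `w 1 = 1` and one-sided derivative `w'(1) = d₁ > 1`,
and let `p₁ ∈ (0,1)` be the unique interior fixed point of `w`; set `t₁ = −log p₁`.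
Then there is a unique (up to a.e. equality) integrable `g₀` on `[0,t₁]` solving
`e^{−t} − w(e^{−t}) − ∫₀^t w(e^{−t+s}) g₀(s) ds = 0` for all `t ∈ [0,t₁]`;
moreover (for the continuous representative) `g₀ 0 = w'(1) − 1 > 0`. -/
theorem stmt6
    (w : ℝ → ℝ)
    (hcont : ContinuousOn w (Icc (0:ℝ) 1))
    (hmono : StrictMonoOn w (Icc (0:ℝ) 1))
    (hcd : ContDiffOn ℝ 1 w (Icc (0:ℝ) 1))
    (h0 : w 0 = 0) (h1 : w 1 = 1)
    (d₁ : ℝ) (hder1 : HasDerivWithinAt w d₁ (Icc (0:ℝ) 1) 1) (hd₁ : 1 < d₁)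
    (p₁ : ℝ) (hp₁ : p₁ ∈ Ioo (0:ℝ) 1) (hfix : w p₁ = p₁)
    (huniq : ∀ q ∈ Ioo (0:ℝ) 1, w q = q → q = p₁) :
    ∃ g₀ : ℝ → ℝ, IntegrableOn g₀ (Icc (0:ℝ) (-Real.log p₁)) ∧
      (∀ t ∈ Icc (0:ℝ) (-Real.log p₁),
        Real.exp (-t) - w (Real.exp (-t))
          - ∫ s in (0:ℝ)..t, w (Real.exp (-t + s)) * g₀ s = 0) ∧
      g₀ 0 = d₁ - 1 ∧ 0 < g₀ 0 ∧
      ∀ g : ℝ → ℝ, IntegrableOn g (Icc (0:ℝ) (-Real.log p₁)) →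
        (∀ t ∈ Icc (0:ℝ) (-Real.log p₁),
          Real.exp (-t) - w (Real.exp (-t))
            - ∫ s in (0:ℝ)..t, w (Real.exp (-t + s)) * g s = 0) →
        g =ᵐ[volume.restrict (Icc (0:ℝ) (-Real.log p₁))] g₀ := by
  classical
  set T : ℝ := -Real.log p₁ with hTdef
  have hT : 0 < T := by
    have := Real.log_neg hp₁.1 hp₁.2
    rw [hTdef]; linarith
  set W' : ℝ → ℝ := derivWithin w (Icc (0:ℝ) 1) with hW'def
  set W'c : ℝ → ℝ := fun y => W' (Stmt6Aux.clip 1 y) with hW'cdef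
  set wc : ℝ → ℝ := fun y => w (Stmt6Aux.clip 1 y) with hwcdef
  set kd : ℝ → ℝ := fun u => -(Real.exp (-u) * W'c (Real.exp (-u))) with hkddef
  set kc : ℝ → ℝ := fun u => wc (Real.exp (-u)) with hkcdef
  set fc : ℝ → ℝ := fun u => Real.exp (-u) * (W'c (Real.exp (-u)) - 1) with hfcdef
  set phc : ℝ → ℝ := fun u => Real.exp (-u) - kc u with hphdef
  have hclip1 : ∀ y : ℝ, Stmt6Aux.clip 1 y ∈ Icc (0:ℝ) 1 := Stmt6Aux.clip_mem zero_le_one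
  have hWcont : ContinuousOn W' (Icc (0:ℝ) 1) :=
    hcd.continuousOn_derivWithin (uniqueDiffOn_Icc one_pos) le_rfl
  have hW'c_cont : Continuous W'c :=
    hWcont.comp_continuous (Stmt6Aux.continuous_clip 1) hclip1
  have hwc_cont : Continuous wc :=
    hcont.comp_continuous (Stmt6Aux.continuous_clip 1) hclip1
  have hexpc : Continuous (fun u : ℝ => Real.exp (-u)) :=
    Real.continuous_exp.comp continuous_neg
  have hkd_cont : Continuous kd := (hexpc.mul (hW'c_cont.comp hexpc)).neg
  have hkc_cont : Continuous kc := hwc_cont.comp hexpc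
  have hfc_cont : Continuous fc := hexpc.mul ((hW'c_cont.comp hexpc).sub continuous_const)
  have hphc_cont : Continuous phc := hexpc.sub hkc_cont
  have hclip_id : ∀ y ∈ Icc (0:ℝ) 1, Stmt6Aux.clip 1 y = y := fun y hy => Stmt6Aux.clip_eq hy
  have hexp_mem : ∀ t : ℝ, 0 ≤ t → Real.exp (-t) ∈ Icc (0:ℝ) 1 := by
    intro t ht
    refine ⟨(Real.exp_pos _).le, ?_⟩
    rw [← Real.exp_zero]
    exact Real.exp_le_exp.2 (by linarith)
  have hwc_eq : ∀ t : ℝ, 0 ≤ t → wc (Real.exp (-t)) = w (Real.exp (-t)) := by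
    intro t ht
    rw [hwcdef]
    simp only
    rw [hclip_id _ (hexp_mem t ht)]
  have hkc0 : kc 0 = 1 := by
    rw [hkcdef]
    simp only
    rw [hwc_eq 0 le_rfl]
    simp [h1]
  have hph0 : phc 0 = 0 := by
    rw [hphdef]
    simp only
    rw [hkc0]
    simp
  have hW'c1 : W'c 1 = d₁ := by
    rw [hW'cdef]
    simp only
    rw [hclip_id 1 (right_mem_Icc.2 zero_le_one), hW'def]
    exact hder1.derivWithin ((uniqueDiffOn_Icc one_pos) 1 (right_mem_Icc.2 zero_le_one))
  have hfc0 : fc 0 = d₁ - 1 := by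
    rw [hfcdef]
    simp only
    rw [neg_zero, Real.exp_zero, hW'c1]
    ring
  have hdiff : DifferentiableOn ℝ w (Icc (0:ℝ) 1) := hcd.differentiableOn one_ne_zero
  have hwc_deriv : ∀ y ∈ Ioo (0:ℝ) 1, HasDerivAt wc (W'c y) y := by
    intro y hy
    have hnhds : Icc (0:ℝ) 1 ∈ nhds y := Icc_mem_nhds hy.1 hy.2
    have hdy : DifferentiableAt ℝ w y :=
      (hdiff y (Ioo_subset_Icc_self hy)).differentiableAt hnhds
    have hW : W'c y = deriv w y := by
      rw [hW'cdef]
      simp only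
      rw [hclip_id _ (Ioo_subset_Icc_self hy), hW'def, derivWithin_of_mem_nhds hnhds]
    rw [hW]
    apply hdy.hasDerivAt.congr_of_eventuallyEq
    filter_upwards [hnhds] with z hz
    rw [hwcdef]
    simp only
    rw [hclip_id _ hz]
  have hexp_deriv : ∀ v : ℝ, HasDerivAt (fun u : ℝ => Real.exp (-u)) (-Real.exp (-v)) v := by
    intro v
    have := (Real.hasDerivAt_exp (-v)).comp v ((hasDerivAt_id v).neg)
    simpa [Function.comp_def] using this
  have hkc_deriv : ∀ v : ℝ, 0 < v → HasDerivAt kc (kd v) v := by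
    intro v hv
    have hx : Real.exp (-v) ∈ Ioo (0:ℝ) 1 := by
      refine ⟨Real.exp_pos _, ?_⟩
      rw [← Real.exp_zero]
      exact Real.exp_lt_exp.2 (by linarith)
    have := (hwc_deriv _ hx).comp v (hexp_deriv v)
    refine this.congr_deriv ?_
    rw [hkddef]
    simp only
    ring
  have hphc_deriv : ∀ v : ℝ, 0 < v → HasDerivAt phc (fc v) v := by
    intro v hv
    have := (hexp_deriv v).sub (hkc_deriv v hv)
    refine this.congr_deriv ?_
    rw [hfcdef, hkddef]
    simp only
    ring
  have hkcK : ∀ z : ℝ, 0 ≤ z → kc z = 1 + ∫ v in (0:ℝ)..z, kd v := by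
    intro z hz
    have := intervalIntegral.integral_eq_sub_of_hasDeriv_right_of_le hz
      hkc_cont.continuousOn (fun v hv => (hkc_deriv v hv.1).hasDerivWithinAt)
      (hkd_cont.intervalIntegrable _ _)
    rw [this, hkc0]
    ring
  have hphF : ∀ t : ℝ, 0 ≤ t → phc t = ∫ s in (0:ℝ)..t, fc s := by
    intro t ht
    have := intervalIntegral.integral_eq_sub_of_hasDeriv_right_of_le ht
      hphc_cont.continuousOn (fun v hv => (hphc_deriv v hv.1).hasDerivWithinAt)
      (hfc_cont.intervalIntegrable _ _)
    rw [this, hph0]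
    ring
  obtain ⟨x, hxfix, hxuniq⟩ := Stmt6Aux.volterra_unique_fp hT.le hkd_cont hfc_cont
  set g₀ : ℝ → ℝ := fun t => x t with hg₀def
  have hg₀cont : Continuous g₀ := x.continuous
  have hg₀ii : ∀ a b : ℝ, IntervalIntegrable g₀ volume a b := fun a b =>
    hg₀cont.intervalIntegrable a b
  have heqn2 : ∀ t ∈ Icc (0:ℝ) T, g₀ t = fc t - ∫ s in (0:ℝ)..t, kd (t - s) * g₀ s := by
    intro t ht
    have h1' := congrArg (fun f : BoundedContinuousFunction ℝ ℝ => f t) hxfix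
    rw [Stmt6Aux.Vop_apply, Stmt6Aux.clip_eq ht] at h1'
    exact h1'.symm
  have hg₀0 : g₀ 0 = d₁ - 1 := by
    have := heqn2 0 ⟨le_rfl, hT.le⟩
    rw [intervalIntegral.integral_same] at this
    rw [this, hfc0]
    ring
  have hker : ∀ t ∈ Icc (0:ℝ) T, ∀ gg : ℝ → ℝ,
      (∫ s in (0:ℝ)..t, w (Real.exp (-t + s)) * gg s)
        = ∫ s in (0:ℝ)..t, kc (t - s) * gg s := by
    intro t ht gg
    apply intervalIntegral.integral_congr
    intro s hs
    rw [uIcc_of_le ht.1] at hs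
    have h2 : kc (t - s) = w (Real.exp (-t + s)) := by
      rw [hkcdef]
      simp only
      have h3 : -(t - s) = -t + s := by ring
      rw [h3, ← h3, hwc_eq _ (by linarith [hs.2]), h3]
    simp only
    rw [h2]
  have hph_eq : ∀ t : ℝ, 0 ≤ t →
      Real.exp (-t) - w (Real.exp (-t)) = phc t := by
    intro t ht
    rw [hphdef]
    simp only
    rw [hkcdef]
    simp only
    rw [hwc_eq t ht]
  have hmain : ∀ t ∈ Icc (0:ℝ) T, (∫ s in (0:ℝ)..t, kc (t - s) * g₀ s) = phc t := by
    intro t ht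
    have ht0 : (0:ℝ) ≤ t := ht.1
    have hJg : EqOn (fun s => ∫ u in (0:ℝ)..s, kd (s - u) * g₀ u)
        (fun s => fc s - g₀ s) (uIcc (0:ℝ) t) := by
      intro s hs
      rw [uIcc_of_le ht0] at hs
      have := heqn2 s ⟨hs.1, le_trans hs.2 ht.2⟩
      simp only
      linarith
    have hI1 : (∫ s in (0:ℝ)..t, ∫ u in (0:ℝ)..s, kd (s - u) * g₀ u)
        = ∫ s in (0:ℝ)..t, (fc s - g₀ s) := intervalIntegral.integral_congr hJg
    have hI2 : (∫ s in (0:ℝ)..t, (fc s - g₀ s))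
        = phc t - ∫ s in (0:ℝ)..t, g₀ s := by
      rw [intervalIntegral.integral_sub (hfc_cont.intervalIntegrable _ _) (hg₀ii _ _),
        ← hphF t ht0]
    have hswap := Stmt6Aux.triangle_swap2 ht0 (fun p : ℝ × ℝ => kd (p.1 - p.2)) g₀
      (hkd_cont.comp (continuous_fst.sub continuous_snd))
      (hg₀cont.integrableOn_Ioc)
    have hinner : EqOn (fun u => (∫ s in u..t, kd (s - u)) * g₀ u)
        (fun u => kc (t - u) * g₀ u - g₀ u) (uIcc (0:ℝ) t) := by
      intro u hu
      rw [uIcc_of_le ht0] at hu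
      have h4 : (∫ s in u..t, kd (s - u)) = kc (t - u) - 1 := by
        rw [intervalIntegral.integral_comp_sub_right kd u, sub_self,
          hkcK (t - u) (by linarith [hu.2])]
        ring
      simp only
      rw [h4]
      ring
    have hI3 : (∫ u in (0:ℝ)..t, (∫ s in u..t, kd (s - u)) * g₀ u)
        = (∫ u in (0:ℝ)..t, kc (t - u) * g₀ u) - ∫ u in (0:ℝ)..t, g₀ u := by
      rw [intervalIntegral.integral_congr hinner]
      apply intervalIntegral.integral_sub _ (hg₀ii _ _)
      exact ((hkc_cont.comp (continuous_const.sub continuous_id)).mul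
        hg₀cont).intervalIntegrable _ _
    have hchain : phc t - (∫ s in (0:ℝ)..t, g₀ s)
        = (∫ u in (0:ℝ)..t, kc (t - u) * g₀ u) - ∫ u in (0:ℝ)..t, g₀ u := by
      rw [← hI3, ← hswap, hI1, hI2]
    linarith [hchain]
  have hsol : ∀ t ∈ Icc (0:ℝ) T,
      Real.exp (-t) - w (Real.exp (-t))
        - ∫ s in (0:ℝ)..t, w (Real.exp (-t + s)) * g₀ s = 0 := by
    intro t ht
    rw [hker t ht g₀, hmain t ht, hph_eq t ht.1, sub_self]
  refine ⟨g₀, hg₀cont.integrableOn_Icc, hsol, hg₀0, by rw [hg₀0]; linarith, ?_⟩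
  intro g hgint hgsol
  have hgIoc : IntegrableOn g (Ioc 0 T) := hgint.mono_set Ioc_subset_Icc_self
  have hg₀Ioc : IntegrableOn g₀ (Ioc 0 T) := hg₀cont.integrableOn_Ioc
  have hkcKmem : ∀ z ∈ Icc (0:ℝ) T, kc z = 1 + ∫ v in (0:ℝ)..z, kd v := fun z hz =>
    hkcK z hz.1
  have hkey_g : ∀ t ∈ Icc (0:ℝ) T,
      (∫ s in (0:ℝ)..t, g s)
        + (∫ s in (0:ℝ)..t, kd (t - s) * ∫ u in (0:ℝ)..s, g u) = phc t := by
    intro t ht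
    have h5 := Stmt6Aux.key_identity kc kd g hkd_cont hkcKmem hgIoc ht
    have h6 : (∫ s in (0:ℝ)..t, kc (t - s) * g s) = phc t := by
      have h7 := hgsol t ht
      rw [hker t ht g, hph_eq t ht.1] at h7
      linarith
    rw [← h5]
    exact h6
  have hkey_g₀ : ∀ t ∈ Icc (0:ℝ) T,
      (∫ s in (0:ℝ)..t, g₀ s)
        + (∫ s in (0:ℝ)..t, kd (t - s) * ∫ u in (0:ℝ)..s, g₀ u) = phc t := by
    intro t ht
    have h5 := Stmt6Aux.key_identity kc kd g₀ hkd_cont hkcKmem hg₀Ioc ht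
    rw [← h5]
    exact hmain t ht
  set D : ℝ → ℝ := fun u => ∫ s in (0:ℝ)..u, (g s - g₀ s) with hDdef
  have hgii : ∀ u ∈ Icc (0:ℝ) T, IntervalIntegrable g volume 0 u := by
    intro u hu
    exact (intervalIntegrable_iff_integrableOn_Ioc_of_le hu.1).2
      (hgIoc.mono_set (Ioc_subset_Ioc_right hu.2))
  have hDsplit : ∀ u ∈ Icc (0:ℝ) T,
      D u = (∫ s in (0:ℝ)..u, g s) - ∫ s in (0:ℝ)..u, g₀ s := by
    intro u hu
    rw [hDdef]
    simp only
    exact intervalIntegral.integral_sub (hgii u hu) (hg₀ii _ _)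
  have hGg_cont : ContinuousOn (fun u => ∫ s in (0:ℝ)..u, g s) (Icc (0:ℝ) T) := by
    have hint : IntegrableOn g (uIcc (0:ℝ) T) := by
      rw [uIcc_of_le hT.le]; exact hgint
    have := intervalIntegral.continuousOn_primitive_interval hint
    rwa [uIcc_of_le hT.le] at this
  have hG₀_cont : Continuous (fun u => ∫ s in (0:ℝ)..u, g₀ s) :=
    intervalIntegral.continuous_primitive (fun a b => hg₀ii a b) 0
  have hDcont : ContinuousOn D (Icc (0:ℝ) T) := by
    rw [hDdef]
    have hint : IntegrableOn (fun s => g s - g₀ s) (uIcc (0:ℝ) T) := by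
      rw [uIcc_of_le hT.le]; exact hgint.sub hg₀cont.integrableOn_Icc
    have := intervalIntegral.continuousOn_primitive_interval hint
    rwa [uIcc_of_le hT.le] at this
  have hDeq : ∀ t ∈ Icc (0:ℝ) T, D t = - ∫ s in (0:ℝ)..t, kd (t - s) * D s := by
    intro t ht
    have hint1 : IntervalIntegrable (fun s => kd (t - s) * ∫ u in (0:ℝ)..s, g u)
        volume 0 t := by
      apply ContinuousOn.intervalIntegrable
      apply ContinuousOn.mul
      · exact (hkd_cont.comp (continuous_const.sub continuous_id)).continuousOn
      · apply hGg_cont.mono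
        rw [uIcc_of_le ht.1]
        exact Icc_subset_Icc_right ht.2
    have hint2 : IntervalIntegrable (fun s => kd (t - s) * ∫ u in (0:ℝ)..s, g₀ u)
        volume 0 t :=
      (((hkd_cont.comp (continuous_const.sub continuous_id)).mul
        hG₀_cont)).intervalIntegrable _ _
    have hsub : (∫ s in (0:ℝ)..t, kd (t - s) * ∫ u in (0:ℝ)..s, g u)
        - (∫ s in (0:ℝ)..t, kd (t - s) * ∫ u in (0:ℝ)..s, g₀ u)
        = ∫ s in (0:ℝ)..t, kd (t - s) * D s := by
      rw [← intervalIntegral.integral_sub hint1 hint2]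
      apply intervalIntegral.integral_congr
      intro s hs
      rw [uIcc_of_le ht.1] at hs
      have hsIcc : s ∈ Icc (0:ℝ) T := ⟨hs.1, le_trans hs.2 ht.2⟩
      simp only
      rw [hDsplit s hsIcc]
      ring
    have h8 := hkey_g t ht
    have h9 := hkey_g₀ t ht
    have h10 := hDsplit t ht
    linarith [hsub, h8, h9, h10]
  obtain ⟨z, hzfix, hzuniq⟩ := Stmt6Aux.volterra_unique_fp hT.le hkd_cont
    (continuous_const : Continuous (fun _ : ℝ => (0:ℝ)))
  set Dh := Stmt6Aux.mkBCF hT.le D hDcont with hDhdef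
  have hDh_fix : Stmt6Aux.Vop hT.le hkd_cont
      (continuous_const : Continuous (fun _ : ℝ => (0:ℝ))) Dh = Dh := by
    ext t
    rw [Stmt6Aux.Vop_apply]
    have ht' : Stmt6Aux.clip T t ∈ Icc (0:ℝ) T := Stmt6Aux.clip_mem hT.le t
    have hcongr : EqOn (fun s => kd (Stmt6Aux.clip T t - s) * Dh s)
        (fun s => kd (Stmt6Aux.clip T t - s) * D s) (uIcc (0:ℝ) (Stmt6Aux.clip T t)) := by
      intro s hs
      rw [uIcc_of_le ht'.1] at hs
      simp only
      rw [hDhdef, Stmt6Aux.mkBCF_apply, Stmt6Aux.clip_eq ⟨hs.1, le_trans hs.2 ht'.2⟩]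
    rw [intervalIntegral.integral_congr hcongr]
    have hDh_val : Dh t = D (Stmt6Aux.clip T t) := rfl
    rw [hDh_val, hDeq _ ht']
    ring
  have h0fix : Stmt6Aux.Vop hT.le hkd_cont
      (continuous_const : Continuous (fun _ : ℝ => (0:ℝ)))
      (0 : BoundedContinuousFunction ℝ ℝ) = 0 := by
    ext t
    rw [Stmt6Aux.Vop_apply]
    simp
  have hD0 : Dh = 0 := (hzuniq _ hDh_fix).trans (hzuniq _ h0fix).symm
  have hprim : ∀ u ∈ Icc (0:ℝ) T, ∫ s in Ioc (0:ℝ) u, (g s - g₀ s) = 0 := by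
    intro u hu
    have h11 := congrArg (fun f : BoundedContinuousFunction ℝ ℝ => f u) hD0
    simp only [BoundedContinuousFunction.coe_zero, Pi.zero_apply] at h11
    have h12 : Dh u = D u := by
      rw [hDhdef, Stmt6Aux.mkBCF_apply, Stmt6Aux.clip_eq hu]
    rw [h12] at h11
    rw [hDdef] at h11
    simp only at h11
    rwa [intervalIntegral.integral_of_le hu.1] at h11
  have hae := Stmt6Aux.ae_zero_of_primitive_zero hT.le (fun s => g s - g₀ s)
    (hgIoc.sub hg₀Ioc) hprim
  have hres : volume.restrict (Icc (0:ℝ) T) = volume.restrict (Ioc (0:ℝ) T) :=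
    (Measure.restrict_congr_set Ioc_ae_eq_Icc).symm
  rw [hres]
  filter_upwards [hae] with s hs
  have hz2 : g s - g₀ s = 0 := hs
  linarith
end

section
/- Let w : [0,1] → [0,1] be increasing with w(0)=0, w(1)=1, let θ > 0, λ > 0, and let γ : [0,∞) → [0,∞) be an integrable nonnegative function such that e^{−t} − w(e^{−t}) − ∫₀^t w(e^{−t+s}) γ(s) ds ≤ 0 for all t ≥ 0. Then for every nonnegative measurable function f : [0,∞) → [0,∞) and every countable family of pairs (tᵢ, Tᵢ) with tᵢ ≥ 0 and Tᵢ ≥ 0 satisfying the constraints λ Σ_{i : tᵢ ≥ s} Tᵢ w(e^{−tᵢ+s}) + λ ∫ₛ^∞ w(e^{−t+s}) f(t) dt ≤ θ for all s ≥ 0, one has Σᵢ Tᵢ e^{−tᵢ} + ∫₀^∞ e^{−t} f(t) dt ≤ (θ/λ)(1 + ∫₀^∞ γ(s) ds). -/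
open Set MeasureTheory
open scoped ENNReal

/-- Weak duality for the exponential design problem: if `γ ≥ 0` is an
integrable Lagrange density making the dual function nonpositive everywhere, then any
flow payment `f ≥ 0` together with a countable family of lump-sum payments `(tᵢ, Tᵢ)`
satisfying the dynamic IR constraints at every `s ≥ 0` yields expected revenue at most
`(θ/λ)(1 + ∫₀^∞ γ)`. -/
theorem stmt8
    (w : ℝ → ℝ)
    (hmono : MonotoneOn w (Icc (0:ℝ) 1))
    (h0 : w 0 = 0) (h1 : w 1 = 1)
    (θ lam : ℝ) (hθ : 0 < θ) (hlam : 0 < lam)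
    (γ : ℝ → ℝ) (hγint : IntegrableOn γ (Ici (0:ℝ))) (hγ0 : ∀ s, 0 ≤ γ s)
    (hdual : ∀ t : ℝ, 0 ≤ t →
      Real.exp (-t) - w (Real.exp (-t))
        - ∫ s in (0:ℝ)..t, w (Real.exp (-t + s)) * γ s ≤ 0)
    (f : ℝ → ℝ) (hfm : Measurable f) (hf0 : ∀ u, 0 ≤ f u)
    (tt TT : ℕ → ℝ) (htt : ∀ i, 0 ≤ tt i) (hTT : ∀ i, 0 ≤ TT i)
    (hcon : ∀ s : ℝ, 0 ≤ s →
      ENNReal.ofReal lam *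
        ((∑' i : ℕ, if s ≤ tt i then ENNReal.ofReal (TT i * w (Real.exp (-(tt i) + s))) else 0)
          + ∫⁻ u in Ioi s, ENNReal.ofReal (w (Real.exp (-u + s)) * f u))
        ≤ ENNReal.ofReal θ) :
    (∑' i : ℕ, ENNReal.ofReal (TT i * Real.exp (-(tt i))))
      + (∫⁻ u in Ioi (0:ℝ), ENNReal.ofReal (Real.exp (-u) * f u))
      ≤ ENNReal.ofReal ((θ / lam) * (1 + ∫ s in Ioi (0:ℝ), γ s)) := by
  classical
  -- a measurable, everywhere nonnegative version of γ
  obtain ⟨γ₁, hγ₁m, hγ₁ae⟩ : ∃ g : ℝ → ℝ, Measurable g ∧ γ =ᵐ[volume.restrict (Ici (0:ℝ))] g :=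
    ⟨hγint.1.aemeasurable.mk γ, hγint.1.aemeasurable.measurable_mk,
      hγint.1.aemeasurable.ae_eq_mk⟩
  set γ' : ℝ → ℝ := fun s => max (γ₁ s) 0 with hγ'def
  have hγ'meas : Measurable γ' := hγ₁m.max measurable_const
  have hγ'0 : ∀ s, 0 ≤ γ' s := fun s => le_max_right _ _
  have hγae : γ =ᵐ[volume.restrict (Ici (0:ℝ))] γ' := by
    filter_upwards [hγ₁ae] with s hs
    simp [hγ'def, ← hs, max_eq_left (hγ0 s)]
  have hγ'int : IntegrableOn γ' (Ici (0:ℝ)) := hγint.congr hγae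
  -- a monotone global version of w
  set W : ℝ → ℝ := fun x => w (max 0 (min 1 x)) with hWdef
  have hclamp : ∀ x : ℝ, max 0 (min 1 x) ∈ Icc (0:ℝ) 1 := fun x =>
    ⟨le_max_left _ _, max_le zero_le_one (min_le_left _ _)⟩
  have hWmono : Monotone W := by
    intro x y hxy
    exact hmono (hclamp x) (hclamp y) (max_le_max le_rfl (min_le_min le_rfl hxy))
  have hWmeas : Measurable W := hWmono.measurable
  have hWeq : ∀ x ∈ Icc (0:ℝ) 1, W x = w x := by
    intro x hx
    simp [hWdef, min_eq_right hx.2, max_eq_right hx.1]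
  have hw0 : ∀ x ∈ Icc (0:ℝ) 1, 0 ≤ w x := fun x hx => by
    have := hmono (left_mem_Icc.mpr zero_le_one) hx hx.1
    rwa [h0] at this
  have hW0 : ∀ x, 0 ≤ W x := fun x => hw0 _ (hclamp x)
  have hW1 : ∀ x, W x ≤ 1 := fun x => by
    have := hmono (hclamp x) (right_mem_Icc.mpr zero_le_one) (hclamp x).2
    rwa [h1] at this
  have hexp_mem : ∀ {s t : ℝ}, s ≤ t → Real.exp (-t + s) ∈ Icc (0:ℝ) 1 := by
    intro s t h
    exact ⟨(Real.exp_pos _).le, Real.exp_le_one_iff.mpr (by linarith)⟩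
  set c : ℝ≥0∞ := ENNReal.ofReal (θ / lam) with hcdef
  set A : ℝ → ℝ≥0∞ := fun s =>
    ∑' i : ℕ, if s ≤ tt i then ENNReal.ofReal (TT i * W (Real.exp (-(tt i) + s))) else 0
    with hAdef
  set B : ℝ → ℝ≥0∞ := fun s =>
    ∫⁻ u in Ioi s, ENNReal.ofReal (W (Real.exp (-u + s)) * f u) with hBdef
  -- the constraints in terms of W
  have hcon' : ∀ s : ℝ, 0 ≤ s → A s + B s ≤ c := by
    intro s hs
    have hA : A s = ∑' i : ℕ,
        if s ≤ tt i then ENNReal.ofReal (TT i * w (Real.exp (-(tt i) + s))) else 0 := by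
      refine tsum_congr fun i => ?_
      by_cases h : s ≤ tt i
      · simp only [if_pos h, hWeq _ (hexp_mem h)]
      · simp [h]
    have hB : B s = ∫⁻ u in Ioi s, ENNReal.ofReal (w (Real.exp (-u + s)) * f u) := by
      refine setLIntegral_congr_fun measurableSet_Ioi ?_
      intro u hu
      dsimp only
      rw [hWeq _ (hexp_mem (le_of_lt hu))]
    have h1 : ENNReal.ofReal lam * (A s + B s) ≤ ENNReal.ofReal lam * c := by
      rw [hA, hB]
      refine le_trans (hcon s hs) ?_
      rw [hcdef, ← ENNReal.ofReal_mul hlam.le, mul_div_cancel₀ θ (ne_of_gt hlam)]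
    exact (ENNReal.mul_le_mul_iff_right (by simp [hlam]) ENNReal.ofReal_ne_top).mp h1
  -- key pointwise bound from the dual condition
  have hkey : ∀ t : ℝ, 0 ≤ t → ∀ a : ℝ, 0 ≤ a →
      ENNReal.ofReal (a * Real.exp (-t)) ≤
        ENNReal.ofReal (a * W (Real.exp (-t)))
          + ∫⁻ s in Ioc 0 t, ENNReal.ofReal (a * (W (Real.exp (-t + s)) * γ' s)) := by
    intro t ht a ha
    have hIoc : Ioc (0:ℝ) t ⊆ Ici 0 := fun x hx => le_of_lt hx.1
    have hInt : IntegrableOn (fun s => W (Real.exp (-t + s)) * γ' s) (Ioc 0 t) := by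
      refine Integrable.bdd_mul (c := 1) (hγ'int.mono_set hIoc) ?_ (Filter.Eventually.of_forall fun x => ?_)
      · exact ((hWmeas.comp ((measurable_const.add measurable_id).exp)).aestronglyMeasurable)
      · rw [Real.norm_eq_abs, abs_of_nonneg (hW0 _)]; exact hW1 _
    have heq : (fun s => w (Real.exp (-t + s)) * γ s)
        =ᵐ[volume.restrict (Ioc (0:ℝ) t)] fun s => W (Real.exp (-t + s)) * γ' s := by
      filter_upwards [ae_restrict_of_ae_restrict_of_subset hIoc hγae,
        ae_restrict_mem measurableSet_Ioc] with s hγs hsmem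
      rw [hγs, hWeq _ (hexp_mem hsmem.2)]
    have hI : (∫ s in (0:ℝ)..t, w (Real.exp (-t + s)) * γ s)
        = ∫ s in Ioc (0:ℝ) t, W (Real.exp (-t + s)) * γ' s := by
      rw [intervalIntegral.integral_of_le ht]
      exact integral_congr_ae heq
    have hdual' := hdual t ht
    rw [hI] at hdual'
    set I : ℝ := ∫ s in Ioc (0:ℝ) t, W (Real.exp (-t + s)) * γ' s with hIdef
    have hI0 : 0 ≤ I := setIntegral_nonneg measurableSet_Ioc
      (fun x _ => mul_nonneg (hW0 _) (hγ'0 x))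
    have hwW : w (Real.exp (-t)) = W (Real.exp (-t)) := by
      have : Real.exp (-t + 0) ∈ Icc (0:ℝ) 1 := hexp_mem ht
      rw [add_zero] at this
      exact (hWeq _ this).symm
    have hreal : a * Real.exp (-t) ≤ a * W (Real.exp (-t)) + a * I := by
      have : Real.exp (-t) ≤ W (Real.exp (-t)) + I := by rw [← hwW]; linarith
      nlinarith
    refine le_trans (ENNReal.ofReal_le_ofReal hreal) ?_
    rw [ENNReal.ofReal_add (mul_nonneg ha (hW0 _)) (mul_nonneg ha hI0)]
    refine add_le_add_right (le_of_eq ?_) _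
    have hmul : a * I = ∫ s in Ioc (0:ℝ) t, a * (W (Real.exp (-t + s)) * γ' s) := by
      rw [hIdef, ← integral_const_mul]
    rw [hmul]
    exact ofReal_integral_eq_lintegral_ofReal (hInt.const_mul a)
      (Filter.Eventually.of_forall fun s => mul_nonneg ha (mul_nonneg (hW0 _) (hγ'0 s)))

  -- rewriting an integral over `Ioc 0 t` as an integral over `Ioi 0` with an indicator
  have hIoc_eq : ∀ (t : ℝ) (g : ℝ → ℝ≥0∞),
      (∫⁻ s in Ioc 0 t, g s) = ∫⁻ s in Ioi 0, (if s ≤ t then g s else 0) := by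
    intro t g
    have hset : Ioc (0:ℝ) t = Iic t ∩ Ioi 0 := by
      ext x; simp [mem_Ioc, mem_Iic, mem_Ioi, and_comm]
    rw [hset, ← Measure.restrict_restrict measurableSet_Iic,
      ← lintegral_indicator measurableSet_Iic _]
    refine lintegral_congr fun s => ?_
    simp [indicator_apply, mem_Iic]
  have hA0 : A 0 = ∑' i : ℕ, ENNReal.ofReal (TT i * W (Real.exp (-(tt i)))) := by
    rw [hAdef]
    exact tsum_congr fun i => by rw [if_pos (htt i), add_zero]
  have hB0 : B 0 = ∫⁻ u in Ioi (0:ℝ), ENNReal.ofReal (W (Real.exp (-u)) * f u) := by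
    rw [hBdef]
    exact lintegral_congr fun u => by rw [add_zero]
  have hgmeas : Measurable fun u => ENNReal.ofReal (W (Real.exp (-u)) * f u) :=
    ((hWmeas.comp (measurable_id.neg.exp)).mul hfm).ennreal_ofReal
  -- the lump-sum part
  have hS1 : (∑' i : ℕ, ENNReal.ofReal (TT i * Real.exp (-(tt i)))) ≤
      A 0 + ∑' i : ℕ, ∫⁻ s in Ioi (0:ℝ),
        (if s ≤ tt i then ENNReal.ofReal (TT i * W (Real.exp (-(tt i) + s))) else 0) *
          ENNReal.ofReal (γ' s) := by
    rw [hA0, ← ENNReal.tsum_add]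
    refine Summable.tsum_le_tsum (fun i => ?_) ENNReal.summable ENNReal.summable
    refine le_trans (hkey (tt i) (htt i) (TT i) (hTT i)) ?_
    rw [hIoc_eq]
    refine add_le_add_right (le_of_eq (lintegral_congr fun s => ?_)) _
    by_cases h : s ≤ tt i
    · rw [if_pos h, if_pos h, ← ENNReal.ofReal_mul (mul_nonneg (hTT i) (hW0 _)), mul_assoc]
    · simp [h]
  -- the flow part
  have hS2 : (∫⁻ u in Ioi (0:ℝ), ENNReal.ofReal (Real.exp (-u) * f u)) ≤
      B 0 + ∫⁻ u in Ioi (0:ℝ), ∫⁻ s in Ioi (0:ℝ),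
        (if s ≤ u then ENNReal.ofReal (f u * (W (Real.exp (-u + s)) * γ' s)) else 0) := by
    rw [hB0, ← lintegral_add_left hgmeas]
    refine lintegral_mono_ae ?_
    filter_upwards [ae_restrict_mem measurableSet_Ioi] with u hu
    have := hkey u (le_of_lt hu) (f u) (hf0 u)
    rw [hIoc_eq] at this
    rw [mul_comm (Real.exp (-u)) (f u), mul_comm (W (Real.exp (-u))) (f u)]
    exact this
  -- swap sum and integral in the lump-sum part
  have hswap1 : (∑' i : ℕ, ∫⁻ s in Ioi (0:ℝ),
      (if s ≤ tt i then ENNReal.ofReal (TT i * W (Real.exp (-(tt i) + s))) else 0) *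
        ENNReal.ofReal (γ' s)) = ∫⁻ s in Ioi (0:ℝ), A s * ENNReal.ofReal (γ' s) := by
    rw [← lintegral_tsum fun i => (Measurable.aemeasurable ?_)]
    · refine lintegral_congr fun s => ?_
      rw [hAdef, ENNReal.tsum_mul_right]
    · refine Measurable.mul ?_ hγ'meas.ennreal_ofReal
      refine Measurable.ite (measurableSet_le measurable_id measurable_const) ?_ measurable_const
      exact ((hWmeas.comp ((measurable_const.add measurable_id).exp)).const_mul _).ennreal_ofReal
  -- swap the order of integration in the flow part
  have hGmeas : Measurable (Function.uncurry fun u s : ℝ =>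
      if s ≤ u then ENNReal.ofReal (f u * (W (Real.exp (-u + s)) * γ' s)) else 0) := by
    refine Measurable.ite (measurableSet_le measurable_snd measurable_fst) ?_ measurable_const
    refine ((hfm.comp measurable_fst).mul (Measurable.mul ?_ (hγ'meas.comp measurable_snd))).ennreal_ofReal
    exact hWmeas.comp ((measurable_fst.neg.add measurable_snd).exp)
  have hswap2 : (∫⁻ u in Ioi (0:ℝ), ∫⁻ s in Ioi (0:ℝ),
      (if s ≤ u then ENNReal.ofReal (f u * (W (Real.exp (-u + s)) * γ' s)) else 0))
      = ∫⁻ s in Ioi (0:ℝ), ENNReal.ofReal (γ' s) * B s := by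
    rw [lintegral_lintegral_swap hGmeas.aemeasurable]
    refine setLIntegral_congr_fun measurableSet_Ioi ?_
    intro s hs
    dsimp only
    have h1 : (∫⁻ u in Ioi (0:ℝ),
        (if s ≤ u then ENNReal.ofReal (f u * (W (Real.exp (-u + s)) * γ' s)) else 0))
        = ∫⁻ u in Ici s, ENNReal.ofReal (f u * (W (Real.exp (-u + s)) * γ' s)) := by
      calc (∫⁻ u in Ioi (0:ℝ),
          (if s ≤ u then ENNReal.ofReal (f u * (W (Real.exp (-u + s)) * γ' s)) else 0))
          = ∫⁻ u in Ioi (0:ℝ),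
            (Ici s).indicator (fun u => ENNReal.ofReal (f u * (W (Real.exp (-u + s)) * γ' s))) u :=
            lintegral_congr fun u => by simp [indicator_apply, mem_Ici]
        _ = ∫⁻ u in Ici s, ENNReal.ofReal (f u * (W (Real.exp (-u + s)) * γ' s))
              ∂(volume.restrict (Ioi 0)) := lintegral_indicator measurableSet_Ici _
        _ = ∫⁻ u in Ici s ∩ Ioi 0, ENNReal.ofReal (f u * (W (Real.exp (-u + s)) * γ' s)) := by
              rw [Measure.restrict_restrict measurableSet_Ici]
        _ = ∫⁻ u in Ici s, ENNReal.ofReal (f u * (W (Real.exp (-u + s)) * γ' s)) := by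
              have hss : Ici s ∩ Ioi (0:ℝ) = Ici s := by
                refine inter_eq_left.mpr fun u hu => ?_
                exact lt_of_lt_of_le (mem_Ioi.mp hs) (mem_Ici.mp hu)
              rw [hss]
    rw [h1, ← setLIntegral_congr (Ioi_ae_eq_Ici (a := s))]
    rw [hBdef, ← lintegral_const_mul' _ _ ENNReal.ofReal_ne_top]
    refine lintegral_congr fun u => ?_
    rw [← ENNReal.ofReal_mul (hγ'0 s), show γ' s * (W (Real.exp (-u + s)) * f u)
      = f u * (W (Real.exp (-u + s)) * γ' s) by ring]
  -- measurability of `A · * ofReal (γ' ·)`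
  have hAγmeas : Measurable fun s => A s * ENNReal.ofReal (γ' s) := by
    refine Measurable.mul ?_ hγ'meas.ennreal_ofReal
    rw [hAdef]
    refine Measurable.ennreal_tsum fun i => ?_
    refine Measurable.ite (measurableSet_le measurable_id measurable_const) ?_ measurable_const
    exact ((hWmeas.comp ((measurable_const.add measurable_id).exp)).const_mul _).ennreal_ofReal
  -- value of ∫⁻ ofReal (γ' s)
  have hγ'intIoi : IntegrableOn γ' (Ioi (0:ℝ)) := hγ'int.mono_set Ioi_subset_Ici_self
  have hJeq : (∫ s in Ioi (0:ℝ), γ' s) = ∫ s in Ioi (0:ℝ), γ s :=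
    (integral_congr_ae (ae_restrict_of_ae_restrict_of_subset Ioi_subset_Ici_self hγae)).symm
  have hJ0 : 0 ≤ ∫ s in Ioi (0:ℝ), γ s :=
    setIntegral_nonneg measurableSet_Ioi fun x _ => hγ0 x
  have hγ'lint : (∫⁻ s in Ioi (0:ℝ), ENNReal.ofReal (γ' s))
      = ENNReal.ofReal (∫ s in Ioi (0:ℝ), γ s) := by
    rw [← hJeq]
    exact (ofReal_integral_eq_lintegral_ofReal hγ'intIoi
      (Filter.Eventually.of_forall fun s => hγ'0 s)).symm
  -- assemble everything
  calc (∑' i : ℕ, ENNReal.ofReal (TT i * Real.exp (-(tt i))))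
      + (∫⁻ u in Ioi (0:ℝ), ENNReal.ofReal (Real.exp (-u) * f u))
      ≤ (A 0 + ∑' i : ℕ, ∫⁻ s in Ioi (0:ℝ),
          (if s ≤ tt i then ENNReal.ofReal (TT i * W (Real.exp (-(tt i) + s))) else 0) *
            ENNReal.ofReal (γ' s))
        + (B 0 + ∫⁻ u in Ioi (0:ℝ), ∫⁻ s in Ioi (0:ℝ),
          (if s ≤ u then ENNReal.ofReal (f u * (W (Real.exp (-u + s)) * γ' s)) else 0)) :=
        add_le_add hS1 hS2
    _ = (A 0 + B 0) + ((∫⁻ s in Ioi (0:ℝ), A s * ENNReal.ofReal (γ' s))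
          + ∫⁻ s in Ioi (0:ℝ), ENNReal.ofReal (γ' s) * B s) := by
        rw [hswap1, hswap2, add_add_add_comm]
    _ = (A 0 + B 0) + ∫⁻ s in Ioi (0:ℝ),
          (A s * ENNReal.ofReal (γ' s) + ENNReal.ofReal (γ' s) * B s) := by
        rw [lintegral_add_left hAγmeas]
    _ = (A 0 + B 0) + ∫⁻ s in Ioi (0:ℝ), ENNReal.ofReal (γ' s) * (A s + B s) := by
        refine congrArg _ (lintegral_congr fun s => ?_); ring
    _ ≤ c + ∫⁻ s in Ioi (0:ℝ), ENNReal.ofReal (γ' s) * c := by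
        refine add_le_add (hcon' 0 le_rfl) (lintegral_mono_ae ?_)
        filter_upwards [ae_restrict_mem measurableSet_Ioi] with s hs
        exact mul_le_mul_right (hcon' s (le_of_lt hs)) _
    _ = c + ENNReal.ofReal (∫ s in Ioi (0:ℝ), γ s) * c := by
        rw [lintegral_mul_const' _ _ (by rw [hcdef]; exact ENNReal.ofReal_ne_top), hγ'lint]
    _ ≤ ENNReal.ofReal ((θ / lam) * (1 + ∫ s in Ioi (0:ℝ), γ s)) := by
        rw [hcdef, ← ENNReal.ofReal_mul hJ0,
          ← ENNReal.ofReal_add (div_nonneg hθ.le hlam.le)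
            (mul_nonneg hJ0 (div_nonneg hθ.le hlam.le))]
        refine le_of_eq (congrArg _ ?_)
        ring
end

section
/- Let w : [0,1] → [0,1] be continuous and increasing with w(0) = 0. Let T : [0,∞) → [0,∞) be given by the regular decomposition T(t) = ∫₀^t f(s) ds + Σᵢ 1_{tᵢ < t} Tᵢ, where f : [0,∞) → [0,∞) is nonnegative and locally integrable, (tᵢ) is an increasing countable sequence in [0,∞), and Tᵢ ≥ 0. Define the generalized inverse T⁻¹(x) = sup { t ∈ [0,∞) : T(t) ≤ x } (with w(e^{−T⁻¹(y)}) interpreted as w(0) = 0 when T⁻¹(y) = ∞). Then ∫₀^∞ w(e^{−T⁻¹(y)}) dy = Σᵢ Tᵢ w(e^{−tᵢ}) + ∫₀^∞ w(e^{−t}) f(t) dt. -/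
open Set MeasureTheory
open scoped ENNReal

/-- The cumulative payment function with regular decomposition: flow density `f` plus
lump-sum payments `Ti i` at times `ti i`. -/
noncomputable def cumPay (f : ℝ → ℝ) (ti Ti : ℕ → ℝ) (t : ℝ) : ℝ :=
  (∫ s in (0:ℝ)..t, f s) + ∑' i : ℕ, if ti i < t then Ti i else 0

/-- The generalized inverse `T⁻¹(x) = sup { t ≥ 0 : T t ≤ x }`, valued in `[0,∞]`. -/
noncomputable def genInv (T : ℝ → ℝ) (x : ℝ) : ℝ≥0∞ :=
  sSup (ENNReal.ofReal '' {t : ℝ | 0 ≤ t ∧ T t ≤ x})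

/-- `e^{−a}` for `a ∈ [0,∞]`, with the convention `e^{−∞} = 0`. -/
noncomputable def expNegE (a : ℝ≥0∞) : ℝ :=
  if a = ⊤ then 0 else Real.exp (-a.toReal)

open Filter
open scoped Topology

/-! ### Auxiliary definitions -/

/-- ENNReal-valued flow part of the cumulative payment. -/
noncomputable def flowE (f : ℝ → ℝ) (t : ℝ) : ℝ≥0∞ :=
  ∫⁻ x in Ioc (0:ℝ) t, ENNReal.ofReal (f x)

/-- ENNReal-valued jump part of the cumulative payment. -/
noncomputable def jumpE (ti Ti : ℕ → ℝ) (t : ℝ) : ℝ≥0∞ :=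
  ∑' i : ℕ, if ti i < t then ENNReal.ofReal (Ti i) else 0

/-- The (truncated) discount profile `t ↦ w (min 1 e^{-t})`. -/
noncomputable def gW (w : ℝ → ℝ) (t : ℝ) : ℝ := w (min 1 (Real.exp (-t)))

/-- The pseudo-inverse of the discount profile. -/
noncomputable def slW (w : ℝ → ℝ) (l : ℝ) : ℝ := sSup {t : ℝ | 0 ≤ t ∧ l < gW w t}

section Aux

variable {w : ℝ → ℝ} (hcont : ContinuousOn w (Icc (0:ℝ) 1))
  (hmono : MonotoneOn w (Icc (0:ℝ) 1)) (h0 : w 0 = 0)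

lemma min_exp_mem (t : ℝ) : min 1 (Real.exp (-t)) ∈ Icc (0:ℝ) 1 :=
  ⟨le_min zero_le_one (Real.exp_pos _).le, min_le_left _ _⟩

include hmono h0 in
lemma gW_nonneg (t : ℝ) : 0 ≤ gW w t := by
  have := hmono (left_mem_Icc.mpr zero_le_one) (min_exp_mem t) (min_exp_mem t).1
  rwa [h0] at this

include hcont in
lemma gW_cont : Continuous (gW w) :=
  hcont.comp_continuous (continuous_const.min (Real.continuous_exp.comp continuous_neg))
    min_exp_mem

include hmono in
lemma gW_anti : Antitone (gW w) := fun a b hab =>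
  hmono (min_exp_mem b) (min_exp_mem a)
    (min_le_min le_rfl (Real.exp_le_exp.mpr (neg_le_neg hab)))

lemma gW_eq {t : ℝ} (ht : 0 ≤ t) : gW w t = w (Real.exp (-t)) := by
  unfold gW
  rw [min_eq_right (Real.exp_le_one_iff.mpr (by linarith))]

include hcont h0 in
lemma gW_tendsto : Tendsto (gW w) atTop (𝓝 0) := by
  have hq : Tendsto (fun t : ℝ => min 1 (Real.exp (-t))) atTop (𝓝 0) := by
    have h1 : Tendsto (fun t : ℝ => Real.exp (-t)) atTop (𝓝 0) :=
      Real.tendsto_exp_neg_atTop_nhds_zero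
    have h2 := (tendsto_const_nhds : Tendsto (fun _ : ℝ => (1:ℝ)) atTop (𝓝 1)).min h1
    simpa using h2
  have hw : ContinuousWithinAt w (Icc (0:ℝ) 1) 0 := hcont 0 (left_mem_Icc.mpr zero_le_one)
  have hq' : Tendsto (fun t : ℝ => min 1 (Real.exp (-t))) atTop (𝓝[Icc (0:ℝ) 1] 0) :=
    tendsto_nhdsWithin_of_tendsto_nhds_of_eventually_within _ hq
      (Eventually.of_forall fun t => min_exp_mem t)
  have := hw.tendsto.comp hq'
  rw [h0] at this
  exact this

include hcont h0 in
lemma slW_bddAbove {l : ℝ} (hl : 0 < l) : BddAbove {t : ℝ | 0 ≤ t ∧ l < gW w t} := by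
  obtain ⟨M, hM⟩ := (eventually_atTop).mp ((gW_tendsto hcont h0).eventually_lt_const hl)
  refine ⟨M, fun t ht => ?_⟩
  by_contra hc
  push_neg at hc
  have := hM t hc.le
  linarith [ht.2]

lemma slW_nonneg (l : ℝ) : 0 ≤ slW w l := Real.sSup_nonneg fun x hx => hx.1

include hcont hmono h0 in
lemma gW_slW_le {l : ℝ} (hl : 0 < l) : gW w (slW w l) ≤ l := by
  by_contra hc
  push_neg at hc
  have hopen : IsOpen {x : ℝ | l < gW w x} := isOpen_lt continuous_const (gW_cont hcont)
  obtain ⟨ε, hε, hball⟩ := Metric.isOpen_iff.mp hopen _ hc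
  have hmem : slW w l + ε/2 ∈ {t : ℝ | 0 ≤ t ∧ l < gW w t} := by
    constructor
    · have := slW_nonneg (w := w) l; linarith
    · apply hball
      rw [Metric.mem_ball, Real.dist_eq, add_sub_cancel_left, abs_of_pos (by linarith)]
      linarith
  have hle : slW w l + ε/2 ≤ slW w l := le_csSup (slW_bddAbove hcont h0 hl) hmem
  linarith

include hcont hmono h0 in
lemma lt_slW_iff {l : ℝ} (hl : 0 < l) {t : ℝ} (ht : 0 ≤ t) :
    l < gW w t ↔ t < slW w l := by
  constructor
  · intro h
    have hle : t ≤ slW w l := le_csSup (slW_bddAbove hcont h0 hl) ⟨ht, h⟩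
    rcases lt_or_eq_of_le hle with hlt | heq
    · exact hlt
    · exfalso
      rw [heq] at h
      exact absurd h (not_lt.mpr (gW_slW_le hcont hmono h0 hl))
  · intro h
    have hne : {t : ℝ | 0 ≤ t ∧ l < gW w t}.Nonempty := by
      by_contra hcc
      rw [not_nonempty_iff_eq_empty] at hcc
      have hz : slW w l = 0 := by rw [slW, hcc, Real.sSup_empty]
      rw [hz] at h
      linarith
    obtain ⟨t', ht', htt'⟩ := exists_lt_of_lt_csSup hne h
    exact lt_of_lt_of_le ht'.2 (gW_anti hmono htt'.le)

include hcont h0 in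
lemma slW_antitoneOn : AntitoneOn (slW w) (Ioi (0:ℝ)) := by
  intro a ha b _ hab
  rcases eq_empty_or_nonempty {t : ℝ | 0 ≤ t ∧ b < gW w t} with he | hne
  · show sSup {t : ℝ | 0 ≤ t ∧ b < gW w t} ≤ slW w a
    rw [he, Real.sSup_empty]
    exact slW_nonneg a
  · exact csSup_le_csSup (slW_bddAbove hcont h0 (mem_Ioi.mp ha)) hne
      fun t ht => ⟨ht.1, lt_of_le_of_lt hab ht.2⟩

end Aux

/-! ### Generalized inverse -/

lemma genInv_lt_ofReal_iff {T : ℝ → ℝ} (hT : MonotoneOn T (Ici (0:ℝ))) {y s : ℝ} :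
    genInv T y < ENNReal.ofReal s ↔ ∃ t, 0 ≤ t ∧ t < s ∧ y < T t := by
  constructor
  · intro h
    have hne : genInv T y ≠ ⊤ := h.ne_top
    have hu : (genInv T y).toReal < s := (ENNReal.lt_ofReal_iff_toReal_lt hne).mp h
    have hu0 : (0:ℝ) ≤ (genInv T y).toReal := ENNReal.toReal_nonneg
    set u := (genInv T y).toReal with hudef
    refine ⟨(u + s)/2, by linarith, by linarith, ?_⟩
    by_contra hc
    push_neg at hc
    have hmem : ENNReal.ofReal ((u+s)/2) ∈ ENNReal.ofReal '' {t : ℝ | 0 ≤ t ∧ T t ≤ y} :=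
      ⟨(u+s)/2, ⟨by linarith, hc⟩, rfl⟩
    have hle : ENNReal.ofReal ((u+s)/2) ≤ genInv T y := le_sSup hmem
    have := ENNReal.toReal_mono hne hle
    rw [ENNReal.toReal_ofReal (by linarith)] at this
    linarith
  · rintro ⟨t, ht0, hts, hyt⟩
    have hs : 0 < s := lt_of_le_of_lt ht0 hts
    have hub : genInv T y ≤ ENNReal.ofReal t := by
      apply sSup_le
      rintro a ⟨t', ⟨ht'0, hT'⟩, rfl⟩
      apply ENNReal.ofReal_le_ofReal
      by_contra hcc
      push_neg at hcc
      exact absurd hyt (not_lt.mpr (le_trans (hT ht0 ht'0 hcc.le) hT'))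
    exact lt_of_le_of_lt hub ((ENNReal.ofReal_lt_ofReal_iff hs).mpr hts)

lemma genInv_mono (T : ℝ → ℝ) : Monotone (genInv T) := fun a b hab =>
  sSup_le_sSup (image_mono fun t ht => ⟨ht.1, ht.2.trans hab⟩)

lemma expNegE_mem (a : ℝ≥0∞) : expNegE a ∈ Icc (0:ℝ) 1 := by
  unfold expNegE
  split_ifs
  · exact ⟨le_rfl, zero_le_one⟩
  · exact ⟨(Real.exp_pos _).le,
      Real.exp_le_one_iff.mpr (neg_nonpos.mpr ENNReal.toReal_nonneg)⟩

lemma expNegE_anti : Antitone expNegE := by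
  intro a b hab
  unfold expNegE
  split_ifs with hb ha ha
  · exact le_rfl
  · exact (Real.exp_pos _).le
  · exact absurd (top_le_iff.mp (ha ▸ hab)) hb
  · exact Real.exp_le_exp.mpr (neg_le_neg (ENNReal.toReal_mono hb hab))

/-! ### Properties of `cumPay` -/

lemma cumPay_monotoneOn (f : ℝ → ℝ) (hf0 : ∀ t, 0 ≤ f t)
    (hfi : ∀ t : ℝ, IntegrableOn f (Icc (0:ℝ) t))
    (ti Ti : ℕ → ℝ) (hTi0 : ∀ i, 0 ≤ Ti i)
    (hsum : ∀ t : ℝ, Summable fun i : ℕ => if ti i < t then Ti i else 0) :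
    MonotoneOn (cumPay f ti Ti) (Ici (0:ℝ)) := by
  intro a ha b hb hab
  unfold cumPay
  apply add_le_add
  · have h1 : IntervalIntegrable f volume 0 a := by
      rw [intervalIntegrable_iff]
      exact (hfi a).mono_set (by rw [uIoc_of_le ha]; exact Ioc_subset_Icc_self)
    have h2 : IntervalIntegrable f volume a b := by
      rw [intervalIntegrable_iff]
      refine (hfi b).mono_set ?_
      rw [uIoc_of_le hab]
      exact Ioc_subset_Icc_self.trans (Icc_subset_Icc ha le_rfl)
    have hadd := intervalIntegral.integral_add_adjacent_intervals h1 h2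
    have hnn : 0 ≤ ∫ x in a..b, f x := intervalIntegral.integral_nonneg hab fun u _ => hf0 u
    linarith
  · refine Summable.tsum_le_tsum (fun i => ?_) (hsum a) (hsum b)
    split_ifs with h1 h2 h2
    · exact le_rfl
    · exact absurd (h1.trans_le hab) h2
    · exact hTi0 i
    · exact le_rfl

lemma ofReal_cumPay (f : ℝ → ℝ) (hf0 : ∀ t, 0 ≤ f t)
    (hfi : ∀ t : ℝ, IntegrableOn f (Icc (0:ℝ) t))
    (ti Ti : ℕ → ℝ) (hTi0 : ∀ i, 0 ≤ Ti i)
    (hsum : ∀ t : ℝ, Summable fun i : ℕ => if ti i < t then Ti i else 0)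
    {t : ℝ} (ht : 0 ≤ t) :
    ENNReal.ofReal (cumPay f ti Ti t) = flowE f t + jumpE ti Ti t := by
  unfold cumPay flowE jumpE
  rw [intervalIntegral.integral_of_le ht]
  have hint : IntegrableOn f (Ioc (0:ℝ) t) := (hfi t).mono_set Ioc_subset_Icc_self
  rw [ENNReal.ofReal_add (integral_nonneg fun x => hf0 x)
      (tsum_nonneg fun i => by split_ifs with h; exacts [hTi0 i, le_rfl])]
  congr 1
  · exact ofReal_integral_eq_lintegral_ofReal hint (ae_of_all _ fun x => hf0 x)
  · rw [ENNReal.ofReal_tsum_of_nonneg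
      (fun i => by split_ifs with h; exacts [hTi0 i, le_rfl]) (hsum t)]
    exact tsum_congr fun i => by split_ifs <;> simp

lemma flowE_mono (f : ℝ → ℝ) : Monotone (flowE f) := fun a b hab =>
  lintegral_mono_set (Ioc_subset_Ioc_right hab)

lemma jumpE_mono (ti Ti : ℕ → ℝ) : Monotone (jumpE ti Ti) := fun a b hab =>
  ENNReal.tsum_le_tsum fun i => by
    split_ifs with h1 h2 h2
    · exact le_rfl
    · exact absurd (h1.trans_le hab) h2
    · exact zero_le
    · exact le_rfl

/-- Left-continuity of the ENNReal cumulative payment. -/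
lemma TE_iSup (f : ℝ → ℝ) (hfi : ∀ t : ℝ, IntegrableOn f (Icc (0:ℝ) t))
    (ti Ti : ℕ → ℝ)
    {s : ℝ} (u : ℕ → ℝ) (hum : Monotone u) (hu0 : ∀ n, 0 ≤ u n)
    (hus : ∀ n, u n < s) (hut : Tendsto u atTop (𝓝 s)) :
    (⨆ n, (flowE f (u n) + jumpE ti Ti (u n))) = flowE f s + jumpE ti Ti s := by
  have hflow : (⨆ n, flowE f (u n)) = flowE f s := by
    set F := fun x => ENNReal.ofReal (f x) with hF
    have hmeas : ∀ n, AEMeasurable ((Ioc (0:ℝ) (u n)).indicator F) volume := fun n =>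
      (aemeasurable_indicator_iff measurableSet_Ioc).mpr
        (ENNReal.measurable_ofReal.comp_aemeasurable
          ((hfi (u n)).mono_set Ioc_subset_Icc_self).aestronglyMeasurable.aemeasurable)
    have hmonon : ∀ x, Monotone fun n => (Ioc (0:ℝ) (u n)).indicator F x := fun x n m hnm =>
      indicator_le_indicator_of_subset (Ioc_subset_Ioc_right (hum hnm)) (fun _ => zero_le) x
    have hpt : ∀ x, (⨆ n, (Ioc (0:ℝ) (u n)).indicator F x) = (Ioo (0:ℝ) s).indicator F x := by
      intro x
      by_cases hx : x ∈ Ioo (0:ℝ) s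
      · obtain ⟨n, hn⟩ := (hut.eventually (eventually_gt_nhds hx.2)).exists
        rw [indicator_of_mem hx]
        refine le_antisymm (iSup_le fun m => indicator_le_self _ _ x) ?_
        exact le_iSup_of_le n
          (le_of_eq (indicator_of_mem (show x ∈ Ioc (0:ℝ) (u n) from ⟨hx.1, hn.le⟩) F).symm)
      · rw [indicator_of_notMem hx, ENNReal.iSup_eq_zero]
        exact fun n =>
          indicator_of_notMem (fun hxn => hx ⟨hxn.1, lt_of_le_of_lt hxn.2 (hus n)⟩) F
    calc (⨆ n, flowE f (u n)) = ⨆ n, ∫⁻ x, (Ioc (0:ℝ) (u n)).indicator F x := by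
          exact iSup_congr fun n => (lintegral_indicator measurableSet_Ioc F).symm
      _ = ∫⁻ x, ⨆ n, (Ioc (0:ℝ) (u n)).indicator F x :=
          (lintegral_iSup' hmeas (ae_of_all _ hmonon)).symm
      _ = ∫⁻ x, (Ioo (0:ℝ) s).indicator F x := lintegral_congr hpt
      _ = ∫⁻ x in Ioo (0:ℝ) s, F x := lintegral_indicator measurableSet_Ioo F
      _ = flowE f s := setLIntegral_congr Ioo_ae_eq_Ioc
  have hjump : (⨆ n, jumpE ti Ti (u n)) = jumpE ti Ti s := by
    have hpt : ∀ i, (⨆ n, if ti i < u n then ENNReal.ofReal (Ti i) else 0)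
        = (if ti i < s then ENNReal.ofReal (Ti i) else 0) := by
      intro i
      by_cases hi : ti i < s
      · obtain ⟨n, hn⟩ := (hut.eventually (eventually_gt_nhds hi)).exists
        rw [if_pos hi]
        refine le_antisymm (iSup_le fun m => by split_ifs <;> simp) ?_
        exact le_iSup_of_le n (le_of_eq (if_pos hn).symm)
      · rw [if_neg hi, ENNReal.iSup_eq_zero]
        exact fun n => if_neg fun h => hi (h.trans (hus n))
    have hmble : ∀ n, Measurable fun i : ℕ => if ti i < u n then ENNReal.ofReal (Ti i) else 0 :=
      fun n => measurable_from_top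
    have hmn : Monotone fun n => fun i : ℕ => if ti i < u n then ENNReal.ofReal (Ti i) else 0 := by
      intro n m hnm i
      simp only
      split_ifs with h1 h2 h2
      · exact le_rfl
      · exact absurd (h1.trans_le (hum hnm)) h2
      · exact zero_le
      · exact le_rfl
    calc (⨆ n, jumpE ti Ti (u n))
        = ⨆ n, ∫⁻ i, (if ti i < u n then ENNReal.ofReal (Ti i) else 0) ∂Measure.count :=
          iSup_congr fun n => (lintegral_count _).symm
      _ = ∫⁻ i, ⨆ n, (if ti i < u n then ENNReal.ofReal (Ti i) else 0) ∂Measure.count :=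
          (lintegral_iSup hmble hmn).symm
      _ = ∫⁻ i, (if ti i < s then ENNReal.ofReal (Ti i) else 0) ∂Measure.count :=
          lintegral_congr hpt
      _ = jumpE ti Ti s := lintegral_count _
  rw [← hflow, ← hjump]
  exact (ENNReal.iSup_add_iSup fun i j =>
    ⟨max i j, add_le_add (flowE_mono f (hum (le_max_left i j)))
      (jumpE_mono ti Ti (hum (le_max_right i j)))⟩).symm

lemma Ioi_zero_eq_iUnion : Ioi (0:ℝ) = ⋃ n : ℕ, Ioc (0:ℝ) ((n:ℝ)+1) := by
  ext x
  simp only [mem_Ioi, mem_iUnion, mem_Ioc]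
  constructor
  · intro hx
    obtain ⟨n, hn⟩ := exists_nat_ge x
    exact ⟨n, hx, hn.trans (by linarith)⟩
  · rintro ⟨n, h, _⟩
    exact h

/-- Change-of-variables identity for the perceived cost: for an
increasing cumulative payment `T` with regular decomposition (flow `f`, jumps `Tᵢ` at
`tᵢ`), one has `∫₀^∞ w(e^{−T⁻¹(y)}) dy = Σᵢ Tᵢ w(e^{−tᵢ}) + ∫₀^∞ w(e^{−t}) f(t) dt`,
as an identity in `[0,∞]`. -/
theorem stmt9
    (w : ℝ → ℝ)
    (hcont : ContinuousOn w (Icc (0:ℝ) 1))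
    (hmono : MonotoneOn w (Icc (0:ℝ) 1))
    (h0 : w 0 = 0)
    (f : ℝ → ℝ) (hf0 : ∀ t, 0 ≤ f t) (hfi : ∀ t : ℝ, IntegrableOn f (Icc (0:ℝ) t))
    (ti Ti : ℕ → ℝ) (hti : Monotone ti) (hti0 : ∀ i, 0 ≤ ti i) (hTi0 : ∀ i, 0 ≤ Ti i)
    (hsum : ∀ t : ℝ, Summable fun i : ℕ => if ti i < t then Ti i else 0) :
    (∫⁻ y in Ioi (0:ℝ), ENNReal.ofReal (w (expNegE (genInv (cumPay f ti Ti) y))))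
      = (∑' i : ℕ, ENNReal.ofReal (Ti i * w (Real.exp (-(ti i)))))
        + ∫⁻ t in Ioi (0:ℝ), ENNReal.ofReal (w (Real.exp (-t)) * f t) := by
  classical
  set T := cumPay f ti Ti with hTdef
  have hTmono : MonotoneOn T (Ici (0:ℝ)) := cumPay_monotoneOn f hf0 hfi ti Ti hTi0 hsum
  have hofReal : ∀ t : ℝ, 0 ≤ t → ENNReal.ofReal (T t) = flowE f t + jumpE ti Ti t :=
    fun t ht => ofReal_cumPay f hf0 hfi ti Ti hTi0 hsum ht
  -- the integrand on the LHS
  have hΦnn : ∀ y, 0 ≤ w (expNegE (genInv T y)) := fun y => by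
    have := hmono (left_mem_Icc.mpr zero_le_one) (expNegE_mem (genInv T y))
      (expNegE_mem (genInv T y)).1
    rwa [h0] at this
  have hΦanti : Antitone fun y => w (expNegE (genInv T y)) := fun a b hab =>
    hmono (expNegE_mem _) (expNegE_mem _) (expNegE_anti (genInv_mono T hab))
  -- layer cake on the LHS
  rw [lintegral_eq_lintegral_meas_lt (volume.restrict (Ioi (0:ℝ)))
    (ae_of_all _ hΦnn) hΦanti.measurable.aemeasurable]
  -- the jump part of the RHS
  have hsumpart : (∑' i : ℕ, ENNReal.ofReal (Ti i * w (Real.exp (-(ti i)))))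
      = ∫⁻ l in Ioi (0:ℝ), jumpE ti Ti (slW w l) := by
    have h1 : ∀ i : ℕ, ENNReal.ofReal (Ti i * w (Real.exp (-(ti i))))
        = ∫⁻ l in Ioi (0:ℝ),
            (Iio (gW w (ti i))).indicator (fun _ => ENNReal.ofReal (Ti i)) l := by
      intro i
      rw [lintegral_indicator_const measurableSet_Iio,
        Measure.restrict_apply' measurableSet_Ioi, Iio_inter_Ioi, Real.volume_Ioo, sub_zero,
        gW_eq (hti0 i), ← ENNReal.ofReal_mul (hTi0 i)]
    calc (∑' i : ℕ, ENNReal.ofReal (Ti i * w (Real.exp (-(ti i)))))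
        = ∑' i : ℕ, ∫⁻ l in Ioi (0:ℝ),
            (Iio (gW w (ti i))).indicator (fun _ => ENNReal.ofReal (Ti i)) l := tsum_congr h1
      _ = ∫⁻ l in Ioi (0:ℝ), ∑' i : ℕ,
            (Iio (gW w (ti i))).indicator (fun _ => ENNReal.ofReal (Ti i)) l :=
          (lintegral_tsum fun i =>
            (measurable_const.indicator measurableSet_Iio).aemeasurable).symm
      _ = ∫⁻ l in Ioi (0:ℝ), jumpE ti Ti (slW w l) := by
          refine setLIntegral_congr_fun measurableSet_Ioi (fun l hl => ?_)
          refine tsum_congr fun i => ?_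
          simp only [indicator_apply, mem_Iio]
          exact if_congr (lt_slW_iff hcont hmono h0 (mem_Ioi.mp hl) (hti0 i)) rfl rfl
  -- the flow part of the RHS
  have hFmeas : AEMeasurable (fun x => ENNReal.ofReal (f x)) (volume.restrict (Ioi (0:ℝ))) := by
    rw [Ioi_zero_eq_iUnion, aemeasurable_iUnion_iff]
    intro n
    exact ENNReal.measurable_ofReal.comp_aemeasurable
      ((hfi ((n:ℝ)+1)).mono_set Ioc_subset_Icc_self).aestronglyMeasurable.aemeasurable
  set μ := (volume.restrict (Ioi (0:ℝ))).withDensity (fun x => ENNReal.ofReal (f x)) with hμdef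
  have hgmeas : Measurable (gW w) := (gW_cont hcont).measurable
  have hfpart : (∫⁻ t in Ioi (0:ℝ), ENNReal.ofReal (w (Real.exp (-t)) * f t))
      = ∫⁻ l in Ioi (0:ℝ), flowE f (slW w l) := by
    have hstep1 : (∫⁻ t in Ioi (0:ℝ), ENNReal.ofReal (w (Real.exp (-t)) * f t))
        = ∫⁻ t, ENNReal.ofReal (gW w t) ∂μ := by
      rw [hμdef, lintegral_withDensity_eq_lintegral_mul_non_measurable₀ _ hFmeas
        (ae_of_all _ fun x => ENNReal.ofReal_lt_top) _]
      refine setLIntegral_congr_fun measurableSet_Ioi (fun t ht => ?_)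
      simp only [Pi.mul_apply]
      rw [gW_eq (le_of_lt (mem_Ioi.mp ht)), ← ENNReal.ofReal_mul (hf0 t),
        mul_comm (f t) (w (Real.exp (-t)))]
    have hstep2 : (∫⁻ t, ENNReal.ofReal (gW w t) ∂μ)
        = ∫⁻ l in Ioi (0:ℝ), μ {t | l < gW w t} :=
      lintegral_eq_lintegral_meas_lt μ (ae_of_all _ (gW_nonneg hmono h0)) hgmeas.aemeasurable
    rw [hstep1, hstep2]
    refine setLIntegral_congr_fun measurableSet_Ioi (fun l hl => ?_)
    have hms : MeasurableSet {t : ℝ | l < gW w t} := measurableSet_lt measurable_const hgmeas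
    rw [hμdef, withDensity_apply _ hms, Measure.restrict_restrict hms]
    have hset : {t : ℝ | l < gW w t} ∩ Ioi 0 = Ioo 0 (slW w l) := by
      ext t
      simp only [mem_inter_iff, mem_setOf_eq, mem_Ioi, mem_Ioo]
      constructor
      · rintro ⟨h1, h2⟩
        exact ⟨h2, (lt_slW_iff hcont hmono h0 (mem_Ioi.mp hl) h2.le).mp h1⟩
      · rintro ⟨h1, h2⟩
        exact ⟨(lt_slW_iff hcont hmono h0 (mem_Ioi.mp hl) h1.le).mpr h2, h1⟩
    rw [hset]
    exact setLIntegral_congr Ioo_ae_eq_Ioc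
  -- the key identity
  have key : ∀ l ∈ Ioi (0:ℝ),
      (volume.restrict (Ioi (0:ℝ))) {y | l < w (expNegE (genInv T y))}
        = jumpE ti Ti (slW w l) + flowE f (slW w l) := by
    intro l hl
    have hl0 : (0:ℝ) < l := mem_Ioi.mp hl
    rw [Measure.restrict_apply' measurableSet_Ioi]
    have hseteq : {y : ℝ | l < w (expNegE (genInv T y))} ∩ Ioi 0
        = {y : ℝ | 0 < y ∧ ∃ t, 0 ≤ t ∧ t < slW w l ∧ y < T t} := by
      ext y
      simp only [mem_inter_iff, mem_setOf_eq, mem_Ioi]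
      rw [and_comm]
      refine and_congr_right fun hy => ?_
      rw [← genInv_lt_ofReal_iff hTmono (y := y) (s := slW w l)]
      rcases eq_or_ne (genInv T y) ⊤ with htop | hfin
      · rw [htop]
        have h1 : expNegE ⊤ = 0 := if_pos rfl
        rw [h1, h0]
        exact iff_of_false (not_lt.mpr hl0.le) (by simp)
      · have h2 : expNegE (genInv T y) = Real.exp (-(genInv T y).toReal) := if_neg hfin
        rw [h2, ← gW_eq (w := w) (t := (genInv T y).toReal) ENNReal.toReal_nonneg,
          lt_slW_iff hcont hmono h0 hl0 ENNReal.toReal_nonneg]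
        exact (ENNReal.lt_ofReal_iff_toReal_lt hfin).symm
    rw [hseteq]
    rcases eq_or_lt_of_le (slW_nonneg (w := w) l) with hzero | hpos
    · have hempty : {y : ℝ | 0 < y ∧ ∃ t, 0 ≤ t ∧ t < slW w l ∧ y < T t} = ∅ := by
        ext y
        simp only [mem_setOf_eq, mem_empty_iff_false, iff_false, not_and]
        rintro hy ⟨t, ht0, ht1, _⟩
        rw [← hzero] at ht1
        linarith
      rw [hempty, measure_empty, ← hzero]
      have hj : jumpE ti Ti 0 = 0 :=
        ENNReal.tsum_eq_zero.mpr fun i => if_neg (not_lt.mpr (hti0 i))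
      have hfl : flowE f 0 = 0 := by
        show (∫⁻ x in Ioc (0:ℝ) 0, ENNReal.ofReal (f x)) = 0
        rw [Ioc_self, Measure.restrict_empty, lintegral_zero_measure]
      rw [hj, hfl, add_zero]
    · set s := slW w l with hs
      set u : ℕ → ℝ := fun n => s * (((n:ℝ)+1)/((n:ℝ)+2)) with hu
      have hu0 : ∀ n, 0 ≤ u n := fun n => mul_nonneg hpos.le (by positivity)
      have hum : Monotone u := by
        intro n m hnm
        have hcast : (n:ℝ) ≤ (m:ℝ) := Nat.cast_le.mpr hnm
        have hfrac : ((n:ℝ)+1)/((n:ℝ)+2) ≤ ((m:ℝ)+1)/((m:ℝ)+2) := by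
          rw [div_le_div_iff₀ (by positivity) (by positivity)]
          nlinarith
        exact mul_le_mul_of_nonneg_left hfrac hpos.le
      have hus : ∀ n, u n < s := by
        intro n
        have hfrac : ((n:ℝ)+1)/((n:ℝ)+2) < 1 := by
          rw [div_lt_one (by positivity)]
          linarith
        calc u n = s * (((n:ℝ)+1)/((n:ℝ)+2)) := rfl
          _ < s * 1 := mul_lt_mul_of_pos_left hfrac hpos
          _ = s := mul_one s
      have hut : Tendsto u atTop (𝓝 s) := by
        have h2 : Tendsto (fun n : ℕ => ((n:ℝ)+2)) atTop atTop :=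
          tendsto_atTop_add_const_right _ 2 tendsto_natCast_atTop_atTop
        have h3 : Tendsto (fun n : ℕ => (((n:ℝ)+2))⁻¹) atTop (𝓝 0) := h2.inv_tendsto_atTop
        have h4 : Tendsto (fun n : ℕ => (1:ℝ) - ((n:ℝ)+2)⁻¹) atTop (𝓝 (1 - 0)) :=
          tendsto_const_nhds.sub h3
        have h5 : Tendsto (fun n : ℕ => s * ((1:ℝ) - ((n:ℝ)+2)⁻¹)) atTop (𝓝 (s * (1-0))) :=
          h4.const_mul s
        have heq : ∀ n : ℕ, s * ((1:ℝ) - ((n:ℝ)+2)⁻¹) = u n := by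
          intro n
          show s * ((1:ℝ) - ((n:ℝ)+2)⁻¹) = s * (((n:ℝ)+1)/((n:ℝ)+2))
          have hne : ((n:ℝ)+2) ≠ 0 := by positivity
          have hfr : ((n:ℝ)+1)/((n:ℝ)+2) = (1:ℝ) - ((n:ℝ)+2)⁻¹ := by
            rw [div_eq_iff hne, sub_mul, one_mul, inv_mul_cancel₀ hne]
            ring
          rw [hfr]
        have h6 := h5.congr heq
        simpa using h6
      have hunion : {y : ℝ | 0 < y ∧ ∃ t, 0 ≤ t ∧ t < s ∧ y < T t}
          = ⋃ n, Ioo 0 (T (u n)) := by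
        ext y
        simp only [mem_setOf_eq, mem_iUnion, mem_Ioo]
        constructor
        · rintro ⟨hy, t, ht0, hts, hyt⟩
          obtain ⟨n, hn⟩ := (hut.eventually (eventually_gt_nhds hts)).exists
          exact ⟨n, hy, lt_of_lt_of_le hyt (hTmono ht0 (hu0 n) hn.le)⟩
        · rintro ⟨n, hy, hyt⟩
          exact ⟨hy, u n, hu0 n, hus n, hyt⟩
      rw [hunion]
      have hdir : Directed (· ⊆ ·) fun n => Ioo (0:ℝ) (T (u n)) :=
        Monotone.directed_le fun n m hnm =>
          Ioo_subset_Ioo_right (hTmono (hu0 n) (hu0 m) (hum hnm))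
      rw [hdir.measure_iUnion]
      have hvol : ∀ n, volume (Ioo (0:ℝ) (T (u n))) = flowE f (u n) + jumpE ti Ti (u n) := by
        intro n
        rw [Real.volume_Ioo, sub_zero]
        exact hofReal (u n) (hu0 n)
      exact ((iSup_congr hvol).trans
        (TE_iSup f hfi ti Ti u hum hu0 hus hut)).trans (add_comm _ _)
  -- assemble
  have haj : AEMeasurable (fun l => jumpE ti Ti (slW w l)) (volume.restrict (Ioi (0:ℝ))) := by
    refine aemeasurable_restrict_of_antitoneOn measurableSet_Ioi ?_
    intro a ha b hb hab
    exact jumpE_mono ti Ti (slW_antitoneOn hcont h0 ha hb hab)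
  rw [hsumpart, hfpart, ← lintegral_add_left' haj]
  exact setLIntegral_congr_fun measurableSet_Ioi (fun l hl => key l hl)
end

section
/- Let w : [0,1] → [0,1] be continuous and increasing with w(0) = 0 and w(1) = 1, and define w₋(p) = 1 − w(1 − p). Let θ > 0 and let T be a nonnegative random variable with ∫₀^∞ w₋(ℙ(T > y)) dy < ∞. Then ∫₀^∞ w(ℙ(θ − T > y)) dy + ∫_{−∞}^0 ( w(ℙ(θ − T > y)) − 1 ) dy = θ − ∫₀^∞ w₋(ℙ(T > y)) dy. In words: the rank-dependent expected utility of the net outcome θ − T, computed with weighting function w, equals the cumulative-prospect-theory value θ − ∫₀^∞ w₋(ℙ(T > y)) dy computed with separate accounts, gain θ, loss T, loss-weighting w₋ and loss-aversion coefficient 1. -/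
open Set MeasureTheory

/-- The rank-dependent expected utility (with weighting `w` and
linear utility) of the net outcome `θ − T` equals the separate-accounting CPT value
`θ − ∫₀^∞ w₋(ℙ(T > y)) dy`, where `w₋(p) = 1 − w(1 − p)` and loss aversion is `1`. -/
theorem stmt11
    {Ω : Type*} [MeasurableSpace Ω] (μ : Measure Ω) [IsProbabilityMeasure μ]
    (w : ℝ → ℝ)
    (hcont : ContinuousOn w (Icc (0:ℝ) 1))
    (hmono : MonotoneOn w (Icc (0:ℝ) 1))
    (h0 : w 0 = 0) (h1 : w 1 = 1)
    (θ : ℝ) (hθ : 0 < θ)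
    (T : Ω → ℝ) (hTm : Measurable T) (hT0 : ∀ ω, 0 ≤ T ω)
    (hint : IntegrableOn (fun y => 1 - w (1 - (μ {ω | y < T ω}).toReal)) (Ioi (0:ℝ))) :
    (∫ y in Ioi (0:ℝ), w ((μ {ω | y < θ - T ω}).toReal))
      + (∫ y in Iio (0:ℝ), (w ((μ {ω | y < θ - T ω}).toReal) - 1))
      = θ - ∫ y in Ioi (0:ℝ), (1 - w (1 - (μ {ω | y < T ω}).toReal)) := by
  classical
  set S : ℝ → ℝ := fun u => (μ {ω | u < T ω}).toReal with hSdef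
  set g : ℝ → ℝ := fun u => w (1 - S u) with hgdef
  -- basic facts about S
  have hS01 : ∀ u, S u ∈ Icc (0:ℝ) 1 := by
    intro u
    refine ⟨ENNReal.toReal_nonneg, ?_⟩
    have := prob_le_one (μ := μ) (s := {ω | u < T ω})
    simpa using ENNReal.toReal_mono ENNReal.one_ne_top this
  have h1S : ∀ u, (1 - S u) ∈ Icc (0:ℝ) 1 := by
    intro u
    obtain ⟨h1, h2⟩ := hS01 u
    constructor <;> linarith
  have hg0 : ∀ u, 0 ≤ g u := by
    intro u
    have := hmono (left_mem_Icc.2 zero_le_one) (h1S u) (h1S u).1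
    simpa [h0, hgdef] using this
  have hg1 : ∀ u, g u ≤ 1 := by
    intro u
    have := hmono (h1S u) (right_mem_Icc.2 zero_le_one) (h1S u).2
    simpa [h1, hgdef] using this
  -- g u = 0 for u < 0
  have hgneg : ∀ u : ℝ, u < 0 → g u = 0 := by
    intro u hu
    have : {ω | u < T ω} = univ := by
      ext ω; simp only [mem_setOf_eq, mem_univ, iff_true]
      exact lt_of_lt_of_le hu (hT0 ω)
    simp [hgdef, hSdef, this, h0]
  -- key a.e. identity
  have hkey : ∀ u : ℝ, μ {a | u ≤ T a} = μ {a | u < T a} →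
      (μ {ω | T ω < u}).toReal = 1 - S u := by
    intro u hu
    have hc : {ω | T ω < u} = {ω | u ≤ T ω}ᶜ := by ext ω; simp [not_le]
    have hm : MeasurableSet {ω | u ≤ T ω} := hTm measurableSet_Ici
    rw [hc, measure_compl hm (measure_ne_top μ _), measure_univ, hu,
      ENNReal.toReal_sub_of_le prob_le_one ENNReal.one_ne_top, ENNReal.toReal_one]
  have hN : {u : ℝ | μ {a | u ≤ T a} ≠ μ {a | u < T a}}.Countable :=
    countable_meas_le_ne_meas_lt μ T
  have hB : ((fun y : ℝ => θ - y) ⁻¹' {u : ℝ | μ {a | u ≤ T a} ≠ μ {a | u < T a}}).Countable :=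
    hN.preimage sub_right_injective
  have h_ae : ∀ᵐ y : ℝ, w ((μ {ω | y < θ - T ω}).toReal) = g (θ - y) := by
    have hz : (volume ((fun y : ℝ => θ - y) ⁻¹'
        {u : ℝ | μ {a | u ≤ T a} ≠ μ {a | u < T a}})) = 0 := hB.measure_zero _
    filter_upwards [measure_eq_zero_iff_ae_notMem.mp hz] with y hy
    have h1' : {ω | y < θ - T ω} = {ω | T ω < θ - y} := by
      ext ω; simp only [mem_setOf_eq]; constructor <;> intro <;> linarith
    have heq : μ {a | θ - y ≤ T a} = μ {a | θ - y < T a} := not_not.mp hy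
    rw [h1', hkey (θ - y) heq]
  -- monotone, hence measurable
  have hganti : Monotone g := by
    intro u v huv
    exact hmono (h1S u) (h1S v) (by
      have : S v ≤ S u := by
        refine ENNReal.toReal_mono (measure_ne_top μ _) (measure_mono ?_)
        intro ω hω; exact lt_of_le_of_lt huv hω
      linarith)
  -- measure preserving reflection
  have hmp : MeasurePreserving (fun y : ℝ => θ - y) volume volume :=
    ⟨measurable_const.sub measurable_id, Measure.map_sub_left_eq_self volume θ⟩
  have hemb : MeasurableEmbedding (fun y : ℝ => θ - y) :=
    (MeasurableEquiv.subLeft θ).measurableEmbedding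
  -- integral transformations
  have hpre1 : (fun y : ℝ => θ - y) ⁻¹' (Iio θ) = Ioi 0 := by
    ext x; simp only [mem_preimage, mem_Iio, mem_Ioi]; constructor <;> intro <;> linarith
  have hpre2 : (fun y : ℝ => θ - y) ⁻¹' (Ioi θ) = Iio 0 := by
    ext x; simp only [mem_preimage, mem_Ioi, mem_Iio]; constructor <;> intro <;> linarith
  have hI1 : (∫ y in Ioi (0:ℝ), w ((μ {ω | y < θ - T ω}).toReal)) = ∫ u in Iio θ, g u := by
    rw [← hmp.setIntegral_preimage_emb hemb g (Iio θ), hpre1]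
    exact integral_congr_ae (ae_restrict_of_ae h_ae)
  have hI2 : (∫ y in Iio (0:ℝ), (w ((μ {ω | y < θ - T ω}).toReal) - 1))
      = ∫ u in Ioi θ, (g u - 1) := by
    rw [← hmp.setIntegral_preimage_emb hemb (fun u => g u - 1) (Ioi θ), hpre2]
    exact integral_congr_ae (ae_restrict_of_ae (h_ae.mono fun y hy => by simp only [hy]))
  -- integrability
  have hint' : IntegrableOn (fun y => 1 - g y) (Ioi (0:ℝ)) := hint
  have hg_int_Ioc : IntegrableOn g (Ioc 0 θ) := by
    have h1' : IntegrableOn (fun _ : ℝ => (1:ℝ)) (Ioc 0 θ) :=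
      integrableOn_const (by simp [Real.volume_Ioc])
    have h2' : IntegrableOn (fun y => 1 - g y) (Ioc 0 θ) :=
      hint'.mono_set Ioc_subset_Ioi_self
    have heq : (fun y => (1:ℝ) - (1 - g y)) = g := by ext y; ring
    rw [IntegrableOn, ← heq]
    exact h1'.sub h2'
  have hg1_int : IntegrableOn (fun y => 1 - g y) (Ioi θ) :=
    hint'.mono_set (Ioi_subset_Ioi hθ.le)
  -- ∫ over Iio θ equals ∫ over Ioo 0 θ
  have hI3 : (∫ u in Iio θ, g u) = ∫ u in Ioo 0 θ, g u := by
    have hcongr : (fun u => g u) =ᵐ[volume.restrict (Iio θ)]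
        (Ioo (0:ℝ) θ).indicator g := by
      have h0ae : ∀ᵐ u : ℝ, u ≠ 0 := by
        have : (volume ({(0:ℝ)} : Set ℝ)) = 0 := measure_singleton 0
        filter_upwards [measure_eq_zero_iff_ae_notMem.mp this] with u hu
        simpa using hu
      filter_upwards [ae_restrict_of_ae h0ae, ae_restrict_mem measurableSet_Iio] with u hu hu'
      rcases lt_trichotomy u 0 with h | h | h
      · rw [hgneg u h, indicator_of_notMem (by simp [mem_Ioo]; intro h'; linarith)]
      · exact absurd h hu
      · rw [indicator_of_mem (mem_Ioo.2 ⟨h, hu'⟩)]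
    rw [integral_congr_ae hcongr, setIntegral_indicator measurableSet_Ioo,
      inter_eq_self_of_subset_right (Ioo_subset_Iio_self.trans (by intro x hx; exact hx))]
  -- split RHS integral
  have hsplit : (∫ y in Ioi (0:ℝ), (1 - g y))
      = (∫ y in Ioc 0 θ, (1 - g y)) + ∫ y in Ioi θ, (1 - g y) := by
    rw [← setIntegral_union (Ioc_disjoint_Ioi le_rfl) measurableSet_Ioi
      (hint'.mono_set Ioc_subset_Ioi_self) hg1_int, Ioc_union_Ioi_eq_Ioi hθ.le]
  have hconst : (∫ _ in Ioc (0:ℝ) θ, (1:ℝ)) = θ := by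
    simp [Real.volume_Ioc, hθ.le]
  have hIoc : (∫ y in Ioc (0:ℝ) θ, (1 - g y)) = θ - ∫ y in Ioc 0 θ, g y := by
    rw [integral_sub (integrableOn_const (C := (1:ℝ)) (s := Ioc 0 θ) (μ := volume) (by simp [Real.volume_Ioc])) hg_int_Ioc,
      hconst]
  have hIoiθ : (∫ u in Ioi θ, (g u - 1)) = -∫ u in Ioi θ, (1 - g u) := by
    rw [← integral_neg]; congr 1; ext u; ring
  have hIoo : (∫ u in Ioo (0:ℝ) θ, g u) = ∫ u in Ioc 0 θ, g u :=
    (integral_Ioc_eq_integral_Ioo).symm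
  rw [hI1, hI2, hI3, hIoo, hIoiθ]
  show _ = θ - ∫ y in Ioi (0:ℝ), (1 - g y)
  rw [hsplit, hIoc]
  ring
end

section
/- Let w : [0,1] → [0,1] be continuous and increasing with w(0) = 0, w(1) = 1, and satisfying the symmetry condition w(p) + w(1 − p) = 1 for all p ∈ [0,1]. Let θ > 0 and let T be a nonnegative random variable with ∫₀^∞ w(ℙ(T > y)) dy < ∞. Then ∫₀^∞ w(ℙ(θ − T > y)) dy − ∫_{−∞}^0 w(ℙ(θ − T < y)) dy = θ − ∫₀^∞ w(ℙ(T > y)) dy. In words: the joint-accounting CPT value of the transaction (receiving the good of value θ for sure and paying the random price T), with identical gain and loss weighting w and loss aversion coefficient 1, equals the separate-accounting CPT value θ − ∫₀^∞ w(ℙ(T > y)) dy. -/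
open Set MeasureTheory

/-- For a symmetric weighting function (`w(p) + w(1−p) = 1`), the
joint-accounting CPT value of the transaction (receive the good of value `θ` for sure,
pay the random price `T`), with identical gain/loss weighting `w` and loss aversion `1`,
equals the separate-accounting value `θ − ∫₀^∞ w(ℙ(T > y)) dy`. -/
theorem stmt12
    {Ω : Type*} [MeasurableSpace Ω] (μ : Measure Ω) [IsProbabilityMeasure μ]
    (w : ℝ → ℝ)
    (hcont : ContinuousOn w (Icc (0:ℝ) 1))
    (hmono : MonotoneOn w (Icc (0:ℝ) 1))
    (h0 : w 0 = 0) (h1 : w 1 = 1)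
    (hsym : ∀ p ∈ Icc (0:ℝ) 1, w p + w (1 - p) = 1)
    (θ : ℝ) (hθ : 0 < θ)
    (T : Ω → ℝ) (hTm : Measurable T) (hT0 : ∀ ω, 0 ≤ T ω)
    (hint : IntegrableOn (fun y => w ((μ {ω | y < T ω}).toReal)) (Ioi (0:ℝ))) :
    (∫ y in Ioi (0:ℝ), w ((μ {ω | y < θ - T ω}).toReal))
      - (∫ y in Iio (0:ℝ), w ((μ {ω | θ - T ω < y}).toReal))
      = θ - ∫ y in Ioi (0:ℝ), w ((μ {ω | y < T ω}).toReal) := by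
  have hprob : ∀ s : Set Ω, (μ s).toReal ∈ Icc (0:ℝ) 1 := by
    intro s
    refine ⟨ENNReal.toReal_nonneg, ?_⟩
    simpa using ENNReal.toReal_mono ENNReal.one_ne_top prob_le_one
  set G : ℝ → ℝ := fun u => w ((μ {ω | u < T ω}).toReal) with hGdef
  have hGanti : Antitone G := by
    intro u v huv
    exact hmono (hprob _) (hprob _)
      (ENNReal.toReal_mono (measure_ne_top μ _)
        (measure_mono fun ω h => lt_of_le_of_lt huv h))
  have hGmeas : Measurable G := hGanti.measurable
  have hGrange : ∀ u, G u ∈ Icc (0:ℝ) 1 := by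
    intro u
    constructor
    · calc (0:ℝ) = w 0 := h0.symm
        _ ≤ G u := hmono (left_mem_Icc.2 zero_le_one) (hprob _) (hprob _).1
    · calc G u ≤ w 1 := hmono (hprob _) (right_mem_Icc.2 zero_le_one) (hprob _).2
        _ = 1 := h1
  have hmp : MeasurePreserving (fun x : ℝ => θ - x) volume volume :=
    Measure.measurePreserving_sub_left volume θ
  have hemb : MeasurableEmbedding (fun x : ℝ => θ - x) :=
    (MeasurableEquiv.subLeft θ).measurableEmbedding
  -- losses
  have hloss : (∫ y in Iio (0:ℝ), w ((μ {ω | θ - T ω < y}).toReal)) = ∫ u in Ioi θ, G u := by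
    have hpre : (fun x : ℝ => θ - x) ⁻¹' Ioi θ = Iio 0 := by
      ext x
      simp only [mem_preimage, mem_Ioi, mem_Iio]
      constructor <;> intro h <;> linarith
    rw [← hmp.setIntegral_preimage_emb hemb G (Ioi θ), hpre]
    refine setIntegral_congr_fun measurableSet_Iio fun y _ => ?_
    have : {ω | θ - T ω < y} = {ω | θ - y < T ω} := by
      ext ω
      simp only [mem_setOf_eq]
      constructor <;> intro h <;> linarith
    simp only [hGdef, this]
  -- set of atoms is countable
  have hDcount : {u : ℝ | μ {ω | T ω < u} ≠ μ {ω | T ω ≤ u}}.Countable := by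
    have h := countable_meas_le_ne_meas_lt μ (fun ω => -T ω)
    have hsub : {u : ℝ | μ {ω | T ω < u} ≠ μ {ω | T ω ≤ u}}
        ⊆ Neg.neg '' {t : ℝ | μ {a | t ≤ -T a} ≠ μ {a | t < -T a}} := by
      intro u hu
      refine ⟨-u, ?_, neg_neg u⟩
      have e1 : {a | -u ≤ -T a} = {ω | T ω ≤ u} := by
        ext a; simp
      have e2 : {a | -u < -T a} = {ω | T ω < u} := by
        ext a; simp
      simp only [mem_setOf_eq, e1, e2]
      exact fun hcontra => hu hcontra.symm
    exact (h.image _).mono hsub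
  have hbad : ∀ᵐ y : ℝ, θ - y ∉ {u : ℝ | μ {ω | T ω < u} ≠ μ {ω | T ω ≤ u}} := by
    have hc : {y : ℝ | θ - y ∈ {u : ℝ | μ {ω | T ω < u} ≠ μ {ω | T ω ≤ u}}}.Countable := by
      have : {y : ℝ | θ - y ∈ {u : ℝ | μ {ω | T ω < u} ≠ μ {ω | T ω ≤ u}}}
          ⊆ (fun u => θ - u) '' {u : ℝ | μ {ω | T ω < u} ≠ μ {ω | T ω ≤ u}} := by
        intro y hy
        exact ⟨θ - y, hy, by ring⟩
      exact (hDcount.image _).mono this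
    have := hc.measure_zero (volume : Measure ℝ)
    rw [← compl_compl {y : ℝ | θ - y ∈ {u : ℝ | μ {ω | T ω < u} ≠ μ {ω | T ω ≤ u}}}] at this
    exact (MeasureTheory.ae_iff).2 (by simpa using hc.measure_zero (volume : Measure ℝ))
  -- gains
  have hgain : (∫ y in Ioi (0:ℝ), w ((μ {ω | y < θ - T ω}).toReal))
      = θ - ∫ u in Ioo 0 θ, G u := by
    have hzero : ∀ y : ℝ, θ ≤ y → w ((μ {ω | y < θ - T ω}).toReal) = 0 := by
      intro y hy
      have hempty : {ω | y < θ - T ω} = ∅ := by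
        ext ω
        simp only [mem_setOf_eq, mem_empty_iff_false, iff_false, not_lt]
        have := hT0 ω
        linarith
      simp [hempty, h0]
    have hstep1 : (∫ y in Ioi (0:ℝ), w ((μ {ω | y < θ - T ω}).toReal))
        = ∫ y in Ioo 0 θ, w ((μ {ω | y < θ - T ω}).toReal) := by
      rw [show (∫ y in Ioi (0:ℝ), w ((μ {ω | y < θ - T ω}).toReal))
          = ∫ y in Ioi (0:ℝ),
              (Ioo 0 θ).indicator (fun y => w ((μ {ω | y < θ - T ω}).toReal)) y from
        setIntegral_congr_fun measurableSet_Ioi (by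
          intro y hy
          by_cases hmem : y ∈ Ioo 0 θ
          · rw [indicator_of_mem hmem]
          · rw [indicator_of_notMem hmem]
            have : θ ≤ y := by
              rcases lt_or_ge y θ with hlt | hle
              · exact absurd ⟨hy, hlt⟩ hmem
              · exact hle
            exact hzero y this)]
      rw [setIntegral_indicator measurableSet_Ioo]
      congr 1
      rw [inter_eq_right.2 (fun x hx => hx.1)]
    have hae : ∀ᵐ y ∂(volume.restrict (Ioo (0:ℝ) θ)),
        w ((μ {ω | y < θ - T ω}).toReal) = 1 - G (θ - y) := by
      filter_upwards [ae_restrict_of_ae hbad] with y hy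
      have hset : {ω | y < θ - T ω} = {ω | T ω < θ - y} := by
        ext ω
        simp only [mem_setOf_eq]
        constructor <;> intro h <;> linarith
      have h2 : μ {ω | T ω < θ - y} = μ {ω | T ω ≤ θ - y} := not_ne_iff.mp hy
      have h3 : {ω | T ω ≤ θ - y} = {ω | θ - y < T ω}ᶜ := by
        ext ω; simp [not_lt]
      have h4 : μ {ω | θ - y < T ω}ᶜ = 1 - μ {ω | θ - y < T ω} :=
        prob_compl_eq_one_sub (measurableSet_lt measurable_const hTm)
      have h5 : (1 - μ {ω | θ - y < T ω}).toReal = 1 - (μ {ω | θ - y < T ω}).toReal := by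
        rw [ENNReal.toReal_sub_of_le prob_le_one ENNReal.one_ne_top, ENNReal.toReal_one]
      have h6 := hsym ((μ {ω | θ - y < T ω}).toReal) (hprob _)
      rw [hset, h2, h3, h4, h5]
      simp only [hGdef]
      linarith
    have hm2 : Measurable (fun y : ℝ => G (θ - y)) :=
      hGmeas.comp (measurable_const.sub measurable_id)
    have hint2 : IntegrableOn (fun y => G (θ - y)) (Ioo (0:ℝ) θ) := by
      apply Measure.integrableOn_of_bounded measure_Ioo_lt_top.ne
        hm2.aestronglyMeasurable (M := 1)
      filter_upwards with x
      rw [Real.norm_eq_abs, abs_le]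
      exact ⟨by linarith [(hGrange (θ - x)).1], (hGrange (θ - x)).2⟩
    have hcov : (∫ y in Ioo (0:ℝ) θ, G (θ - y)) = ∫ u in Ioo (0:ℝ) θ, G u := by
      have hpre : (fun x : ℝ => θ - x) ⁻¹' Ioo 0 θ = Ioo 0 θ := by
        ext x
        simp only [mem_preimage, mem_Ioo]
        constructor <;> rintro ⟨ha, hb⟩ <;> constructor <;> linarith
      rw [← hmp.setIntegral_preimage_emb hemb G (Ioo 0 θ), hpre]
    rw [hstep1, integral_congr_ae hae, integral_sub
        (integrableOn_const (C := (1:ℝ)) measure_Ioo_lt_top.ne) hint2, hcov, setIntegral_const]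
    simp [Real.volume_Ioo, hθ.le]
  -- assemble
  have hsplit : (∫ u in Ioi (0:ℝ), G u) = (∫ u in Ioo 0 θ, G u) + ∫ u in Ioi θ, G u := by
    rw [← integral_Ioc_eq_integral_Ioo, ← Ioc_union_Ioi_eq_Ioi hθ.le,
      setIntegral_union (Ioc_disjoint_Ioi le_rfl) measurableSet_Ioi
        (hint.mono_set Ioc_subset_Ioi_self) (hint.mono_set (Ioi_subset_Ioi hθ.le))]
  rw [hgain, hloss, hsplit]
  ring
end

section
/- Let w : [0,1] → [0,1] be continuous with w(0) = 0, and let δ ∈ [0,1). Then sup over Borel probability measures F on [0,1] of ( ∫ w(x) dF(x) ) / ( 1 − δ (1 − ∫ x dF(x)) ) equals max_{x ∈ [0,1]} w(x) / (1 − δ(1 − x)); in particular the supremum over measures is attained by a Dirac measure at any maximizer x* of x ↦ w(x)/(1 − δ(1 − x)). -/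
open Set MeasureTheory

/-! Writing `M` for the pointwise maximum of `w x / (1 - δ (1 - x))` on `[0,1]`, the bound
`w x ≤ M (1 - δ (1 - x))` is affine in `x`, so integrating it against any probability measure
`F` on `[0,1]` gives `∫ w dF ≤ M (1 - δ (1 - ∫ x dF))`. Hence no measure beats `M`, and the
Dirac measure at a maximizer attains it. -/

lemma one_sub_mul_one_sub_pos {δ x : ℝ} (hδ : δ < 1) (hx : x ∈ Icc (0:ℝ) 1) :
    0 < 1 - δ * (1 - x) := by
  rcases le_or_gt 0 δ with h | h <;> nlinarith [hx.1, hx.2]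

lemma integrable_of_continuousOn_of_ae_mem {X E : Type*} [TopologicalSpace X] [T2Space X]
    [MeasurableSpace X] [OpensMeasurableSpace X] [NormedAddCommGroup E]
    {μ : Measure X} [IsFiniteMeasureOnCompacts μ] {K : Set X} {f : X → E}
    (hK : IsCompact K) (hf : ContinuousOn f K) (hμ : ∀ᵐ x ∂μ, x ∈ K) : Integrable f μ := by
  rw [← Measure.restrict_eq_self_of_ae_mem hμ]
  exact hf.integrableOn_compact hK

lemma integral_le_of_ae_le_affine {α : Type*} [MeasurableSpace α] {μ : Measure α}
    [IsProbabilityMeasure μ] {f g : α → ℝ} (hf : Integrable f μ) (hg : Integrable g μ)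
    {a b : ℝ} (h : ∀ᵐ x ∂μ, f x ≤ a + b * g x) :
    ∫ x, f x ∂μ ≤ a + b * ∫ x, g x ∂μ :=
  calc ∫ x, f x ∂μ ≤ ∫ x, a + b * g x ∂μ :=
        integral_mono_ae hf ((integrable_const a).add (hg.const_mul b)) h
    _ = a + b * ∫ x, g x ∂μ := by
        rw [integral_add (integrable_const a) (hg.const_mul b), integral_const, integral_const_mul,
          probReal_univ, one_smul]

lemma integral_div_le_of_forall_div_le {F : Measure ℝ} [IsProbabilityMeasure F]
    (hF : ∀ᵐ x ∂F, x ∈ Icc (0:ℝ) 1) {w : ℝ → ℝ} (hw : ContinuousOn w (Icc (0:ℝ) 1))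
    {δ M : ℝ} (hδ : δ < 1) (hM : ∀ x ∈ Icc (0:ℝ) 1, w x / (1 - δ * (1 - x)) ≤ M) :
    (∫ x, w x ∂F) / (1 - δ * (1 - ∫ x, x ∂F)) ≤ M := by
  have hid : Integrable (fun x : ℝ => x) F :=
    integrable_of_continuousOn_of_ae_mem isCompact_Icc continuousOn_id hF
  have hmean : ∫ x, x ∂F ∈ Icc (0:ℝ) 1 := (convex_Icc 0 1).integral_mem isClosed_Icc hF hid
  rw [div_le_iff₀ (one_sub_mul_one_sub_pos hδ hmean)]
  have haffine : ∀ᵐ x ∂F, w x ≤ M * (1 - δ) + M * δ * x := by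
    filter_upwards [hF] with x hx
    have := (div_le_iff₀ (one_sub_mul_one_sub_pos hδ hx)).mp (hM x hx)
    linarith
  calc ∫ x, w x ∂F ≤ M * (1 - δ) + M * δ * ∫ x, x ∂F :=
        integral_le_of_ae_le_affine (integrable_of_continuousOn_of_ae_mem isCompact_Icc hw hF)
          hid haffine
    _ = M * (1 - δ * (1 - ∫ x, x ∂F)) := by ring

theorem stmt13_general
    (w : ℝ → ℝ)
    (hcont : ContinuousOn w (Icc (0:ℝ) 1))
    (δ : ℝ) (hδ : δ ∈ Ico (0:ℝ) 1) :
    (∃ xs ∈ Icc (0:ℝ) 1, ∀ x ∈ Icc (0:ℝ) 1,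
      w x / (1 - δ * (1 - x)) ≤ w xs / (1 - δ * (1 - xs))) ∧
    ∀ xs ∈ Icc (0:ℝ) 1,
      (∀ x ∈ Icc (0:ℝ) 1, w x / (1 - δ * (1 - x)) ≤ w xs / (1 - δ * (1 - xs))) →
      IsGreatest
        {r : ℝ | ∃ F : Measure ℝ, IsProbabilityMeasure F ∧ F (Icc (0:ℝ) 1)ᶜ = 0 ∧
          r = (∫ x, w x ∂F) / (1 - δ * (1 - ∫ x, x ∂F))}
        (w xs / (1 - δ * (1 - xs))) ∧
      (∫ x, w x ∂(Measure.dirac xs)) / (1 - δ * (1 - ∫ x, x ∂(Measure.dirac xs)))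
        = w xs / (1 - δ * (1 - xs)) := by
  have hratio : ContinuousOn (fun x => w x / (1 - δ * (1 - x))) (Icc (0:ℝ) 1) :=
    hcont.div (by fun_prop) fun x hx => (one_sub_mul_one_sub_pos hδ.2 hx).ne'
  have hdirac : ∀ xs : ℝ, (∫ x, w x ∂(Measure.dirac xs)) /
      (1 - δ * (1 - ∫ x, x ∂(Measure.dirac xs))) = w xs / (1 - δ * (1 - xs)) := fun xs => by
    rw [integral_dirac, integral_dirac]
  refine ⟨?_, fun xs hxs hmax =>
    ⟨⟨⟨Measure.dirac xs, inferInstance, ?_, (hdirac xs).symm⟩, ?_⟩, hdirac xs⟩⟩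
  · obtain ⟨xs, hxs, hmax⟩ := isCompact_Icc.exists_isMaxOn (nonempty_Icc.2 zero_le_one) hratio
    exact ⟨xs, hxs, hmax⟩
  · rw [Measure.dirac_apply, indicator_of_notMem (not_not_intro hxs)]
  · rintro r ⟨F, _, hF, rfl⟩
    exact integral_div_le_of_forall_div_le (mem_ae_iff.2 hF) hcont hδ.2 hmax

/-- For continuous `w : [0,1] → [0,1]` with `w 0 = 0` and
`δ ∈ [0,1)`, the supremum over Borel probability measures `F` on `[0,1]` of
`(∫ w dF) / (1 − δ(1 − ∫ x dF))` equals the pointwise maximum of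
`w(x)/(1 − δ(1 − x))` over `[0,1]`; a maximizer exists, and for any pointwise
maximizer `x*` the Dirac measure at `x*` attains the supremum. -/
theorem stmt13
    (w : ℝ → ℝ)
    (hcont : ContinuousOn w (Icc (0:ℝ) 1))
    (hmap : ∀ x ∈ Icc (0:ℝ) 1, w x ∈ Icc (0:ℝ) 1)
    (h0 : w 0 = 0)
    (δ : ℝ) (hδ : δ ∈ Ico (0:ℝ) 1) :
    (∃ xs ∈ Icc (0:ℝ) 1, ∀ x ∈ Icc (0:ℝ) 1,
      w x / (1 - δ * (1 - x)) ≤ w xs / (1 - δ * (1 - xs))) ∧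
    ∀ xs ∈ Icc (0:ℝ) 1,
      (∀ x ∈ Icc (0:ℝ) 1, w x / (1 - δ * (1 - x)) ≤ w xs / (1 - δ * (1 - xs))) →
      IsGreatest
        {r : ℝ | ∃ F : Measure ℝ, IsProbabilityMeasure F ∧ F (Icc (0:ℝ) 1)ᶜ = 0 ∧
          r = (∫ x, w x ∂F) / (1 - δ * (1 - ∫ x, x ∂F))}
        (w xs / (1 - δ * (1 - xs))) ∧
      (∫ x, w x ∂(Measure.dirac xs)) / (1 - δ * (1 - ∫ x, x ∂(Measure.dirac xs)))
        = w xs / (1 - δ * (1 - xs)) :=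
  stmt13_general w hcont δ hδ
end

section
/- Let w : [0,1] → [0,1] be continuous with w(0) = 0 and w(1) = 1, let c > 0 and δ ∈ [0,1). Then V* := max_{x ∈ [0,1]} c · w(x)/(1 − (1 − x)δ) is the unique real number V satisfying the Bellman equation V = max_{x ∈ [0,1]} [ c · w(x) + (1 − x) δ V ]. -/
open Set

/-- `V* = max_{x ∈ [0,1]} c·w(x)/(1 − (1 − x)δ)` is the unique real
number `V` satisfying the Bellman equation `V = max_{x ∈ [0,1]} [c·w(x) + (1 − x)δV]`. -/
theorem stmt14
    (w : ℝ → ℝ)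
    (hcont : ContinuousOn w (Icc (0:ℝ) 1))
    (h0 : w 0 = 0) (h1 : w 1 = 1)
    (c : ℝ) (hc : 0 < c)
    (δ : ℝ) (hδ : δ ∈ Ico (0:ℝ) 1)
    (Vstar : ℝ)
    (hV : IsGreatest ((fun x => c * w x / (1 - (1 - x) * δ)) '' Icc (0:ℝ) 1) Vstar) :
    IsGreatest ((fun x => c * w x + (1 - x) * δ * Vstar) '' Icc (0:ℝ) 1) Vstar ∧
    ∀ V : ℝ,
      IsGreatest ((fun x => c * w x + (1 - x) * δ * V) '' Icc (0:ℝ) 1) V → V = Vstar := by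
  obtain ⟨⟨x0, hx0, hx0eq⟩, hub⟩ := hV
  have hpos : ∀ x ∈ Icc (0:ℝ) 1, 0 < 1 - (1 - x) * δ := by
    intro x hx
    nlinarith [hx.1, hx.2, hδ.1, hδ.2]
  have hp0 := hpos x0 hx0
  have hx0eq' : c * w x0 = Vstar * (1 - (1 - x0) * δ) := by
    rw [div_eq_iff hp0.ne'] at hx0eq
    exact hx0eq
  constructor
  · constructor
    · exact ⟨x0, hx0, by show c * w x0 + (1 - x0) * δ * Vstar = Vstar; nlinarith⟩
    · rintro y ⟨x, hx, rfl⟩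
      have hpx := hpos x hx
      have hf : c * w x / (1 - (1 - x) * δ) ≤ Vstar := hub ⟨x, hx, rfl⟩
      have h2 := (div_le_iff₀ hpx).mp hf
      show c * w x + (1 - x) * δ * Vstar ≤ Vstar
      nlinarith
  · intro V hVg
    obtain ⟨⟨x1, hx1, hx1eq⟩, hubV⟩ := hVg
    have hp1 := hpos x1 hx1
    have hVle : V ≤ Vstar := by
      have hf : c * w x1 / (1 - (1 - x1) * δ) ≤ Vstar := hub ⟨x1, hx1, rfl⟩
      have h2 := (div_le_iff₀ hp1).mp hf
      simp only at hx1eq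
      nlinarith
    have hVge : Vstar ≤ V := by
      have h3 : c * w x0 + (1 - x0) * δ * V ≤ V := hubV ⟨x0, hx0, rfl⟩
      nlinarith
    linarith
end

section
/- Let n ∈ ℕ and let a₀, a₁, …, aₙ be real numbers such that there exists k₀ ∈ {0,…,n} with aₖ ≤ 0 for all k ≤ k₀ and aₖ ≥ 0 for all k > k₀. If Σ_{k=0}^n aₖ δ^k > 0 for some δ ∈ (0,1], then Σ_{k=0}^n aₖ μ^k > 0 for all μ ∈ [δ,1]; in particular Σ_{k=0}^n aₖ > 0. -/
/-!
Dividing by `μ ^ k₀`, the polynomial becomes `∑ aₖ μ^(k - k₀)`, where every term is nondecreasing in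
`μ > 0`: for `k ≤ k₀` a nonpositive coefficient meets a nonincreasing power, for `k > k₀` a
nonnegative one meets a nondecreasing power. Hence `μ ^ k₀ D(δ) ≤ δ ^ k₀ D(μ)` for `0 < δ ≤ μ`, and
positivity propagates from `δ` to every larger `μ`.
-/

open Set

section OrderedRing

variable {R : Type*} [CommRing R] [PartialOrder R] [IsOrderedRing R]

theorem pow_mul_pow_le_pow_mul_pow {δ μ : R} (hδ : 0 ≤ δ) (hδμ : δ ≤ μ) {j k : ℕ} (hkj : k ≤ j) :
    δ ^ j * μ ^ k ≤ μ ^ j * δ ^ k := by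
  have hμ : 0 ≤ μ := hδ.trans hδμ
  calc δ ^ j * μ ^ k = δ ^ (j - k) * (δ ^ k * μ ^ k) := by
        rw [← mul_assoc, ← pow_add, Nat.sub_add_cancel hkj]
    _ ≤ μ ^ (j - k) * (δ ^ k * μ ^ k) := by gcongr
    _ = μ ^ j * δ ^ k := by
        rw [← pow_mul_pow_sub μ hkj]; ring

theorem pow_mul_term_le_of_single_crossing {δ μ c : R} (hδ : 0 ≤ δ) (hδμ : δ ≤ μ) {k₀ k : ℕ}
    (hneg : k ≤ k₀ → c ≤ 0) (hpos : k₀ < k → 0 ≤ c) :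
    μ ^ k₀ * (c * δ ^ k) ≤ δ ^ k₀ * (c * μ ^ k) := by
  rw [mul_left_comm, mul_left_comm (δ ^ k₀)]
  rcases le_or_gt k k₀ with hle | hlt
  · exact mul_le_mul_of_nonpos_left (pow_mul_pow_le_pow_mul_pow hδ hδμ hle) (hneg hle)
  · exact mul_le_mul_of_nonneg_left
      (by simpa only [mul_comm] using pow_mul_pow_le_pow_mul_pow hδ hδμ hlt.le) (hpos hlt)

theorem pow_mul_sum_le_of_single_crossing {δ μ : R} (hδ : 0 ≤ δ) (hδμ : δ ≤ μ) (s : Finset ℕ)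
    (a : ℕ → R) (k₀ : ℕ) (hneg : ∀ k ∈ s, k ≤ k₀ → a k ≤ 0)
    (hpos : ∀ k ∈ s, k₀ < k → 0 ≤ a k) :
    μ ^ k₀ * ∑ k ∈ s, a k * δ ^ k ≤ δ ^ k₀ * ∑ k ∈ s, a k * μ ^ k := by
  rw [Finset.mul_sum, Finset.mul_sum]
  exact Finset.sum_le_sum fun k hk =>
    pow_mul_term_le_of_single_crossing hδ hδμ (hneg k hk) (hpos k hk)

end OrderedRing

theorem sum_pos_of_single_crossing {δ μ : ℝ} (hδ : 0 < δ) (hδμ : δ ≤ μ) (s : Finset ℕ)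
    (a : ℕ → ℝ) (k₀ : ℕ) (hneg : ∀ k ∈ s, k ≤ k₀ → a k ≤ 0)
    (hpos : ∀ k ∈ s, k₀ < k → 0 ≤ a k) (h : 0 < ∑ k ∈ s, a k * δ ^ k) :
    0 < ∑ k ∈ s, a k * μ ^ k := by
  have hμ : 0 < μ := hδ.trans_le hδμ
  refine pos_of_mul_pos_right ?_ (pow_pos hδ k₀).le
  exact (mul_pos (pow_pos hμ k₀) h).trans_le
    (pow_mul_sum_le_of_single_crossing hδ.le hδμ s a k₀ hneg hpos)

theorem stmt15_general
    (n : ℕ) (a : ℕ → ℝ) (k₀ : ℕ)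
    (hneg : ∀ k ≤ k₀, a k ≤ 0)
    (hpos : ∀ k, k₀ < k → k ≤ n → 0 ≤ a k)
    (δ : ℝ) (hδ : δ ∈ Ioc (0:ℝ) 1)
    (h : 0 < ∑ k ∈ Finset.range (n + 1), a k * δ ^ k) :
    (∀ μ ∈ Icc δ 1, 0 < ∑ k ∈ Finset.range (n + 1), a k * μ ^ k) ∧
    0 < ∑ k ∈ Finset.range (n + 1), a k := by
  have main : ∀ μ ∈ Icc δ 1, 0 < ∑ k ∈ Finset.range (n + 1), a k * μ ^ k := fun μ hμ =>
    sum_pos_of_single_crossing hδ.1 hμ.1 _ a k₀ (fun k _ => hneg k)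
      (fun k hk hlt => hpos k hlt (Nat.lt_succ_iff.mp (Finset.mem_range.mp hk))) h
  refine ⟨main, ?_⟩
  simpa using main 1 ⟨hδ.2, le_rfl⟩

/-- Single-crossing lemma for polynomials: if the coefficients
`a₀,…,aₙ` change sign at most once, from nonpositive (for `k ≤ k₀`) to nonnegative
(for `k₀ < k ≤ n`), and `Σ aₖ δ^k > 0` for some `δ ∈ (0,1]`, then `Σ aₖ μ^k > 0` for
all `μ ∈ [δ,1]`; in particular `Σ aₖ > 0`. -/
theorem stmt15
    (n : ℕ) (a : ℕ → ℝ) (k₀ : ℕ) (hk₀ : k₀ ≤ n)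
    (hneg : ∀ k ≤ k₀, a k ≤ 0)
    (hpos : ∀ k, k₀ < k → k ≤ n → 0 ≤ a k)
    (δ : ℝ) (hδ : δ ∈ Ioc (0:ℝ) 1)
    (h : 0 < ∑ k ∈ Finset.range (n + 1), a k * δ ^ k) :
    (∀ μ ∈ Icc δ 1, 0 < ∑ k ∈ Finset.range (n + 1), a k * μ ^ k) ∧
    0 < ∑ k ∈ Finset.range (n + 1), a k :=
  stmt15_general n a k₀ hneg hpos δ hδ h
end

section
/- Let w : [0,1] → [0,1] be a probability weighting function (strictly increasing, continuous, w(0)=0, w(1)=1, differentiable, concave on [0,p̄] and convex on [p̄,1] for some p̄ ∈ (0,1)), let δ ∈ (0,1), and let x* ∈ [0,1] be a maximizer of x ↦ w(x)/(1 − (1 − x)δ) on [0,1]. Then for every integer n ≥ 1: Σ_{k=0}^{n} ( w(1 − (1 − x*)^{k+1}) − w(1 − (1 − x*)^{k}) ) δ^k ≤ w(x*) · Σ_{k=0}^{n} (1 − x*)^k δ^k, and the same inequality holds with n = ∞ (sums of the convergent series). -/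
/-!
Put `t = 1 - x*` and `M = w(x*) / (1 - tδ)`. Maximality of `x*` says `w p ≤ M (1 - (1 - p) δ)`
on `[0,1]`, so `a k := w (1 - t^k)` is dominated by `b k := M (1 - t^k δ)`. Summation by parts
turns `∑_{k ≤ n} (a (k+1) - a k) δ^k + a 0` into `(1 - δ) ∑_{k < n} a (k+1) δ^k + a (n+1) δ^n`,
which is monotone in `a 1, …, a (n+1)`; for `b` it equals `M (1 - δ) + M δ (1 - t) ∑_{k ≤ n} (tδ)^k`,
which is at most `M (1 - tδ) ∑_{k ≤ n} (tδ)^k = w(x*) ∑_{k ≤ n} (tδ)^k`. The gains are nonnegative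
because `w` is increasing, so the series case follows from the partial sums.
-/

open Set Finset

section OrderedRing

variable {R : Type*} [CommRing R]

theorem sum_range_succ_sub_mul_pow (a : ℕ → R) (δ : R) (n : ℕ) :
    ∑ k ∈ range (n + 1), (a (k + 1) - a k) * δ ^ k
      = (1 - δ) * ∑ k ∈ range n, a (k + 1) * δ ^ k + a (n + 1) * δ ^ n - a 0 := by
  induction n with
  | zero => simp
  | succ n ih => rw [sum_range_succ, ih, sum_range_succ]; ring

variable [LinearOrder R] [IsStrictOrderedRing R]

theorem sum_range_succ_sub_mul_pow_add_le {a b : ℕ → R} {δ : R} (hδ₀ : 0 ≤ δ) (hδ₁ : δ ≤ 1)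
    (hab : ∀ k, a (k + 1) ≤ b (k + 1)) (n : ℕ) :
    ∑ k ∈ range (n + 1), (a (k + 1) - a k) * δ ^ k + a 0
      ≤ ∑ k ∈ range (n + 1), (b (k + 1) - b k) * δ ^ k + b 0 := by
  simp only [sum_range_succ_sub_mul_pow, sub_add_cancel]
  have : 0 ≤ 1 - δ := sub_nonneg.2 hδ₁
  gcongr with k <;> exact hab _

theorem one_sub_pow_mem_Icc {t : R} (ht : t ∈ Icc (0 : R) 1) (k : ℕ) :
    1 - t ^ k ∈ Icc (0 : R) 1 :=
  Icc.one_sub_mem ⟨pow_nonneg ht.1 k, pow_le_one₀ ht.1 ht.2⟩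

theorem one_sub_pow_le_one_sub_pow_succ {t : R} (ht : t ∈ Icc (0 : R) 1) (k : ℕ) :
    1 - t ^ k ≤ 1 - t ^ (k + 1) :=
  sub_le_sub_left (pow_le_pow_of_le_one ht.1 ht.2 k.le_succ) 1

theorem sum_range_succ_sub_mul_pow_add_le_geom {M t δ : R} (hM : 0 ≤ M) (ht : 0 ≤ t)
    (hδ₀ : 0 ≤ δ) (hδ₁ : δ ≤ 1) (n : ℕ) :
    ∑ k ∈ range (n + 1), (M * (1 - t ^ (k + 1) * δ) - M * (1 - t ^ k * δ)) * δ ^ k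
        + M * (1 - t ^ 0 * δ)
      ≤ M * (1 - t * δ) * ∑ k ∈ range (n + 1), t ^ k * δ ^ k := by
  set G := ∑ k ∈ range (n + 1), t ^ k * δ ^ k with hG_def
  have hsum : ∑ k ∈ range (n + 1), (M * (1 - t ^ (k + 1) * δ) - M * (1 - t ^ k * δ)) * δ ^ k
      = M * δ * (1 - t) * G := by
    rw [mul_sum]; exact sum_congr rfl fun k _ ↦ by ring
  have hG : 1 ≤ G := by
    rw [hG_def, sum_range_succ', pow_zero, pow_zero, mul_one, le_add_iff_nonneg_left]
    exact sum_nonneg fun k _ ↦ by positivity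
  have : 0 ≤ M * (1 - δ) * (G - 1) :=
    mul_nonneg (mul_nonneg hM (sub_nonneg.2 hδ₁)) (sub_nonneg.2 hG)
  rw [hsum]; linarith

end OrderedRing

section Maximizer

variable {w : ℝ → ℝ} {δ xs : ℝ}

theorem le_mul_of_forall_div_le (hδ : δ ∈ Ioo (0 : ℝ) 1)
    (hmax : ∀ x ∈ Icc (0:ℝ) 1, w x / (1 - (1 - x) * δ) ≤ w xs / (1 - (1 - xs) * δ))
    {p : ℝ} (hp : p ∈ Icc (0 : ℝ) 1) :
    w p ≤ w xs / (1 - (1 - xs) * δ) * (1 - (1 - p) * δ) := by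
  have hpos : 0 < 1 - (1 - p) * δ :=
    sub_pos.2 (mul_lt_one_of_nonneg_of_lt_one_right (sub_le_self _ hp.1) hδ.1.le hδ.2)
  exact (div_le_iff₀ hpos).1 (hmax p hp)

theorem sum_gain_le_of_forall_div_le (h0 : w 0 = 0) (hδ : δ ∈ Ioo (0 : ℝ) 1)
    (hxs : xs ∈ Icc (0 : ℝ) 1)
    (hmax : ∀ x ∈ Icc (0:ℝ) 1, w x / (1 - (1 - x) * δ) ≤ w xs / (1 - (1 - xs) * δ))
    (n : ℕ) :
    ∑ k ∈ range (n + 1), (w (1 - (1 - xs) ^ (k + 1)) - w (1 - (1 - xs) ^ k)) * δ ^ k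
      ≤ w xs * ∑ k ∈ range (n + 1), (1 - xs) ^ k * δ ^ k := by
  set t := 1 - xs
  have ht : t ∈ Icc (0 : ℝ) 1 := Icc.one_sub_mem hxs
  set M := w xs / (1 - t * δ)
  have hM : 0 ≤ M := by simpa [h0] using hmax 0 ⟨le_rfl, zero_le_one⟩
  have hbound (k : ℕ) : w (1 - t ^ k) ≤ M * (1 - t ^ k * δ) := by
    simpa only [sub_sub_cancel] using le_mul_of_forall_div_le hδ hmax (one_sub_pow_mem_Icc ht k)
  have hD : 1 - t * δ ≠ 0 :=
    (sub_pos.2 (mul_lt_one_of_nonneg_of_lt_one_right ht.2 hδ.1.le hδ.2)).ne'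
  calc ∑ k ∈ range (n + 1), (w (1 - t ^ (k + 1)) - w (1 - t ^ k)) * δ ^ k
      = ∑ k ∈ range (n + 1), (w (1 - t ^ (k + 1)) - w (1 - t ^ k)) * δ ^ k + w (1 - t ^ 0) := by
        simp [h0]
    _ ≤ ∑ k ∈ range (n + 1), (M * (1 - t ^ (k + 1) * δ) - M * (1 - t ^ k * δ)) * δ ^ k
          + M * (1 - t ^ 0 * δ) :=
        sum_range_succ_sub_mul_pow_add_le (a := fun k ↦ w (1 - t ^ k))
          (b := fun k ↦ M * (1 - t ^ k * δ)) hδ.1.le hδ.2.le (fun k ↦ hbound (k + 1)) n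
    _ ≤ M * (1 - t * δ) * ∑ k ∈ range (n + 1), t ^ k * δ ^ k :=
        sum_range_succ_sub_mul_pow_add_le_geom hM ht.1 hδ.1.le hδ.2.le n
    _ = w xs * ∑ k ∈ range (n + 1), t ^ k * δ ^ k := by rw [div_mul_cancel₀ _ hD]

end Maximizer

theorem stmt16_general
    (w : ℝ → ℝ)
    (hmono : StrictMonoOn w (Icc (0:ℝ) 1))
    (h0 : w 0 = 0)
    (δ : ℝ) (hδ : δ ∈ Ioo (0:ℝ) 1)
    (xs : ℝ) (hxs : xs ∈ Icc (0:ℝ) 1)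
    (hmax : ∀ x ∈ Icc (0:ℝ) 1,
      w x / (1 - (1 - x) * δ) ≤ w xs / (1 - (1 - xs) * δ)) :
    (∀ n : ℕ, 1 ≤ n →
      ∑ k ∈ Finset.range (n + 1),
          (w (1 - (1 - xs) ^ (k + 1)) - w (1 - (1 - xs) ^ k)) * δ ^ k
        ≤ w xs * ∑ k ∈ Finset.range (n + 1), (1 - xs) ^ k * δ ^ k) ∧
    (∑' k : ℕ, (w (1 - (1 - xs) ^ (k + 1)) - w (1 - (1 - xs) ^ k)) * δ ^ k
      ≤ w xs * ∑' k : ℕ, (1 - xs) ^ k * δ ^ k) := by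
  have hfin := sum_gain_le_of_forall_div_le h0 hδ hxs hmax
  have ht : 1 - xs ∈ Icc (0 : ℝ) 1 := Icc.one_sub_mem hxs
  have hw : 0 ≤ w xs := h0 ▸ hmono.monotoneOn ⟨le_rfl, zero_le_one⟩ hxs hxs.1
  have hgain (k : ℕ) : 0 ≤ (w (1 - (1 - xs) ^ (k + 1)) - w (1 - (1 - xs) ^ k)) * δ ^ k :=
    mul_nonneg (sub_nonneg.2 (hmono.monotoneOn (one_sub_pow_mem_Icc ht k)
      (one_sub_pow_mem_Icc ht (k + 1)) (one_sub_pow_le_one_sub_pow_succ ht k)))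
      (pow_nonneg hδ.1.le k)
  have hcost_nonneg (k : ℕ) : 0 ≤ (1 - xs) ^ k * δ ^ k :=
    mul_nonneg (pow_nonneg ht.1 k) (pow_nonneg hδ.1.le k)
  have hcost : Summable fun k ↦ (1 - xs) ^ k * δ ^ k := by
    simpa only [mul_pow] using summable_geometric_of_lt_one (mul_nonneg ht.1 hδ.1.le)
      (mul_lt_one_of_nonneg_of_lt_one_right ht.2 hδ.1.le hδ.2)
  refine ⟨fun n _ ↦ hfin n, Real.tsum_le_of_sum_range_le hgain fun n ↦ ?_⟩
  rcases n with _ | n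
  · simpa using mul_nonneg hw (tsum_nonneg hcost_nonneg)
  · exact (hfin n).trans (mul_le_mul_of_nonneg_left
      (hcost.sum_le_tsum _ fun k _ ↦ hcost_nonneg k) hw)

/-- If `x*` maximizes `x ↦ w(x)/(1 − (1 − x)δ)` on `[0,1]`, then for
every `n ≥ 1` the plan "purchase in periods `0,…,n`" gives the buyer nonpositive payoff:
`Σ_{k=0}^n (w(1−(1−x*)^{k+1}) − w(1−(1−x*)^k)) δ^k ≤ w(x*) Σ_{k=0}^n (1−x*)^k δ^k`,
and the same holds for the infinite series (`n = ∞`). -/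
theorem stmt16
    (w : ℝ → ℝ)
    (hmono : StrictMonoOn w (Icc (0:ℝ) 1))
    (hcont : ContinuousOn w (Icc (0:ℝ) 1))
    (h0 : w 0 = 0) (h1 : w 1 = 1)
    (hdiff : DifferentiableOn ℝ w (Icc (0:ℝ) 1))
    (pbar : ℝ) (hpbar : pbar ∈ Ioo (0:ℝ) 1)
    (hconc : ConcaveOn ℝ (Icc (0:ℝ) pbar) w)
    (hconv : ConvexOn ℝ (Icc pbar 1) w)
    (δ : ℝ) (hδ : δ ∈ Ioo (0:ℝ) 1)
    (xs : ℝ) (hxs : xs ∈ Icc (0:ℝ) 1)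
    (hmax : ∀ x ∈ Icc (0:ℝ) 1,
      w x / (1 - (1 - x) * δ) ≤ w xs / (1 - (1 - xs) * δ)) :
    (∀ n : ℕ, 1 ≤ n →
      ∑ k ∈ Finset.range (n + 1),
          (w (1 - (1 - xs) ^ (k + 1)) - w (1 - (1 - xs) ^ k)) * δ ^ k
        ≤ w xs * ∑ k ∈ Finset.range (n + 1), (1 - xs) ^ k * δ ^ k) ∧
    (∑' k : ℕ, (w (1 - (1 - xs) ^ (k + 1)) - w (1 - (1 - xs) ^ k)) * δ ^ k
      ≤ w xs * ∑' k : ℕ, (1 - xs) ^ k * δ ^ k) :=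
  stmt16_general w hmono h0 δ hδ xs hxs hmax
end
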